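/- arXiv:1206.4066 — 8 statements merged into one kernel-verified Lean document; each statement's English description precedes it below -/
import Mathlib

section
/- The marked order polytope O_{P,A}(λ) is a compact convex polytope in ℝ^P (a bounded intersection of finitely many closed affine halfspaces), and its dimension (the dimension of its affine hull) equals the cardinality of the set P ∖ {p ∈ P : there exist a, b ∈ A with a ≤ p ≤ b in P and λ(a) = λ(b)}. -/
/-- The marked order polytope `O_{P,A}(λ)`: order preserving maps `P → ℝ`
agreeing with `lam` on the marked subset `A`. -/
def markedOrderPolytope (P : Type*) [PartialOrder P] (A : Set P) (lam : P → ℝ) :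
    Set (P → ℝ) :=
  {φ | Monotone φ ∧ ∀ a ∈ A, φ a = lam a}

/-!
Every point of the polytope lies between the pointwise bounds `max {λ a | a ∈ A, a ≤ p}` and
`min {λ b | b ∈ A, p ≤ b}`, which gives compactness. At a fixed element `p` (one with
`a ≤ p ≤ b` and `λ a = λ b`) every point takes the value `λ a`, so the affine span is parallel to
the coordinate subspace of the free elements. At a free element the lower bound is strictly below
the upper one, so interpolating between the bounds with weights `s p ∈ [0, 1]` strictly increasing
in `p` gives a point of the polytope that is strictly smaller at each free `p` than at every
`q > p`. Raising its `p`-coordinate a little stays inside the polytope, so every free coordinate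
vector lies in the direction of the affine span.
-/

open Set Filter Topology

namespace MarkedOrderPolytope

variable {P : Type*} [PartialOrder P] {A : Set P} {lam : P → ℝ} {φ ψ : P → ℝ} {p q : P}

lemma exists_eq_iInter_halfspaces [Finite P] (A : Set P) (lam : P → ℝ) :
    ∃ (N : ℕ) (f : Fin N → (P → ℝ) →ₗ[ℝ] ℝ) (c : Fin N → ℝ),
      markedOrderPolytope P A lam = ⋂ i, {x | f i x ≤ c i} := by
  let f : {pq : P × P // pq.1 ≤ pq.2} ⊕ A ⊕ A → (P → ℝ) →ₗ[ℝ] ℝ :=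
    Sum.elim
      (fun pq => LinearMap.proj (R := ℝ) (φ := fun _ : P => ℝ) pq.1.1 - LinearMap.proj pq.1.2)
      (Sum.elim (fun a => LinearMap.proj a.1) (fun a => -LinearMap.proj a.1))
  let c : {pq : P × P // pq.1 ≤ pq.2} ⊕ A ⊕ A → ℝ :=
    Sum.elim 0 (Sum.elim (fun a => lam a) (fun a => -lam a))
  have hrep : markedOrderPolytope P A lam = ⋂ i, {x | f i x ≤ c i} := by
    ext φ
    simp only [markedOrderPolytope, iInter_sum, mem_inter_iff, mem_iInter, mem_ofPred_eq, f, c,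
      Sum.elim_inl, Sum.elim_inr, LinearMap.sub_apply, LinearMap.neg_apply, LinearMap.proj_apply,
      Pi.zero_apply, sub_nonpos, neg_le_neg_iff, Subtype.forall, Prod.forall]
    exact ⟨fun h => ⟨h.1, fun a ha => (h.2 a ha).le, fun a ha => (h.2 a ha).ge⟩,
      fun h => ⟨h.1, fun a ha => le_antisymm (h.2.1 a ha) (h.2.2 a ha)⟩⟩
  let e := Finite.equivFin ({pq : P × P // pq.1 ≤ pq.2} ⊕ A ⊕ A)
  exact ⟨_, f ∘ e.symm, c ∘ e.symm, hrep.trans (e.symm.surjective.iInter_comp _).symm⟩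

def fixedSet (A : Set P) (lam : P → ℝ) : Set P :=
  {p | ∃ a ∈ A, ∃ b ∈ A, a ≤ p ∧ p ≤ b ∧ lam a = lam b}

lemma subset_fixedSet : A ⊆ fixedSet A lam :=
  fun a ha => ⟨a, ha, a, ha, le_rfl, le_rfl, rfl⟩

lemma apply_eq_apply_of_mem_fixedSet (hφ : φ ∈ markedOrderPolytope P A lam)
    (hψ : ψ ∈ markedOrderPolytope P A lam) (hp : p ∈ fixedSet A lam) : φ p = ψ p := by
  obtain ⟨a, ha, b, hb, hap, hpb, hab⟩ := hp
  have forced : ∀ χ ∈ markedOrderPolytope P A lam, χ p = lam a := fun χ hχ =>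
    le_antisymm (hab ▸ hχ.2 b hb ▸ hχ.1 hpb) (hχ.2 a ha ▸ hχ.1 hap)
  rw [forced φ hφ, forced ψ hψ]

lemma exists_pos_add_single_mem [Finite P] [DecidableEq P]
    (hφ : φ ∈ markedOrderPolytope P A lam) (hpA : p ∉ A)
    (hp : ∀ q, p < q → φ p < φ q) : ∃ ε > 0, φ + Pi.single p ε ∈ markedOrderPolytope P A lam := by
  have hsmall : ∀ᶠ ε in 𝓝[>] (0 : ℝ), 0 < ε ∧ ∀ q, p < q → φ p + ε < φ q := by
    refine eventually_mem_nhdsWithin.and (eventually_all.2 fun q => ?_)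
    by_cases hpq : p < q
    · have hlim : Tendsto (fun ε => φ p + ε) (𝓝[>] 0) (𝓝 (φ p)) := by
        have := (continuous_const_add (φ p)).tendsto 0
        rw [add_zero] at this
        exact this.mono_left nhdsWithin_le_nhds
      exact (hlim.eventually_lt_const (hp q hpq)).mono fun _ h _ => h
    · exact Eventually.of_forall fun _ h => absurd h hpq
  obtain ⟨ε, hε, hlt⟩ := hsmall.exists
  refine ⟨ε, hε, fun x y hxy => ?_, fun a ha => ?_⟩
  · simp only [Pi.add_apply, Pi.single_apply]
    split_ifs with hx hy hy
    · simp only [hx, hy, le_rfl]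
    · subst hx
      linarith [hlt y (lt_of_le_of_ne hxy (Ne.symm hy))]
    · subst hy
      linarith [hφ.1 hxy]
    · simpa using hφ.1 hxy
  · rw [Pi.add_apply, Pi.single_eq_of_ne (ne_of_mem_of_not_mem ha hpA), add_zero]
    exact hφ.2 a ha

noncomputable def lowerBound (A : Set P) (lam : P → ℝ) (p : P) : ℝ :=
  sSup (lam '' (A ∩ Iic p))

noncomputable def upperBound (A : Set P) (lam : P → ℝ) (p : P) : ℝ :=
  sInf (lam '' (A ∩ Ici p))

noncomputable def interpolate (A : Set P) (lam : P → ℝ) (s : P → ℝ) (p : P) : ℝ :=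
  (1 - s p) * lowerBound A lam p + s p * upperBound A lam p

lemma interpolate_sub_interpolate (s : P → ℝ) (p q : P) :
    interpolate A lam s q - interpolate A lam s p =
      (1 - s q) * (lowerBound A lam q - lowerBound A lam p) +
        s q * (upperBound A lam q - upperBound A lam p) +
        (s q - s p) * (upperBound A lam p - lowerBound A lam p) := by
  unfold interpolate
  ring

section Finite

variable [Finite P]

lemma nonempty_image_inter_Iic (hmin : ∀ p : P, IsMin p → p ∈ A) (p : P) :
    (lam '' (A ∩ Iic p)).Nonempty := by
  obtain ⟨m, hmp, hm⟩ := exists_minimal_le_of_wellFoundedLT (fun _ : P => True) p trivial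
  exact ⟨lam m, m, ⟨hmin m (minimal_true.1 hm), hmp⟩, rfl⟩

lemma nonempty_image_inter_Ici (hmax : ∀ p : P, IsMax p → p ∈ A) (p : P) :
    (lam '' (A ∩ Ici p)).Nonempty := by
  obtain ⟨m, hpm, hm⟩ := exists_maximal_ge_of_wellFoundedGT (fun _ : P => True) p trivial
  exact ⟨lam m, m, ⟨hmax m (maximal_true.1 hm), hpm⟩, rfl⟩

lemma le_lowerBound {a : P} (ha : a ∈ A) (hap : a ≤ p) : lam a ≤ lowerBound A lam p :=
  le_csSup (toFinite _).bddAbove ⟨a, ⟨ha, hap⟩, rfl⟩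

lemma upperBound_le {b : P} (hb : b ∈ A) (hpb : p ≤ b) : upperBound A lam p ≤ lam b :=
  csInf_le (toFinite _).bddBelow ⟨b, ⟨hb, hpb⟩, rfl⟩

lemma lowerBound_le_apply (hmin : ∀ p : P, IsMin p → p ∈ A)
    (hφ : φ ∈ markedOrderPolytope P A lam) (p : P) : lowerBound A lam p ≤ φ p := by
  refine csSup_le (nonempty_image_inter_Iic hmin p) ?_
  rintro _ ⟨a, ⟨ha, hap⟩, rfl⟩
  exact hφ.2 a ha ▸ hφ.1 hap

lemma apply_le_upperBound (hmax : ∀ p : P, IsMax p → p ∈ A)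
    (hφ : φ ∈ markedOrderPolytope P A lam) (p : P) : φ p ≤ upperBound A lam p := by
  refine le_csInf (nonempty_image_inter_Ici hmax p) ?_
  rintro _ ⟨b, ⟨hb, hpb⟩, rfl⟩
  exact hφ.2 b hb ▸ hφ.1 hpb

lemma lowerBound_mono (hmin : ∀ p : P, IsMin p → p ∈ A) : Monotone (lowerBound A lam) := by
  intro p q hpq
  refine csSup_le (nonempty_image_inter_Iic hmin p) ?_
  rintro _ ⟨a, ⟨ha, hap⟩, rfl⟩
  exact le_lowerBound ha (hap.trans hpq)

lemma upperBound_mono (hmax : ∀ p : P, IsMax p → p ∈ A) : Monotone (upperBound A lam) := by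
  intro p q hpq
  refine le_csInf (nonempty_image_inter_Ici hmax q) ?_
  rintro _ ⟨b, ⟨hb, hqb⟩, rfl⟩
  exact upperBound_le hb (hpq.trans hqb)

lemma lowerBound_le_upperBound (hmin : ∀ p : P, IsMin p → p ∈ A)
    (hmax : ∀ p : P, IsMax p → p ∈ A) (hlam : MonotoneOn lam A) (p : P) :
    lowerBound A lam p ≤ upperBound A lam p := by
  refine csSup_le (nonempty_image_inter_Iic hmin p) ?_
  rintro _ ⟨a, ⟨ha, hap⟩, rfl⟩
  refine le_csInf (nonempty_image_inter_Ici hmax p) ?_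
  rintro _ ⟨b, ⟨hb, hpb⟩, rfl⟩
  exact hlam ha hb (hap.trans hpb)

lemma lowerBound_eq_of_mem (hlam : MonotoneOn lam A) {a : P} (ha : a ∈ A) :
    lowerBound A lam a = lam a := by
  refine le_antisymm (csSup_le ⟨lam a, a, ⟨ha, le_rfl⟩, rfl⟩ ?_) (le_lowerBound ha le_rfl)
  rintro _ ⟨b, ⟨hb, hba⟩, rfl⟩
  exact hlam hb ha hba

lemma upperBound_eq_of_mem (hlam : MonotoneOn lam A) {a : P} (ha : a ∈ A) :
    upperBound A lam a = lam a := by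
  refine le_antisymm (upperBound_le ha le_rfl) (le_csInf ⟨lam a, a, ⟨ha, le_rfl⟩, rfl⟩ ?_)
  rintro _ ⟨b, ⟨hb, hab⟩, rfl⟩
  exact hlam ha hb hab

lemma lowerBound_lt_upperBound (hmin : ∀ p : P, IsMin p → p ∈ A)
    (hmax : ∀ p : P, IsMax p → p ∈ A) (hlam : MonotoneOn lam A) (hp : p ∉ fixedSet A lam) :
    lowerBound A lam p < upperBound A lam p := by
  refine (lowerBound_le_upperBound hmin hmax hlam p).lt_of_ne fun h => hp ?_
  obtain ⟨a, ⟨ha, hap⟩, hla⟩ := (nonempty_image_inter_Iic hmin p).csSup_mem (toFinite _)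
  obtain ⟨b, ⟨hb, hpb⟩, hlb⟩ := (nonempty_image_inter_Ici hmax p).csInf_mem (toFinite _)
  exact ⟨a, ha, b, hb, hap, hpb, hla.trans (h.trans hlb.symm)⟩

lemma exists_strictMono_unitInterval : ∃ s : P → ℝ, StrictMono s ∧ ∀ p, s p ∈ Icc 0 1 := by
  refine ⟨fun p => (Iic p).ncard / Nat.card P, fun p q hpq => ?_, fun p => ⟨by positivity, ?_⟩⟩
  · have : Nonempty P := ⟨p⟩
    have hcard : (Iic p).ncard < (Iic q).ncard := ncard_lt_ncard (Iic_ssubset_Iic.2 hpq)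
    exact div_lt_div_of_pos_right (mod_cast hcard) (mod_cast Nat.card_pos)
  · exact div_le_one_of_le₀ (mod_cast ncard_le_card _) (by positivity)

lemma interpolate_mem (hmin : ∀ p : P, IsMin p → p ∈ A) (hmax : ∀ p : P, IsMax p → p ∈ A)
    (hlam : MonotoneOn lam A) {s : P → ℝ} (hs : Monotone s) (hs01 : ∀ p, s p ∈ Icc 0 1) :
    interpolate A lam s ∈ markedOrderPolytope P A lam := by
  refine ⟨fun p q hpq => sub_nonneg.1 ?_, fun a ha => ?_⟩
  · rw [interpolate_sub_interpolate]
    refine add_nonneg (add_nonneg ?_ ?_) ?_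
    · exact mul_nonneg (sub_nonneg.2 (hs01 q).2) (sub_nonneg.2 (lowerBound_mono hmin hpq))
    · exact mul_nonneg (hs01 q).1 (sub_nonneg.2 (upperBound_mono hmax hpq))
    · exact mul_nonneg (sub_nonneg.2 (hs hpq))
        (sub_nonneg.2 (lowerBound_le_upperBound hmin hmax hlam p))
  · rw [interpolate, lowerBound_eq_of_mem hlam ha, upperBound_eq_of_mem hlam ha]
    ring

lemma interpolate_lt_interpolate (hmin : ∀ p : P, IsMin p → p ∈ A)
    (hmax : ∀ p : P, IsMax p → p ∈ A) (hlam : MonotoneOn lam A) {s : P → ℝ} (hs : StrictMono s)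
    (hs01 : ∀ p, s p ∈ Icc 0 1) (hp : p ∉ fixedSet A lam) (hpq : p < q) :
    interpolate A lam s p < interpolate A lam s q := by
  refine sub_pos.1 ?_
  rw [interpolate_sub_interpolate]
  refine add_pos_of_nonneg_of_pos (add_nonneg ?_ ?_) ?_
  · exact mul_nonneg (sub_nonneg.2 (hs01 q).2) (sub_nonneg.2 (lowerBound_mono hmin hpq.le))
  · exact mul_nonneg (hs01 q).1 (sub_nonneg.2 (upperBound_mono hmax hpq.le))
  · exact mul_pos (sub_pos.2 (hs hpq)) (sub_pos.2 (lowerBound_lt_upperBound hmin hmax hlam hp))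

lemma direction_affineSpan_eq_spanSubset (hmin : ∀ p : P, IsMin p → p ∈ A)
    (hmax : ∀ p : P, IsMax p → p ∈ A) (hlam : MonotoneOn lam A) :
    (affineSpan ℝ (markedOrderPolytope P A lam)).direction =
      Pi.spanSubset ℝ (fixedSet A lam)ᶜ := by
  classical
  rw [direction_affineSpan]
  refine le_antisymm ?_ ?_
  · rw [vectorSpan_def, Submodule.span_le]
    rintro _ ⟨φ, hφ, ψ, hψ, rfl⟩
    exact Pi.mem_spanSubset_iff.2 fun p hp =>
      sub_eq_zero.2 (apply_eq_apply_of_mem_fixedSet hφ hψ (not_not.1 hp))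
  · rw [Pi.spanSubset, Submodule.span_le]
    rintro _ ⟨p, hp, rfl⟩
    obtain ⟨s, hs, hs01⟩ := exists_strictMono_unitInterval (P := P)
    have hmem := interpolate_mem hmin hmax hlam hs.monotone hs01
    obtain ⟨ε, hε, hmem'⟩ := exists_pos_add_single_mem hmem (fun h => hp (subset_fixedSet h))
      fun q => interpolate_lt_interpolate hmin hmax hlam hs hs01 hp
    have hsub := vsub_mem_vectorSpan ℝ hmem' hmem
    rw [vsub_eq_sub, add_sub_cancel_left] at hsub
    have hbasis : Pi.basisFun ℝ P p = (ε⁻¹ : ℝ) • Pi.single p ε := by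
      rw [Pi.basisFun_apply, ← Pi.single_smul, smul_eq_mul, inv_mul_cancel₀ hε.ne']
    rw [SetLike.mem_coe, hbasis]
    exact Submodule.smul_mem _ _ hsub

end Finite

end MarkedOrderPolytope

open MarkedOrderPolytope in
/-- the marked order polytope is a compact convex polytope (a bounded
intersection of finitely many closed affine halfspaces) whose dimension is
`|P \ {p : ∃ a,b ∈ A, a ≤ p ≤ b, λ(a) = λ(b)}|`. -/
theorem stmt0 (P : Type*) [Fintype P] [PartialOrder P] (A : Set P)
    (hmin : ∀ p : P, IsMin p → p ∈ A) (hmax : ∀ p : P, IsMax p → p ∈ A)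
    (lam : P → ℝ) (hlam : ∀ a ∈ A, ∀ b ∈ A, a ≤ b → lam a ≤ lam b) :
    IsCompact (markedOrderPolytope P A lam) ∧
    Convex ℝ (markedOrderPolytope P A lam) ∧
    (∃ (N : ℕ) (f : Fin N → ((P → ℝ) →ₗ[ℝ] ℝ)) (c : Fin N → ℝ),
      markedOrderPolytope P A lam = ⋂ i, {x | f i x ≤ c i}) ∧
    Module.finrank ℝ (affineSpan ℝ (markedOrderPolytope P A lam)).direction =
      Set.ncard {p : P | ¬ ∃ a ∈ A, ∃ b ∈ A, a ≤ p ∧ p ≤ b ∧ lam a = lam b} := by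
  have hlamA : MonotoneOn lam A := fun a ha b hb hab => hlam a ha b hb hab
  obtain ⟨N, f, c, hrep⟩ := exists_eq_iInter_halfspaces A lam
  have hclosed : IsClosed (markedOrderPolytope P A lam) := hrep ▸
    isClosed_iInter fun i => isClosed_le (f i).continuous_of_finiteDimensional continuous_const
  refine ⟨?_, hrep ▸ convex_iInter fun i => convex_halfSpace_le (f i).isLinear (c i),
    ⟨N, f, c, hrep⟩, ?_⟩
  · exact isCompact_Icc.of_isClosed_subset hclosed fun φ hφ =>
      ⟨lowerBound_le_apply hmin hφ, apply_le_upperBound hmax hφ⟩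
  · rw [direction_affineSpan_eq_spanSubset hmin hmax hlamA, Pi.dim_spanSubset]
    rfl
end

section
/- Let λ : A → ℤ be order preserving with range λ(A) = {t_0 < t_1 < ⋯ < t_r}, and choose a_0, a_1, …, a_r ∈ A with λ(a_j) = t_j. Let I : I_0 ⊊ I_1 ⊊ ⋯ ⊊ I_k = P be a chain of order ideals of P that is compatible with λ, set i_j = i(I, a_j) (necessarily 0 = i_0 < i_1 < ⋯ < i_r = k) and d_j = i_{j+1} − i_j − 1. Then the number of maps φ : P → ℤ with φ ∈ F(I) and φ(a) = λ(a) for all a ∈ A equals the product over j = 0, 1, …, r−1 of the binomial coefficients C(λ(a_{j+1}) − λ(a_j) + d_j, d_j). -/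
/-- A chain of order ideals `I_0 ⊊ I_1 ⊊ ⋯ ⊊ I_k = Q` of a poset `Q`. -/
structure IdealChain (Q : Type*) [Preorder Q] (k : ℕ) where
  I : Fin (k + 1) → Set Q
  lower : ∀ j, IsLowerSet (I j)
  strict : StrictMono I
  last : I (Fin.last k) = Set.univ

namespace IdealChain

variable {Q : Type*} [Preorder Q] {k : ℕ}

/-- The difference `I_j ∖ I_{j-1}` (with `I_{-1} = ∅`); note that `q ∈ diff c j`
iff `j` is the smallest index with `q ∈ I_j`, i.e. `j = i(I,q)`. -/
def diff (c : IdealChain Q k) (j : Fin (k + 1)) : Set Q :=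
  c.I j \ ⋃ j' < j, c.I j'

/-- The cell `F(I) ⊆ ℝ^Q`: maps constant on each difference `I_j ∖ I_{j-1}`
with weakly increasing constant values. -/
def cell (c : IdealChain Q k) : Set (Q → ℝ) :=
  {φ | ∃ t : Fin (k + 1) → ℝ, Monotone t ∧ ∀ j, ∀ q ∈ c.diff j, φ q = t j}

end IdealChain

/-- A chain of order ideals of `P` is compatible with `λ : A → ℤ` if
`i(I,a) < i(I,b) ↔ λ(a) < λ(b)` for all `a, b ∈ A`. -/
def IdealChain.CompatibleZ {P : Type*} [Preorder P] {k : ℕ} (c : IdealChain P k)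
    (A : Set P) (lam : P → ℤ) : Prop :=
  ∀ a ∈ A, ∀ b ∈ A, ∀ ja jb : Fin (k + 1), a ∈ c.diff ja → b ∈ c.diff jb →
    (ja < jb ↔ lam a < lam b)

/-!
An integral point `φ` of `F(I)` is `s ∘ i(I, ·)` for a monotone `s`, and compatibility turns
`φ = λ` on `A` into `s i_j = λ(a_j)`. As minimal and maximal elements lie in `A`, every index lies
in `[i_0, i_r]`, and every index in that range is attained; so these points correspond to monotone
integer sequences through the points `(i_j, λ(a_j))` that are constant outside `[i_0, i_r]`.
Cutting such a sequence `t` at a point `(x, c)` into `min t c` and `max t c` splits it into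
independent pieces, one per gap; the piece of the `j`-th gap is a monotone map from `d_j` points to
`[λ(a_j), λ(a_{j+1})]`, and stars and bars counts these.
-/

theorem card_monotone_fin_eq_multichoose (α : Type*) [Fintype α] [LinearOrder α] (d : ℕ) :
    Nat.card {g : Fin d → α // Monotone g} = Nat.multichoose (Fintype.card α) d := by
  rw [← Sym.card_sym_eq_multichoose, ← Nat.card_eq_fintype_card]
  refine Nat.card_eq_of_bijective (fun g => ⟨(List.ofFn g.1 : Multiset α), by simp⟩) ⟨?_, ?_⟩
  · rintro ⟨g, hg⟩ ⟨g', hg'⟩ h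
    have hperm : (List.ofFn g).Perm (List.ofFn g') := Multiset.coe_eq_coe.1 (congrArg Subtype.val h)
    exact Subtype.ext (List.ofFn_injective
      (hperm.eq_of_sortedLE (List.sortedLE_ofFn_iff.2 hg) (List.sortedLE_ofFn_iff.2 hg')))
  · rintro ⟨s, rfl⟩
    have hlen : (s.sort).length = s.card := Multiset.length_sort _
    refine ⟨⟨fun i => (s.sort).get (Fin.cast hlen.symm i), ?_⟩, ?_⟩
    · exact (Multiset.pairwise_sort s _).sortedLE.monotone_get.comp (Fin.cast_strictMono _).monotone
    · apply Subtype.ext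
      simp only
      rw [← List.ofFn_congr hlen, List.ofFn_get, Multiset.sort_eq]

theorem card_monotone_fin_Icc (d : ℕ) {u v : ℤ} (huv : u ≤ v) :
    Nat.card {g : Fin d → Set.Icc u v // Monotone g} = ((v - u).toNat + d).choose d := by
  have hcard := Int.card_fintype_Icc_of_le (a := u) (b := v) (by omega)
  rw [card_monotone_fin_eq_multichoose, Nat.multichoose_eq]
  congr 1
  omega

/-- The range condition forces `t` to be constant before `p 0` and after `p (Fin.last r)`. -/
structure MonotoneThrough {r : ℕ} (p : Fin (r + 1) → ℕ) (w : Fin (r + 1) → ℤ) (t : ℕ → ℤ) :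
    Prop where
  monotone : Monotone t
  mem_Icc : ∀ i, t i ∈ Set.Icc (w 0) (w (Fin.last r))
  apply_eq : ∀ j, t (p j) = w j

namespace MonotoneThrough

section

variable {r : ℕ} {p : Fin (r + 1) → ℕ} {w : Fin (r + 1) → ℤ} {t : ℕ → ℤ}

theorem apply_of_le_first (ht : MonotoneThrough p w t) {i : ℕ} (hi : i ≤ p 0) : t i = w 0 :=
  le_antisymm (ht.apply_eq 0 ▸ ht.monotone hi) (ht.mem_Icc i).1

theorem apply_of_last_le (ht : MonotoneThrough p w t) {i : ℕ} (hi : p (Fin.last r) ≤ i) :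
    t i = w (Fin.last r) :=
  le_antisymm (ht.mem_Icc i).2 (ht.apply_eq _ ▸ ht.monotone hi)

theorem apply_clamp (ht : MonotoneThrough p w t) (i : ℕ) :
    t (max (p 0) (min i (p (Fin.last r)))) = t i := by
  rcases le_total i (p 0) with h | h
  · rw [ht.apply_of_le_first h, ht.apply_of_le_first (by omega)]
  rcases le_total i (p (Fin.last r)) with h' | h'
  · rw [min_eq_left h', max_eq_right h]
  · rw [ht.apply_of_last_le h', ht.apply_of_last_le (by omega)]

end

theorem card_zero (p : Fin 1 → ℕ) (w : Fin 1 → ℤ) :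
    Nat.card {t // MonotoneThrough p w t} = 1 := by
  rw [Nat.card_eq_one_iff_exists]
  refine ⟨⟨fun _ => w 0, monotone_const, fun _ => ⟨le_rfl, le_rfl⟩,
    fun j => by rw [Fin.fin_one_eq_zero j]⟩, ?_⟩
  rintro ⟨t, ht⟩
  exact Subtype.ext (funext fun i => le_antisymm (ht.mem_Icc i).2 (ht.mem_Icc i).1)

theorem card_two {x y : ℕ} (hxy : x < y) {u v : ℤ} (huv : u ≤ v) :
    Nat.card {t // MonotoneThrough ![x, y] ![u, v] t} =
      ((v - u).toNat + (y - x - 1)).choose (y - x - 1) := by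
  rw [← card_monotone_fin_Icc _ huv]
  refine Nat.card_congr
    { toFun := fun t => ⟨fun i => ⟨t.1 (x + 1 + i), by simpa using t.2.mem_Icc (x + 1 + i)⟩,
        fun i i' h => t.2.monotone (by simp only [Fin.le_def] at h; omega)⟩
      invFun := fun g => ⟨fun i => if i ≤ x then u else
        if h : i - x - 1 < y - x - 1 then g.1 ⟨i - x - 1, h⟩ else v, ?_⟩
      left_inv := ?_
      right_inv := ?_ }
  · have hg : ∀ i, u ≤ (g.1 i : ℤ) ∧ (g.1 i : ℤ) ≤ v := fun i => (g.1 i).2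
    refine ⟨fun i i' h => ?_, fun i => ?_, ?_⟩
    · split_ifs <;> first | omega | exact le_rfl | exact huv | exact (hg _).1 | exact (hg _).2 |
        exact g.2 (Fin.mk_le_mk.2 (by omega))
    · split_ifs
      exacts [⟨le_rfl, huv⟩, hg _, ⟨huv, le_rfl⟩]
    · simp [Fin.forall_fin_two, hxy.not_ge]
  · rintro ⟨t, ht⟩
    apply Subtype.ext
    funext i
    dsimp only
    split_ifs with h₁ h₂
    · exact (ht.apply_of_le_first h₁).symm
    · congr 1; omega
    · exact (ht.apply_of_last_le (show y ≤ i by omega)).symm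
  · rintro ⟨g, hg⟩
    apply Subtype.ext
    funext i
    have := i.2
    simp only [show ¬x + 1 + (i : ℕ) ≤ x by omega, if_false,
      dif_pos (show x + 1 + (i : ℕ) - x - 1 < y - x - 1 by omega)]
    exact Subtype.ext (congrArg (fun i => (g i : ℤ)) (Fin.ext (by simp only; omega)))

section Split

variable {r : ℕ} {p : Fin (r + 2) → ℕ} {w : Fin (r + 2) → ℤ}

theorem min_castSucc {t : ℕ → ℤ} (ht : MonotoneThrough p w t) (hp : Monotone p) :
    MonotoneThrough (p ∘ Fin.castSucc) (w ∘ Fin.castSucc)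
      (fun i => min (t i) (w (Fin.last r).castSucc)) := by
  have hc := ht.apply_eq (Fin.last r).castSucc
  refine ⟨ht.monotone.min monotone_const, fun i => ?_, fun j => ?_⟩
  · simpa using ⟨(ht.mem_Icc i).1, hc ▸ (ht.mem_Icc _).1⟩
  · simpa [ht.apply_eq] using hc ▸ ht.apply_eq j.castSucc ▸
      ht.monotone (hp (Fin.castSucc_le_castSucc_iff.2 (Fin.le_last j)))

theorem max_lastTwo {t : ℕ → ℤ} (ht : MonotoneThrough p w t) (hp : Monotone p) :
    MonotoneThrough ![p (Fin.last r).castSucc, p (Fin.last (r + 1))]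
      ![w (Fin.last r).castSucc, w (Fin.last (r + 1))]
      (fun i => max (t i) (w (Fin.last r).castSucc)) := by
  have hc := ht.apply_eq (Fin.last r).castSucc
  refine ⟨ht.monotone.max monotone_const, fun i => ?_, Fin.forall_fin_two.2 ⟨?_, ?_⟩⟩
  · simpa using ⟨(ht.mem_Icc i).2, hc ▸ (ht.mem_Icc _).2⟩
  · simp [hc]
  · simpa [ht.apply_eq] using hc ▸ ht.apply_eq (Fin.last (r + 1)) ▸ ht.monotone (hp (Fin.le_last _))

theorem piecewise {t₁ t₂ : ℕ → ℤ} (h₁ : MonotoneThrough (p ∘ Fin.castSucc) (w ∘ Fin.castSucc) t₁)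
    (h₂ : MonotoneThrough ![p (Fin.last r).castSucc, p (Fin.last (r + 1))]
      ![w (Fin.last r).castSucc, w (Fin.last (r + 1))] t₂) (hp : StrictMono p) :
    MonotoneThrough p w (fun i => if i ≤ p (Fin.last r).castSucc then t₁ i else t₂ i) := by
  have b₁ : ∀ i, w 0 ≤ t₁ i ∧ t₁ i ≤ w (Fin.last r).castSucc := by simpa using h₁.mem_Icc
  have b₂ : ∀ i, w (Fin.last r).castSucc ≤ t₂ i ∧ t₂ i ≤ w (Fin.last (r + 1)) := by
    simpa using h₂.mem_Icc
  have hx : p (Fin.last r).castSucc < p (Fin.last (r + 1)) := hp (Fin.castSucc_lt_last _)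
  refine ⟨fun i i' h => ?_, fun i => ?_, fun j => ?_⟩
  · split_ifs
    exacts [h₁.monotone h, (b₁ i).2.trans (b₂ i').1, by omega, h₂.monotone h]
  · split_ifs
    exacts [⟨(b₁ i).1, (b₁ i).2.trans ((b₂ 0).1.trans (b₂ 0).2)⟩,
      ⟨((b₁ 0).1.trans (b₁ 0).2).trans (b₂ i).1, (b₂ i).2⟩]
  · induction j using Fin.lastCases with
    | last => simpa [hx.not_ge] using h₂.apply_eq 1
    | cast j =>
      simpa [hp.le_iff_le.2 (Fin.castSucc_le_castSucc_iff.2 (Fin.le_last j))] using h₁.apply_eq j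

def equivProdLastTwo (hp : StrictMono p) :
    {t // MonotoneThrough p w t} ≃
      {t // MonotoneThrough (p ∘ Fin.castSucc) (w ∘ Fin.castSucc) t} ×
        {t // MonotoneThrough ![p (Fin.last r).castSucc, p (Fin.last (r + 1))]
          ![w (Fin.last r).castSucc, w (Fin.last (r + 1))] t} where
  toFun t := (⟨_, t.2.min_castSucc hp.monotone⟩, ⟨_, t.2.max_lastTwo hp.monotone⟩)
  invFun t := ⟨_, piecewise t.1.2 t.2.2 hp⟩
  left_inv t := by
    have hc := t.2.apply_eq (Fin.last r).castSucc
    refine Subtype.ext (funext fun i => ?_)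
    dsimp only
    split_ifs with h
    · exact min_eq_left (hc ▸ t.2.monotone h)
    · exact max_eq_left (hc ▸ t.2.monotone (not_le.1 h).le)
  right_inv := by
    rintro ⟨⟨t₁, h₁⟩, ⟨t₂, h₂⟩⟩
    have b₁ : ∀ i, t₁ i ≤ w (Fin.last r).castSucc := fun i => by simpa using (h₁.mem_Icc i).2
    have b₂ : ∀ i, w (Fin.last r).castSucc ≤ t₂ i := fun i => by simpa using (h₂.mem_Icc i).1
    refine Prod.ext (Subtype.ext (funext fun i => ?_)) (Subtype.ext (funext fun i => ?_))
    all_goals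
      dsimp only
      split_ifs with h
    · exact min_eq_left (b₁ i)
    · rw [min_eq_right (b₂ i)]
      simpa using (h₁.apply_of_last_le (by simpa using (not_le.1 h).le)).symm
    · rw [max_eq_right (b₁ i)]
      simpa using (h₂.apply_of_le_first (by simpa using h)).symm
    · exact max_eq_left (b₂ i)

end Split

theorem card_eq_prod {r : ℕ} {p : Fin (r + 1) → ℕ} (hp : StrictMono p) {w : Fin (r + 1) → ℤ}
    (hw : Monotone w) :
    Nat.card {t // MonotoneThrough p w t} =
      ∏ j : Fin r, ((w j.succ - w j.castSucc).toNat + (p j.succ - p j.castSucc - 1)).choose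
        (p j.succ - p j.castSucc - 1) := by
  induction r with
  | zero => simp [card_zero]
  | succ r ih =>
    rw [Nat.card_congr (equivProdLastTwo hp), Nat.card_prod,
      ih (hp.comp Fin.strictMono_castSucc) (hw.comp Fin.strictMono_castSucc.monotone),
      card_two (hp (Fin.castSucc_lt_last _)) (hw (Fin.castSucc_lt_last _).le),
      Fin.prod_univ_castSucc]
    simp only [Function.comp_apply, Fin.castSucc_succ, Fin.succ_last]

end MonotoneThrough

namespace IdealChain

variable {Q : Type*} [Preorder Q] {k : ℕ} (c : IdealChain Q k) {q q' : Q} {j j' : Fin (k + 1)}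

theorem exists_mem_diff (q : Q) : ∃ j, q ∈ c.diff j := by
  obtain ⟨j, hj, hmin⟩ := wellFounded_lt.has_min {j | q ∈ c.I j} ⟨Fin.last k, by simp [c.last]⟩
  exact ⟨j, hj, by simpa [diff] using fun j' hj' hq => hmin j' hq hj'⟩

theorem eq_of_mem_diff (h : q ∈ c.diff j) (h' : q ∈ c.diff j') : j = j' := by
  by_contra hne
  rcases lt_or_gt_of_ne hne with hlt | hlt
  · exact h'.2 (Set.mem_iUnion₂.2 ⟨j, hlt, h.1⟩)
  · exact h.2 (Set.mem_iUnion₂.2 ⟨j', hlt, h'.1⟩)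

/-- The index `i(I, q)`: the smallest `j` with `q ∈ I_j`. -/
noncomputable def index (q : Q) : Fin (k + 1) :=
  (c.exists_mem_diff q).choose

theorem mem_diff_index (q : Q) : q ∈ c.diff (c.index q) :=
  (c.exists_mem_diff q).choose_spec

theorem index_eq_of_mem_diff (h : q ∈ c.diff j) : c.index q = j :=
  c.eq_of_mem_diff (c.mem_diff_index q) h

theorem index_mono : Monotone c.index := fun q q' h => by
  by_contra hlt
  exact (c.mem_diff_index q).2
    (Set.mem_iUnion₂.2 ⟨_, not_le.1 hlt, c.lower _ h (c.mem_diff_index q').1⟩)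

theorem diff_nonempty_of_lt (h : j' < j) : (c.diff j).Nonempty := by
  have hpred : Order.pred j < j := Order.pred_lt_of_not_isMin (not_isMin_of_lt h)
  obtain ⟨q, hq, hq'⟩ := Set.exists_of_ssubset (c.strict hpred)
  refine ⟨q, hq, fun hmem => ?_⟩
  obtain ⟨i, hi, hqi⟩ := Set.mem_iUnion₂.1 hmem
  exact hq' (c.strict.monotone (Order.le_pred_of_lt hi) hqi)

theorem exists_index_eq_of_le (h : c.index q ≤ j) : ∃ q', c.index q' = j := by
  rcases h.eq_or_lt with h | h
  · exact ⟨q, h⟩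
  · obtain ⟨q', hq'⟩ := c.diff_nonempty_of_lt h
    exact ⟨q', c.index_eq_of_mem_diff hq'⟩

theorem mem_cell_iff {φ : Q → ℝ} :
    φ ∈ c.cell ↔ ∃ s : Fin (k + 1) → ℝ, Monotone s ∧ ∀ q, φ q = s (c.index q) := by
  refine exists_congr fun s => and_congr_right fun _ => ⟨fun h q => h _ q (c.mem_diff_index q),
    fun h j q hq => c.index_eq_of_mem_diff hq ▸ h q⟩

theorem apply_le_of_mem_cell {φ : Q → ℝ} (hφ : φ ∈ c.cell) (h : c.index q ≤ c.index q') :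
    φ q ≤ φ q' := by
  obtain ⟨s, hs, hφs⟩ := c.mem_cell_iff.1 hφ
  rw [hφs, hφs]
  exact hs h

variable {c} in
theorem CompatibleZ.index_le_index_iff {A : Set Q} {lam : Q → ℤ} (hc : c.CompatibleZ A lam)
    (hq : q ∈ A) (hq' : q' ∈ A) : c.index q ≤ c.index q' ↔ lam q ≤ lam q' := by
  rw [← not_lt, ← not_lt, hc q' hq' q hq _ _ (c.mem_diff_index q') (c.mem_diff_index q)]

theorem card_intPoints_cell_eq_card_monotoneThrough (A : Set Q) (lam : Q → ℤ) {r : ℕ}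
    (a : Fin (r + 1) → Q) (ha : ∀ j, a j ∈ A)
    (hA : ∀ b ∈ A, ∃ j, c.index b = c.index (a j) ∧ lam b = lam (a j))
    (hbounds : ∀ q, c.index (a 0) ≤ c.index q ∧ c.index q ≤ c.index (a (Fin.last r))) :
    Nat.card {φ : Q → ℤ | (fun p => (φ p : ℝ)) ∈ c.cell ∧ ∀ b ∈ A, φ b = lam b} =
      Nat.card {t // MonotoneThrough (fun j => (c.index (a j) : ℕ)) (fun j => lam (a j)) t} := by
  have hsec : ∀ i : ℕ, ∃ q, (c.index q : ℕ) =
      max (c.index (a 0) : ℕ) (min i (c.index (a (Fin.last r)))) := by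
    intro i
    obtain ⟨q, hq⟩ := c.exists_index_eq_of_le (j := ⟨_, max_lt (c.index (a 0)).isLt
      (min_lt_of_right_lt (c.index (a (Fin.last r))).isLt)⟩) (Fin.le_def.2 (le_max_left _ _))
    exact ⟨q, congrArg Fin.val hq⟩
  choose sec hsec using hsec
  have hbounds' (q : Q) :
      (c.index (a 0) : ℕ) ≤ c.index q ∧ (c.index q : ℕ) ≤ c.index (a (Fin.last r)) :=
    hbounds q
  have hmono : ∀ φ : Q → ℤ, (fun p => (φ p : ℝ)) ∈ c.cell → ∀ q q', c.index q ≤ c.index q' →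
      φ q ≤ φ q' := fun φ hφ q q' h => by exact_mod_cast c.apply_le_of_mem_cell hφ h
  have hsame : ∀ φ : Q → ℤ, (fun p => (φ p : ℝ)) ∈ c.cell → ∀ q q', c.index q = c.index q' →
      φ q = φ q' := fun φ hφ q q' h =>
    le_antisymm (hmono φ hφ q q' h.le) (hmono φ hφ q' q h.ge)
  refine Nat.card_congr
    { toFun := fun φ => ⟨fun i => φ.1 (sec i), ⟨?_, fun i => ?_, fun j => ?_⟩⟩
      invFun := fun t => ⟨fun q => t.1 (c.index q), ?_, fun b hb => ?_⟩
      left_inv := fun φ => Subtype.ext (funext fun q => ?_)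
      right_inv := fun t => Subtype.ext (funext fun i => ?_) }
  · intro i i' h
    exact hmono _ φ.2.1 _ _ (Fin.le_def.2 (by rw [hsec, hsec]; omega))
  · rw [← φ.2.2 _ (ha 0), ← φ.2.2 _ (ha (Fin.last r))]
    exact ⟨hmono _ φ.2.1 _ _ (hbounds _).1, hmono _ φ.2.1 _ _ (hbounds _).2⟩
  · rw [← φ.2.2 _ (ha j)]
    exact hsame _ φ.2.1 _ _ (Fin.ext (by rw [hsec]; have := hbounds' (a j); omega))
  · exact c.mem_cell_iff.2 ⟨fun j => (t.1 j : ℝ), fun j j' h => Int.cast_le.2 (t.2.monotone h),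
      fun q => rfl⟩
  · obtain ⟨j, hj, hl⟩ := hA b hb
    simpa [hj, hl] using t.2.apply_eq j
  · exact hsame _ φ.2.1 _ _ (Fin.ext (by rw [hsec]; have := hbounds' q; omega))
  · show t.1 (c.index (sec i)) = t.1 i
    rw [hsec]
    exact t.2.apply_clamp i

end IdealChain

theorem stmt2_general (P : Type*) [Fintype P] [PartialOrder P] (A : Set P)
    (hmin : ∀ p : P, IsMin p → p ∈ A) (hmax : ∀ p : P, IsMax p → p ∈ A)
    (lam : P → ℤ)
    -- the range of `λ` is `{t_0 < t_1 < ⋯ < t_r}`, attained at `a_0, …, a_r ∈ A`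
    (r : ℕ) (a : Fin (r + 1) → P) (ha : ∀ j, a j ∈ A)
    (hstrict : StrictMono fun j => lam (a j))
    (hrange : ∀ b ∈ A, ∃ j, lam b = lam (a j))
    -- a chain of order ideals of `P` compatible with `λ`
    (k : ℕ) (c : IdealChain P k) (hcompat : c.CompatibleZ A lam)
    -- `ix j = i(I, a_j)`
    (ix : Fin (r + 1) → Fin (k + 1)) (hix : ∀ j, a j ∈ c.diff (ix j)) :
    Nat.card {φ : P → ℤ | (fun p => (φ p : ℝ)) ∈ c.cell ∧ ∀ b ∈ A, φ b = lam b} =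
      ∏ j : Fin r,
        Nat.choose
          ((lam (a j.succ) - lam (a j.castSucc)).toNat +
            ((ix j.succ : ℕ) - (ix j.castSucc : ℕ) - 1))
          ((ix j.succ : ℕ) - (ix j.castSucc : ℕ) - 1) := by
  obtain rfl : ix = fun j => c.index (a j) :=
    funext fun j => (c.index_eq_of_mem_diff (hix j)).symm
  have hle {b b' : P} (hb : b ∈ A) (hb' : b' ∈ A) : c.index b ≤ c.index b' ↔ lam b ≤ lam b' :=
    hcompat.index_le_index_iff hb hb'
  have hA : ∀ b ∈ A, ∃ j, c.index b = c.index (a j) ∧ lam b = lam (a j) := fun b hb => by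
    obtain ⟨j, hj⟩ := hrange b hb
    exact ⟨j, le_antisymm ((hle hb (ha j)).2 hj.le) ((hle (ha j) hb).2 hj.ge), hj⟩
  have hbounds (q : P) : c.index (a 0) ≤ c.index q ∧ c.index q ≤ c.index (a (Fin.last r)) := by
    obtain ⟨m, hmq, hm⟩ := Finite.exists_le_minimal (p := fun _ : P => True) trivial (a := q)
    obtain ⟨M, hqM, hM⟩ := Finite.exists_le_maximal (p := fun _ : P => True) trivial (a := q)
    have hmA := hmin m (minimal_true.1 hm)
    have hMA := hmax M (maximal_true.1 hM)
    obtain ⟨j, -, hj⟩ := hA m hmA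
    obtain ⟨j', -, hj'⟩ := hA M hMA
    exact ⟨((hle (ha 0) hmA).2 (hj ▸ hstrict.monotone (Fin.zero_le j))).trans (c.index_mono hmq),
      (c.index_mono hqM).trans ((hle hMA (ha _)).2 (hj' ▸ hstrict.monotone (Fin.le_last j')))⟩
  have hpins : StrictMono fun j => (c.index (a j) : ℕ) := fun i j h =>
    (hcompat _ (ha i) _ (ha j) _ _ (c.mem_diff_index _) (c.mem_diff_index _)).2 (hstrict h)
  rw [c.card_intPoints_cell_eq_card_monotoneThrough A lam a ha hA hbounds,
    MonotoneThrough.card_eq_prod hpins hstrict.monotone]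

/-- the number of integral points of the cell of a compatible chain of
order ideals extending `λ` is a product of binomial coefficients. -/
theorem stmt2 (P : Type*) [Fintype P] [PartialOrder P] (A : Set P)
    (hmin : ∀ p : P, IsMin p → p ∈ A) (hmax : ∀ p : P, IsMax p → p ∈ A)
    (lam : P → ℤ) (hlam : ∀ a ∈ A, ∀ b ∈ A, a ≤ b → lam a ≤ lam b)
    -- the range of `λ` is `{t_0 < t_1 < ⋯ < t_r}`, attained at `a_0, …, a_r ∈ A`
    (r : ℕ) (a : Fin (r + 1) → P) (ha : ∀ j, a j ∈ A)
    (hstrict : StrictMono fun j => lam (a j))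
    (hrange : ∀ b ∈ A, ∃ j, lam b = lam (a j))
    -- a chain of order ideals of `P` compatible with `λ`
    (k : ℕ) (c : IdealChain P k) (hcompat : c.CompatibleZ A lam)
    -- `ix j = i(I, a_j)`
    (ix : Fin (r + 1) → Fin (k + 1)) (hix : ∀ j, a j ∈ c.diff (ix j)) :
    Nat.card {φ : P → ℤ | (fun p => (φ p : ℝ)) ∈ c.cell ∧ ∀ b ∈ A, φ b = lam b} =
      ∏ j : Fin r,
        Nat.choose
          ((lam (a j.succ) - lam (a j.castSucc)).toNat +
            ((ix j.succ : ℕ) - (ix j.castSucc : ℕ) - 1))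
          ((ix j.succ : ℕ) - (ix j.castSucc : ℕ) - 1) :=
  stmt2_general P A hmin hmax lam r a ha hstrict hrange k c hcompat ix hix
end

section
/- Let λ : A → ℝ be order preserving and let I be a chain of order ideals of P. Then the relative interior of F(I) (the set of maps constant on each difference I_j ∖ I_{j−1} whose constant values are strictly increasing in j) contains a map φ with φ(a) = λ(a) for all a ∈ A if and only if I is compatible with λ. -/
namespace IdealChain

variable {Q : Type*} [Preorder Q] {k : ℕ}

/-- The relative interior of the cell `F(I) ⊆ ℝ^Q`: maps constant on each
difference `I_j ∖ I_{j-1}` with strictly increasing constant values. -/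
def relintCell (c : IdealChain Q k) : Set (Q → ℝ) :=
  {φ | ∃ t : Fin (k + 1) → ℝ, StrictMono t ∧ ∀ j, ∀ q ∈ c.diff j, φ q = t j}

end IdealChain


open Classical in
/-- Auxiliary recursion: build values strictly increasing and pinned to `v` on `O`. -/
noncomputable def extAux {k : ℕ} (O : Finset (Fin (k + 1))) (v : Fin (k + 1) → ℝ) : ℕ → ℝ
  | 0 =>
      if h : ∃ j ∈ O, (j : ℕ) = 0 then v h.choose
      else if hO : O.Nonempty then v (O.min' hO) - 1 else 0
  | (n + 1) =>
      if h : ∃ j ∈ O, (j : ℕ) = n + 1 then v h.choose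
      else if h2 : (O.filter (fun j : Fin (k + 1) => n + 1 < (j : ℕ))).Nonempty then
        (extAux O v n + v ((O.filter (fun j : Fin (k + 1) => n + 1 < (j : ℕ))).min' h2)) / 2
      else extAux O v n + 1

theorem extAux_invariant {k : ℕ} (O : Finset (Fin (k + 1))) (v : Fin (k + 1) → ℝ)
    (hv : ∀ i ∈ O, ∀ j ∈ O, i < j → v i < v j) :
    ∀ n : ℕ, ∀ j ∈ O, n < (j : ℕ) → extAux O v n < v j := by
  classical
  have hmono : ∀ i ∈ O, ∀ j ∈ O, i ≤ j → v i ≤ v j := by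
    intro i hi j hj hij
    rcases lt_or_eq_of_le hij with h | h
    · exact (hv i hi j hj h).le
    · rw [h]
  intro n
  induction n with
  | zero =>
    intro j hj hjn
    rw [extAux]
    split_ifs with h hO
    · have hc := h.choose_spec
      refine hv _ hc.1 _ hj ?_
      have : ((h.choose : Fin (k+1)) : ℕ) < (j : ℕ) := by omega
      exact this
    · have := hmono _ (O.min'_mem hO) _ hj (O.min'_le _ hj)
      linarith
    · exact absurd ⟨j, hj⟩ hO
  | succ n ih =>
    intro j hj hjn
    rw [extAux]
    split_ifs with h h2
    · have hc := h.choose_spec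
      refine hv _ hc.1 _ hj ?_
      have : ((h.choose : Fin (k+1)) : ℕ) < (j : ℕ) := by omega
      exact this
    · set m := (O.filter (fun j : Fin (k + 1) => n + 1 < (j : ℕ))).min' h2 with hm
      have hmF := (O.filter (fun j : Fin (k + 1) => n + 1 < (j : ℕ))).min'_mem h2
      rw [Finset.mem_filter] at hmF
      have h1 : extAux O v n < v m := ih m hmF.1 (by omega)
      have h3 : v m ≤ v j := by
        refine hmono _ hmF.1 _ hj ?_
        exact Finset.min'_le _ j (Finset.mem_filter.2 ⟨hj, hjn⟩)
      linarith
    · exact absurd ⟨j, Finset.mem_filter.2 ⟨hj, hjn⟩⟩ h2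

theorem extAux_lt_succ {k : ℕ} (O : Finset (Fin (k + 1))) (v : Fin (k + 1) → ℝ)
    (hv : ∀ i ∈ O, ∀ j ∈ O, i < j → v i < v j) (n : ℕ) :
    extAux O v n < extAux O v (n + 1) := by
  classical
  conv_rhs => rw [extAux]
  split_ifs with h h2
  · have hc := h.choose_spec
    exact extAux_invariant O v hv n _ hc.1 (by omega)
  · set m := (O.filter (fun j : Fin (k + 1) => n + 1 < (j : ℕ))).min' h2 with hm
    have hmF := (O.filter (fun j : Fin (k + 1) => n + 1 < (j : ℕ))).min'_mem h2
    rw [Finset.mem_filter] at hmF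
    have h1 : extAux O v n < v m := extAux_invariant O v hv n _ hmF.1 (by omega)
    linarith
  · linarith

theorem extAux_pin {k : ℕ} (O : Finset (Fin (k + 1))) (v : Fin (k + 1) → ℝ)
    (j : Fin (k + 1)) (hj : j ∈ O) : extAux O v (j : ℕ) = v j := by
  classical
  cases hn : (j : ℕ) with
  | zero =>
    rw [extAux]
    have h : ∃ j' ∈ O, (j' : ℕ) = 0 := ⟨j, hj, hn⟩
    rw [dif_pos h]
    congr 1
    have hc := h.choose_spec
    exact Fin.val_injective (by omega)
  | succ n =>
    rw [extAux]
    have h : ∃ j' ∈ O, (j' : ℕ) = n + 1 := ⟨j, hj, hn⟩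
    rw [dif_pos h]
    congr 1
    have hc := h.choose_spec
    exact Fin.val_injective (by omega)

/-- Extension of a strictly increasing partial function on `Fin (k+1)` to a
strictly monotone function. -/
theorem exists_strictMono_extension {k : ℕ} (O : Finset (Fin (k + 1))) (v : Fin (k + 1) → ℝ)
    (hv : ∀ i ∈ O, ∀ j ∈ O, i < j → v i < v j) :
    ∃ t : Fin (k + 1) → ℝ, StrictMono t ∧ ∀ j ∈ O, t j = v j := by
  refine ⟨fun j => extAux O v (j : ℕ), ?_, fun j hj => extAux_pin O v j hj⟩
  intro i j hij
  exact strictMono_nat_of_lt_succ (extAux_lt_succ O v hv) (by exact hij)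


section MainAux
variable {Q : Type*} [Preorder Q] {k : ℕ}

theorem IdealChain.diff_unique (c : IdealChain Q k) {q : Q} {j j' : Fin (k + 1)}
    (h : q ∈ c.diff j) (h' : q ∈ c.diff j') : j = j' := by
  by_contra hne
  rcases lt_or_gt_of_ne hne with hlt | hlt
  · exact h'.2 (Set.mem_biUnion hlt h.1)
  · exact h.2 (Set.mem_biUnion hlt h'.1)

theorem IdealChain.exists_mem_diff_s3 (c : IdealChain Q k) (q : Q) : ∃ j, q ∈ c.diff j := by
  classical
  have hne : (Finset.univ.filter (fun j : Fin (k + 1) => q ∈ c.I j)).Nonempty :=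
    ⟨Fin.last k, Finset.mem_filter.2 ⟨Finset.mem_univ _, by rw [c.last]; trivial⟩⟩
  set j0 := (Finset.univ.filter (fun j : Fin (k + 1) => q ∈ c.I j)).min' hne with hj0
  have hmem := Finset.mem_filter.1 ((Finset.univ.filter
    (fun j : Fin (k + 1) => q ∈ c.I j)).min'_mem hne)
  refine ⟨j0, hmem.2, ?_⟩
  intro hq
  simp only [Set.mem_iUnion] at hq
  obtain ⟨j', hj', hqj'⟩ := hq
  have hj'mem : j' ∈ Finset.univ.filter (fun j : Fin (k + 1) => q ∈ c.I j) :=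
    Finset.mem_filter.2 ⟨Finset.mem_univ _, hqj'⟩
  have := Finset.min'_le _ j' hj'mem
  exact absurd (lt_of_lt_of_le hj' this) (lt_irrefl _)
end MainAux

/-- the relative interior of `F(I)` contains an extension of `λ` iff
`I` is compatible with `λ`, i.e. `i(I,a) < i(I,b) ↔ λ(a) < λ(b)` for `a,b ∈ A`. -/
theorem stmt3 (P : Type*) [Fintype P] [PartialOrder P] (A : Set P)
    (hmin : ∀ p : P, IsMin p → p ∈ A) (hmax : ∀ p : P, IsMax p → p ∈ A)
    (lam : P → ℝ) (hlam : ∀ a ∈ A, ∀ b ∈ A, a ≤ b → lam a ≤ lam b)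
    (k : ℕ) (c : IdealChain P k) :
    (∃ φ ∈ c.relintCell, ∀ a ∈ A, φ a = lam a) ↔
      (∀ a ∈ A, ∀ b ∈ A, ∀ ja jb : Fin (k + 1), a ∈ c.diff ja → b ∈ c.diff jb →
        (ja < jb ↔ lam a < lam b)) := by
  classical
  constructor
  · rintro ⟨φ, ⟨t, ht, hφ⟩, hext⟩ a ha b hb ja jb hja hjb
    have h1 : lam a = t ja := by rw [← hext a ha]; exact hφ ja a hja
    have h2 : lam b = t jb := by rw [← hext b hb]; exact hφ jb b hjb
    rw [h1, h2, ht.lt_iff_lt]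
  · intro hcompat
    set O : Finset (Fin (k + 1)) :=
      Finset.univ.filter (fun j => ∃ a, a ∈ A ∧ a ∈ c.diff j) with hO
    set v : Fin (k + 1) → ℝ := fun j =>
      if h : ∃ a, a ∈ A ∧ a ∈ c.diff j then lam h.choose else 0 with hv
    have hvspec : ∀ j ∈ O, ∃ a, a ∈ A ∧ a ∈ c.diff j ∧ v j = lam a := by
      intro j hj
      rw [hO, Finset.mem_filter] at hj
      obtain ⟨-, h⟩ := hj
      exact ⟨h.choose, h.choose_spec.1, h.choose_spec.2, by rw [hv]; exact dif_pos h⟩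
    have hmono : ∀ i ∈ O, ∀ j ∈ O, i < j → v i < v j := by
      intro i hi j hj hij
      obtain ⟨a, ha, hda, hva⟩ := hvspec i hi
      obtain ⟨b, hb, hdb, hvb⟩ := hvspec j hj
      rw [hva, hvb]
      exact (hcompat a ha b hb i j hda hdb).1 hij
    obtain ⟨t, ht, hpin⟩ := exists_strictMono_extension O v hmono
    choose idx hidx using c.exists_mem_diff_s3 (Q := P) (k := k)
    refine ⟨fun q => t (idx q), ⟨t, ht, ?_⟩, ?_⟩
    · intro j q hq
      show t (idx q) = t j
      rw [c.diff_unique (hidx q) hq]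
    · intro a ha
      have haO : idx a ∈ O := by
        rw [hO, Finset.mem_filter]
        exact ⟨Finset.mem_univ _, a, ha, hidx a⟩
      obtain ⟨b, hb, hdb, hvb⟩ := hvspec _ haO
      show t (idx a) = lam a
      rw [hpin _ haO, hvb]
      have h1 := (hcompat a ha b hb (idx a) (idx a) (hidx a) hdb)
      have h2 := (hcompat b hb a ha (idx a) (idx a) hdb (hidx a))
      have := lt_irrefl (idx a)
      have hab : ¬ lam a < lam b := fun hc => this (h1.2 hc)
      have hba : ¬ lam b < lam a := fun hc => this (h2.2 hc)
      linarith [le_of_not_gt hab, le_of_not_gt hba]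
end

section
/- Let λ : A → ℤ be order preserving. Then for every positive integer n one has O_{P,A}(nλ) = n · O_{P,A}(λ) (the dilate {nφ : φ ∈ O_{P,A}(λ)}), and the function n ↦ Ω_{P,A}(nλ) agrees, for all positive integers n, with a polynomial in n of degree equal to the dimension of O_{P,A}(λ); that is, n ↦ Ω_{P,A}(nλ) is the Ehrhart polynomial of the lattice polytope O_{P,A}(λ). -/
/-!
Fix the distinct values `w 0 < ⋯ < w m` of `λ` on `A`. Every order preserving `φ` in
`O_{P,A}(nλ)` takes values in `[n w 0, n w m]`; its *pattern* records, for each `p`, either the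
level `j` with `φ p = n w j`, or the gap `j` containing `φ p` together with the rank of `φ p`
among the values of `φ` inside that gap. The integer maps with a given pattern correspond to
choosing `k j` of the `n (w (j+1) - w j) - 1` integers inside each gap `j`, so
`Ω_{P,A}(nλ) = ∑_π ∏_j (n (w (j+1) - w j) - 1).choose (k_π j)`: a sum of polynomials in `n` with
positive leading coefficients, of degree `max_π ∑_j k_π j`.

This maximum is also `dim O_{P,A}(λ)`. Each pattern `π` yields `∑_j k_π j` linearly independent
directions in the polytope: moving one block of a realisation of `π` inside its gap. Conversely,
if `φ ∈ O_{P,A}(λ)` has the largest number of distinct values, every other point is constant on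
the fibres of `φ` (otherwise a generic point of the segment between them has more values), so the
polytope lies in `φ +` the span of the indicator functions of the fibres of `φ` strictly inside
the gaps, a space of dimension `∑_j k_π j` for the pattern `π` of `φ`.
-/

open scoped Pointwise

open Finset Polynomial Module

theorem Polynomial.natDegree_sum_eq_of_leadingCoeff_pos {ι R : Type*} [CommRing R]
    [LinearOrder R] [IsStrictOrderedRing R] {s : Finset ι} {f : ι → R[X]} {d : ℕ}
    (hpos : ∀ i ∈ s, 0 < (f i).leadingCoeff) (hle : ∀ i ∈ s, (f i).natDegree ≤ d)
    (hd : ∃ i ∈ s, (f i).natDegree = d) : (∑ i ∈ s, f i).natDegree = d := by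
  refine le_antisymm (natDegree_sum_le_of_forall_le s f hle) (le_natDegree_of_ne_zero ?_)
  rw [finsetSum_coeff]
  refine (sum_pos' (fun i hi => ?_) ?_).ne'
  · rcases (hle i hi).lt_or_eq with h | h
    · rw [coeff_eq_zero_of_natDegree_lt h]
    · rw [← h, coeff_natDegree]
      exact (hpos i hi).le
  · obtain ⟨i, hi, h⟩ := hd
    exact ⟨i, hi, by rw [← h, coeff_natDegree]; exact hpos i hi⟩

theorem Fin.exists_eq_or_mem_Ioo {α : Type*} [LinearOrder α] {m : ℕ} {W : Fin (m + 1) → α}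
    {x : α} (hx : x ∈ Set.Icc (W 0) (W (Fin.last m))) :
    (∃ j, W j = x) ∨ ∃ j : Fin m, W j.castSucc < x ∧ x < W j.succ := by
  have hne : ({j | W j ≤ x} : Finset (Fin (m + 1))).Nonempty := ⟨0, by simpa using hx.1⟩
  set j₀ := ({j | W j ≤ x} : Finset (Fin (m + 1))).max' hne
  have hj₀ : W j₀ ≤ x := by simpa using max'_mem _ hne
  rcases hj₀.eq_or_lt with h | h
  · exact Or.inl ⟨j₀, h⟩
  obtain ⟨j, hj⟩ := Fin.exists_castSucc_eq.2 fun (hlast : j₀ = Fin.last m) => by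
    rw [hlast] at h
    exact h.not_ge hx.2
  refine Or.inr ⟨j, hj ▸ h, lt_of_not_ge fun hsucc => ?_⟩
  have : j.succ ≤ j₀ := le_max' _ _ (by simpa using hsucc)
  exact (hj ▸ this).not_gt j.castSucc_lt_succ

theorem Set.Finite.exists_strictMono_levels {ι α : Type*} [LinearOrder α] {s : Set ι}
    (hs : s.Finite) (hne : s.Nonempty) (f : ι → α) :
    ∃ (m : ℕ) (w : Fin (m + 1) → α) (jd : ι → Fin (m + 1)),
      StrictMono w ∧ (∀ a ∈ s, w (jd a) = f a) ∧ ∀ j, ∃ a ∈ s, jd a = j := by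
  classical
  set M := hs.toFinset.image f
  have hM : #M = #M - 1 + 1 :=
    (Nat.sub_add_cancel (card_pos.2 ((hne.image f).mono (by simp [M])))).symm
  set w := M.orderEmbOfFin hM
  have hrange (a : ι) (ha : a ∈ s) : ∃ j, w j = f a := by
    simpa [w, ← Set.mem_range, range_orderEmbOfFin, M] using ⟨a, ha, rfl⟩
  refine ⟨_, w, fun a => if h : ∃ j, w j = f a then h.choose else 0, w.strictMono,
    fun a ha => by simpa [dif_pos (hrange a ha)] using (hrange a ha).choose_spec, fun j => ?_⟩
  obtain ⟨a, ha, hwa⟩ := Finset.mem_image.1 (orderEmbOfFin_mem M hM j)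
  rw [hs.mem_toFinset] at ha
  refine ⟨a, ha, w.injective ?_⟩
  show w (if h : ∃ j, w j = f a then h.choose else 0) = w j
  rw [dif_pos (hrange a ha), (hrange a ha).choose_spec, hwa]

theorem exists_mem_le_and_le_mem {P : Type*} [Finite P] [PartialOrder P] {A : Set P}
    (hmin : ∀ p, IsMin p → p ∈ A) (hmax : ∀ p, IsMax p → p ∈ A) (p : P) :
    ∃ a ∈ A, ∃ b ∈ A, a ≤ p ∧ p ≤ b := by
  obtain ⟨a, hap, ha⟩ := Finite.exists_le_minimal (p := fun _ : P => True) (a := p) trivial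
  obtain ⟨b, hpb, hb⟩ := Finite.exists_le_maximal (p := fun _ : P => True) (a := p) trivial
  exact ⟨a, hmin a (minimal_true.1 ha), b, hmax b (maximal_true.1 hb), hap, hpb⟩

section GenericPoints

variable {ι : Type*} [Fintype ι]

theorem card_image_lt_card_image_of_factorsThrough {β γ : Type*} [DecidableEq β]
    [DecidableEq γ] {f : ι → β} {g : ι → γ} (hfg : Function.FactorsThrough f g) {p q : ι}
    (hf : f p = f q) (hg : g p ≠ g q) : #(univ.image f) < #(univ.image g) := by
  set h := Function.extend g f fun _ => f p
  have hfh : univ.image f = (univ.image g).image h := by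
    rw [image_image]
    exact image_congr fun x _ => (hfg.extend_apply (fun _ => f p) x).symm
  rw [hfh]
  refine card_image_le.lt_of_ne fun heq => hg (card_image_iff.1 heq ?_ ?_ ?_) <;>
    simp [h, hfg.extend_apply, hf]

theorem exists_mem_Ioo_forall_ne (f g : ι → ℝ) :
    ∃ t ∈ Set.Ioo (0 : ℝ) 1, ∀ x y, f x ≠ f y →
      (1 - t) * f x + t * g x ≠ (1 - t) * f y + t * g y := by
  -- a pair `x, y` separated by `f` is merged for at most one `t`
  obtain ⟨t, ht, htbad⟩ := ((Set.Ioo_infinite (zero_lt_one' ℝ)).sdiff (Set.finite_range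
    fun z : ι × ι => (f z.1 - f z.2) / ((f z.1 - f z.2) - (g z.1 - g z.2)))).nonempty
  refine ⟨t, ht, fun x y hxy heq => htbad ⟨(x, y), ?_⟩⟩
  have hd : f x - f y ≠ 0 := sub_ne_zero.2 hxy
  have hD : (f x - f y) - (g x - g y) ≠ 0 := fun hD => hd (by linear_combination heq + t * hD)
  rw [div_eq_iff hD]
  linear_combination heq

variable {O : Set (ι → ℝ)}

theorem exists_isMaxOn_card_image (hO : O.Nonempty) :
    ∃ φ ∈ O, IsMaxOn (fun ψ => #(univ.image ψ)) O φ := by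
  have hfin : ((fun ψ : ι → ℝ => #(univ.image ψ)) '' O).Finite :=
    (Set.finite_Iic (Fintype.card ι)).subset <| by
      rintro _ ⟨ψ, -, rfl⟩
      exact card_image_le
  obtain ⟨_, ⟨φ, hφ, rfl⟩, hmax⟩ := Set.exists_max_image _ id hfin (hO.image _)
  exact ⟨φ, hφ, isMaxOn_iff.2 fun ψ hψ => hmax _ ⟨ψ, hψ, rfl⟩⟩

theorem Convex.apply_eq_apply_of_isMaxOn_card_image (hO : Convex ℝ O) {φ ψ : ι → ℝ}
    (hφ : φ ∈ O) (hmax : IsMaxOn (fun ψ => #(univ.image ψ)) O φ) (hψ : ψ ∈ O) {p q : ι}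
    (hpq : φ p = φ q) : ψ p = ψ q := by
  by_contra hne
  obtain ⟨t, ht, hsep⟩ := exists_mem_Ioo_forall_ne φ ψ
  have hχ : (1 - t) • φ + t • ψ ∈ O := hO hφ hψ (by linarith [ht.2]) ht.1.le (by ring)
  refine (isMaxOn_iff.1 hmax _ hχ).not_gt (card_image_lt_card_image_of_factorsThrough
    (fun x y hxy => ?_) hpq ?_)
  · by_contra h
    exact hsep x y h (by simpa using hxy)
  · intro h
    simp only [Pi.add_apply, Pi.smul_apply, smul_eq_mul, hpq, add_right_inj] at h
    exact hne (mul_left_cancel₀ ht.1.ne' h)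

end GenericPoints

namespace MarkedOrder

section MarkedMaps

variable {P α : Type*} [Preorder P] [Preorder α]

def markedMaps (A : Set P) (μ : P → α) : Set (P → α) :=
  {φ | Monotone φ ∧ ∀ a ∈ A, φ a = μ a}

theorem markedOrderPolytope_eq {P : Type*} [PartialOrder P] (A : Set P) (μ : P → ℝ) :
    markedOrderPolytope P A μ = markedMaps A μ :=
  rfl

theorem markedMaps_congr {A : Set P} {μ ν : P → α} (h : ∀ a ∈ A, μ a = ν a) :
    markedMaps A μ = markedMaps A ν := by
  ext φ
  refine and_congr_right fun _ => forall₂_congr fun a ha => ?_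
  rw [h a ha]

theorem markedMaps_const_mul {c : ℝ} (hc : 0 < c) (A : Set P) (μ : P → ℝ) :
    markedMaps A (fun p => c * μ p) = c • markedMaps A μ := by
  ext φ
  rw [Set.mem_smul_set_iff_inv_smul_mem₀ hc.ne']
  refine and_congr (?_ : Monotone φ ↔ Monotone (c⁻¹ • φ)) (forall₂_congr fun a _ => ?_)
  · exact ⟨fun h => h.const_smul (inv_nonneg.2 hc.le),
      fun h => by simpa [smul_smul, hc.ne'] using h.const_smul hc.le⟩
  · simp only [Pi.smul_apply, smul_eq_mul]
    constructor <;> intro h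
    · rw [h, inv_mul_cancel_left₀ hc.ne']
    · rw [← h, mul_inv_cancel_left₀ hc.ne']

theorem convex_markedMaps (A : Set P) (μ : P → ℝ) : Convex ℝ (markedMaps A μ) := by
  rintro φ ⟨hφ, hφA⟩ ψ ⟨hψ, hψA⟩ s t hs ht hst
  refine ⟨(hφ.const_smul hs).add (hψ.const_smul ht), fun a ha => ?_⟩
  simp [hφA a ha, hψA a ha, ← add_mul, hst]

theorem mem_Icc_of_mem_markedMaps {A : Set P} {m : ℕ} {W : Fin (m + 1) → α}
    {jd : P → Fin (m + 1)} (hW : Monotone W) (hA : ∀ p, ∃ a ∈ A, ∃ b ∈ A, a ≤ p ∧ p ≤ b)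
    {φ : P → α} (hφ : φ ∈ markedMaps A (W ∘ jd)) (p : P) :
    φ p ∈ Set.Icc (W 0) (W (Fin.last m)) := by
  obtain ⟨a, ha, b, hb, hap, hpb⟩ := hA p
  refine ⟨?_, ?_⟩
  · calc W 0 ≤ W (jd a) := hW (Fin.zero_le _)
      _ = φ a := (hφ.2 a ha).symm
      _ ≤ φ p := hφ.1 hap
  · calc φ p ≤ φ b := hφ.1 hpb
      _ = W (jd b) := hφ.2 b hb
      _ ≤ W (Fin.last m) := hW (Fin.le_last _)

end MarkedMaps

/-! ## Patterns -/

/-- Where a value of an order preserving map sits relative to `m + 1` marked levels: on the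
level `j`, or at the `i`-th place strictly inside the gap between the levels `j` and `j + 1`. -/
inductive Slot (m : ℕ)
  | level (j : Fin (m + 1))
  | inner (j : Fin m) (i : ℕ)

namespace Slot

variable {m : ℕ}

def key : Slot m → ℕ ×ₗ ℕ
  | level j => toLex (j, 0)
  | inner j i => toLex (j, i + 1)

theorem key_injective : Function.Injective (key (m := m)) := by
  rintro (j | ⟨j, i⟩) (j' | ⟨j', i'⟩) h <;> simp only [key, toLex_inj, Prod.mk.injEq] at h
  · rw [Fin.ext h.1]
  · omega
  · omega
  · rw [Fin.ext h.1, show i = i' by omega]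

instance : LinearOrder (Slot m) :=
  LinearOrder.lift' key key_injective

theorem lt_iff_key_lt {x y : Slot m} : x < y ↔ x.key < y.key :=
  Iff.rfl

theorem eq_inner_of_level_lt_of_lt_level {j : Fin m} {x : Slot m}
    (h₁ : level j.castSucc < x) (h₂ : x < level j.succ) : ∃ i, x = inner j i := by
  rw [lt_iff_key_lt] at h₁ h₂
  rcases x with j' | ⟨j', i⟩ <;>
    simp only [key, Prod.Lex.lt_iff, ofLex_toLex, Fin.val_castSucc, Fin.val_succ] at h₁ h₂
  · omega
  · exact ⟨i, by rw [Fin.ext (by omega : j'.val = j.val)]⟩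

def value {α : Type*} (W : Fin (m + 1) → α) (u : Fin m → ℕ → α) : Slot m → α
  | level j => W j
  | inner j i => u j i

def IsUsed (k : Fin m → ℕ) : Slot m → Prop
  | level _ => True
  | inner j i => i < k j

end Slot

open Slot

variable {m : ℕ} {α : Type*}

structure IsGapFilling [Preorder α] (W : Fin (m + 1) → α) (k : Fin m → ℕ) (u : Fin m → ℕ → α) : Prop where
  strictMonoOn (j : Fin m) : StrictMonoOn (u j) (Set.Iio (k j))
  mem_Ioo (j : Fin m) {i : ℕ} : i < k j → u j i ∈ Set.Ioo (W j.castSucc) (W j.succ)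

theorem Slot.value_strictMonoOn [Preorder α] {W : Fin (m + 1) → α} {k : Fin m → ℕ} {u : Fin m → ℕ → α}
    (hW : StrictMono W) (hu : IsGapFilling W k u) :
    StrictMonoOn (value W u) {x | x.IsUsed k} := by
  have hlo : ∀ {j : Fin (m + 1)} {j' : Fin m}, j.val ≤ j'.val → W j ≤ W j'.castSucc :=
    fun h => hW.monotone (Fin.le_def.2 h)
  have hhi : ∀ {j : Fin m} {j' : Fin (m + 1)}, j.val < j'.val → W j.succ ≤ W j' :=
    fun h => hW.monotone (Fin.le_def.2 (by simp only [Fin.val_succ]; omega))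
  rintro (j | ⟨j, i⟩) hx (j' | ⟨j', i'⟩) hy hlt <;>
    simp only [lt_iff_key_lt, key, Prod.Lex.lt_iff, ofLex_toLex] at hlt <;>
    simp only [value, IsUsed, Set.mem_ofPred_eq] at hx hy ⊢
  · exact hW (Fin.lt_def.2 (by omega))
  · exact (hlo (by omega)).trans_lt (hu.mem_Ioo j' hy).1
  · exact (hu.mem_Ioo j hx).2.trans_le (hhi (by omega))
  · rcases hlt with hlt | ⟨hj, hi⟩
    · calc u j i < W j.succ := (hu.mem_Ioo j hx).2
        _ ≤ W j'.castSucc := hhi (by simpa using hlt)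
        _ < u j' i' := (hu.mem_Ioo j' hy).1
    · obtain rfl : j = j' := Fin.ext hj
      exact hu.strictMonoOn j (Set.mem_Iio.2 hx) (Set.mem_Iio.2 hy) (by omega)

section Pattern

variable {P : Type*} [PartialOrder P]

/-- The combinatorial type of an order preserving map. -/
@[ext]
structure Pattern (A : Set P) (jd : P → Fin (m + 1)) where
  k : Fin m → ℕ
  slot : P → Slot m
  monotone_slot : Monotone slot
  slot_eq_level (a : P) : a ∈ A → slot a = level (jd a)
  exists_slot_eq_inner_iff (j : Fin m) (i : ℕ) : (∃ p, slot p = inner j i) ↔ i < k j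

namespace Pattern

variable {A : Set P} {jd : P → Fin (m + 1)} (π : Pattern A jd)

theorem isUsed_slot (p : P) : (π.slot p).IsUsed π.k := by
  rcases h : π.slot p with j | ⟨j, i⟩
  · trivial
  · exact (π.exists_slot_eq_inner_iff j i).1 ⟨p, h⟩

theorem k_le_card [Finite P] (j : Fin m) : π.k j ≤ Nat.card P := by
  choose f hf using fun i : Fin (π.k j) => (π.exists_slot_eq_inner_iff j i).2 i.2
  simpa using Nat.card_le_card_of_injective f fun i i' h =>
    Fin.ext (inner.inj ((hf i).symm.trans ((congrArg π.slot h).trans (hf i')))).2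

instance [Finite P] : Finite (Pattern A jd) := by
  let slots : Set (Slot m) :=
    Set.range level ∪ Set.image2 inner Set.univ (Set.Iio (Nat.card P))
  have hslots : slots.Finite :=
    (Set.finite_range _).union (Set.finite_univ.image2 _ (Set.finite_Iio _))
  refine Set.finite_univ_iff.1 <| Set.Finite.of_finite_image
    (f := fun π : Pattern A jd => (π.k, π.slot)) ?_
    fun π _ π' _ h => Pattern.ext (congrArg Prod.fst h) (congrArg Prod.snd h)
  refine ((Set.Finite.pi fun _ => Set.finite_Iic (Nat.card P)).prod
    (Set.Finite.pi fun _ => hslots)).subset ?_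
  rintro _ ⟨π, -, rfl⟩
  refine ⟨fun j _ => π.k_le_card j, fun p _ => ?_⟩
  show π.slot p ∈ slots
  have hp := π.isUsed_slot p
  generalize π.slot p = x at hp ⊢
  rcases x with j | ⟨j, i⟩
  · exact Or.inl ⟨j, rfl⟩
  · exact Or.inr ⟨j, trivial, i, lt_of_lt_of_le hp (π.k_le_card j), rfl⟩

noncomputable instance [Finite P] : Fintype (Pattern A jd) :=
  Fintype.ofFinite _

def realize {β : Type*} (W : Fin (m + 1) → β) (u : Fin m → ℕ → β) (p : P) : β :=
  (π.slot p).value W u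

theorem realize_mem [Preorder α] {W : Fin (m + 1) → α} {u : Fin m → ℕ → α} (hW : StrictMono W)
    (hu : IsGapFilling W π.k u) : π.realize W u ∈ markedMaps A (W ∘ jd) :=
  ⟨fun p q hpq => (value_strictMonoOn hW hu).monotoneOn (π.isUsed_slot p) (π.isUsed_slot q)
      (π.monotone_slot hpq),
    fun a ha => by simp [realize, π.slot_eq_level a ha, value]⟩

end Pattern

end Pattern

section GapValues

variable [LinearOrder α] {W : Fin (m + 1) → α} {s : Fin m → Finset α} {j : Fin m} {i : ℕ}

def gapValues {P : Type*} [Fintype P] (W : Fin (m + 1) → α) (φ : P → α) (j : Fin m) :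
    Finset α :=
  {x ∈ univ.image φ | W j.castSucc < x ∧ x < W j.succ}

theorem mem_gapValues {P : Type*} [Fintype P] {φ : P → α} {x : α} :
    x ∈ gapValues W φ j ↔ (∃ p, φ p = x) ∧ W j.castSucc < x ∧ x < W j.succ := by
  simp [gapValues]

/-- The elements of `s j` in increasing order (`W 0` past the end). -/
def gapEnum (W : Fin (m + 1) → α) (s : Fin m → Finset α) (j : Fin m) (i : ℕ) : α :=
  if h : i < #(s j) then (s j).orderEmbOfFin rfl ⟨i, h⟩ else W 0

theorem gapEnum_of_lt (h : i < #(s j)) : gapEnum W s j i = (s j).orderEmbOfFin rfl ⟨i, h⟩ :=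
  dif_pos h

theorem mem_iff_exists_gapEnum {x : α} : x ∈ s j ↔ ∃ i < #(s j), gapEnum W s j i = x := by
  constructor
  · intro hx
    obtain ⟨i, rfl⟩ : x ∈ Set.range ((s j).orderEmbOfFin rfl) := by
      rwa [range_orderEmbOfFin]
    exact ⟨i, i.2, gapEnum_of_lt i.2⟩
  · rintro ⟨i, hi, rfl⟩
    rw [gapEnum_of_lt hi]
    exact orderEmbOfFin_mem _ _ _

theorem isGapFilling_gapEnum (hs : ∀ j, ∀ x ∈ s j, W j.castSucc < x ∧ x < W j.succ) :
    IsGapFilling W (fun j => #(s j)) (gapEnum W s) where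
  strictMonoOn j i hi i' hi' hii' := by
    rw [gapEnum_of_lt hi, gapEnum_of_lt hi']
    exact ((s j).orderEmbOfFin rfl).strictMono hii'
  mem_Ioo j i hi := hs j _ (mem_iff_exists_gapEnum.2 ⟨i, hi, rfl⟩)

theorem image_gapEnum : (range #(s j)).image (gapEnum W s j) = s j := by
  ext x
  simp [mem_iff_exists_gapEnum (W := W) (s := s)]

theorem gapEnum_eq_of_eq_image {k : Fin m → ℕ} {u : Fin m → ℕ → α}
    (hu : StrictMonoOn (u j) (Set.Iio (k j))) (hs : s j = (range (k j)).image (u j))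
    (hi : i < k j) : gapEnum W s j i = u j i := by
  have hcard : #(s j) = k j := by
    rw [hs, card_image_of_injOn (by simpa using hu.injOn), card_range]
  rw [gapEnum_of_lt (hcard ▸ hi)]
  refine (congrFun (orderEmbOfFin_unique rfl (f := fun i : Fin #(s j) => u j i)
    (fun i => ?_) fun i i' h => hu (by simp [← hcard]) (by simp [← hcard]) h) _).symm
  simp only [hs, mem_image, mem_range]
  exact ⟨i, hcard ▸ i.2, rfl⟩

end GapValues

section PatternOf

variable [LinearOrder α] {P : Type*} [Fintype P] {W : Fin (m + 1) → α} {φ : P → α}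

theorem isGapFilling_gapValues :
    IsGapFilling W (fun j => #(gapValues W φ j)) (gapEnum W (gapValues W φ)) :=
  isGapFilling_gapEnum fun _ _ hx => (mem_gapValues.1 hx).2

theorem exists_isUsed_value_eq (hφ : ∀ p, φ p ∈ Set.Icc (W 0) (W (Fin.last m))) (p : P) :
    ∃ x : Slot m, x.IsUsed (fun j => #(gapValues W φ j)) ∧
      x.value W (gapEnum W (gapValues W φ)) = φ p := by
  rcases Fin.exists_eq_or_mem_Ioo (hφ p) with ⟨j, hj⟩ | ⟨j, hj⟩
  · exact ⟨level j, trivial, hj⟩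
  · obtain ⟨i, hi, he⟩ := mem_iff_exists_gapEnum.1 (mem_gapValues.2 ⟨⟨p, rfl⟩, hj⟩)
    exact ⟨inner j i, hi, he⟩

open Classical in
noncomputable def slotOf (W : Fin (m + 1) → α) (φ : P → α) (p : P) : Slot m :=
  if h : ∃ x : Slot m, x.IsUsed (fun j => #(gapValues W φ j)) ∧
      x.value W (gapEnum W (gapValues W φ)) = φ p then h.choose
  else level 0

theorem slotOf_spec (hφ : ∀ p, φ p ∈ Set.Icc (W 0) (W (Fin.last m))) (p : P) :
    (slotOf W φ p).IsUsed (fun j => #(gapValues W φ j)) ∧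
      (slotOf W φ p).value W (gapEnum W (gapValues W φ)) = φ p := by
  have h := exists_isUsed_value_eq hφ p
  rw [slotOf, dif_pos h]
  exact h.choose_spec

theorem slotOf_eq_iff (hW : StrictMono W) (hφ : ∀ p, φ p ∈ Set.Icc (W 0) (W (Fin.last m)))
    {p : P} {x : Slot m} (hx : x.IsUsed (fun j => #(gapValues W φ j))) :
    slotOf W φ p = x ↔ x.value W (gapEnum W (gapValues W φ)) = φ p :=
  ⟨fun h => h ▸ (slotOf_spec hφ p).2, fun h =>
    (value_strictMonoOn hW isGapFilling_gapValues).injOn (slotOf_spec hφ p).1 hx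
      ((slotOf_spec hφ p).2.trans h.symm)⟩

variable [PartialOrder P] {A : Set P} {jd : P → Fin (m + 1)}

noncomputable def patternOf (hW : StrictMono W) (hA : ∀ p, ∃ a ∈ A, ∃ b ∈ A, a ≤ p ∧ p ≤ b)
    (hφ : φ ∈ markedMaps A (W ∘ jd)) : Pattern A jd where
  k j := #(gapValues W φ j)
  slot := slotOf W φ
  monotone_slot p q hpq := by
    have hspec := slotOf_spec (mem_Icc_of_mem_markedMaps hW.monotone hA hφ)
    rw [← (value_strictMonoOn hW isGapFilling_gapValues).le_iff_le (hspec p).1 (hspec q).1,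
      (hspec p).2, (hspec q).2]
    exact hφ.1 hpq
  slot_eq_level a ha :=
    (slotOf_eq_iff (x := level (jd a)) hW (mem_Icc_of_mem_markedMaps hW.monotone hA hφ)
      trivial).2 (hφ.2 a ha).symm
  exists_slot_eq_inner_iff j i := by
    refine ⟨fun ⟨p, hp⟩ => ?_, fun hi => ?_⟩
    · have := (slotOf_spec (mem_Icc_of_mem_markedMaps hW.monotone hA hφ) p).1
      rwa [hp] at this
    obtain ⟨⟨p, hp⟩, -⟩ := mem_gapValues.1 (mem_iff_exists_gapEnum.2 ⟨i, hi, rfl⟩)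
    exact ⟨p, (slotOf_eq_iff (x := inner j i) hW (mem_Icc_of_mem_markedMaps hW.monotone hA hφ)
      hi).2 hp.symm⟩

variable (hW : StrictMono W) (hA : ∀ p, ∃ a ∈ A, ∃ b ∈ A, a ≤ p ∧ p ≤ b)
include hW hA

theorem realize_patternOf (hφ : φ ∈ markedMaps A (W ∘ jd)) :
    (patternOf hW hA hφ).realize W (gapEnum W (gapValues W φ)) = φ :=
  funext fun p => (slotOf_spec (mem_Icc_of_mem_markedMaps hW.monotone hA hφ) p).2

omit hA in
theorem gapValues_realize (π : Pattern A jd) {u : Fin m → ℕ → α} (hu : IsGapFilling W π.k u)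
    (j : Fin m) : gapValues W (π.realize W u) j = (range (π.k j)).image (u j) := by
  ext x
  rw [mem_gapValues, mem_image]
  constructor
  · rintro ⟨⟨p, rfl⟩, h₁, h₂⟩
    have hmono := value_strictMonoOn hW hu
    have hused (j) : (level j : Slot m) ∈ {x | x.IsUsed π.k} := trivial
    obtain ⟨i, hi⟩ := eq_inner_of_level_lt_of_lt_level
      ((hmono.lt_iff_lt (hused _) (π.isUsed_slot p)).1 h₁)
      ((hmono.lt_iff_lt (π.isUsed_slot p) (hused _)).1 h₂)
    have hp := π.isUsed_slot p
    rw [hi] at hp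
    exact ⟨i, mem_range.2 hp, by simp [Pattern.realize, hi, value]⟩
  · rintro ⟨i, hi, rfl⟩
    obtain ⟨p, hp⟩ := (π.exists_slot_eq_inner_iff j i).2 (mem_range.1 hi)
    exact ⟨⟨p, by simp [Pattern.realize, hp, value]⟩, hu.mem_Ioo j (mem_range.1 hi)⟩

theorem patternOf_realize (π : Pattern A jd) {u : Fin m → ℕ → α} (hu : IsGapFilling W π.k u) :
    patternOf hW hA (π.realize_mem hW hu) = π := by
  have hk : (fun j => #(gapValues W (π.realize W u) j)) = π.k := funext fun j => by
    rw [gapValues_realize hW π hu,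
      card_image_of_injOn (by simpa using (hu.strictMonoOn j).injOn), card_range]
  ext1
  · exact hk
  · funext p
    refine (slotOf_eq_iff hW (mem_Icc_of_mem_markedMaps hW.monotone hA (π.realize_mem hW hu))
      (hk ▸ π.isUsed_slot p)).2 ?_
    have hp := π.isUsed_slot p
    simp only [Pattern.realize]
    generalize π.slot p = x at hp ⊢
    rcases x with j | ⟨j, i⟩
    · rfl
    · exact gapEnum_eq_of_eq_image (hu.strictMonoOn j) (gapValues_realize hW π hu j) hp

end PatternOf

/-! ## Counting integer points -/

section Count

variable {P : Type*} [Fintype P] [PartialOrder P] {A : Set P} {jd : P → Fin (m + 1)}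
  [LinearOrder α] [LocallyFiniteOrder α] {W : Fin (m + 1) → α}

theorem isGapFilling_gapEnum_powersetCard {k : Fin m → ℕ}
    (g : ∀ j, powersetCard (k j) (Ioo (W j.castSucc) (W j.succ))) :
    IsGapFilling W k (gapEnum W fun j => (g j).1) := by
  have hk (j : Fin m) : #(g j).1 = k j := (mem_powersetCard.1 (g j).2).2
  simpa only [hk] using isGapFilling_gapEnum (W := W) (s := fun j => (g j).1)
    fun j _ hx => mem_Ioo.1 ((mem_powersetCard.1 (g j).2).1 hx)

variable (hW : StrictMono W) (hA : ∀ p, ∃ a ∈ A, ∃ b ∈ A, a ≤ p ∧ p ≤ b)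

noncomputable def patternFiberEquiv (π : Pattern A jd) :
    {φ : markedMaps A (W ∘ jd) // patternOf hW hA φ.2 = π} ≃
      ∀ j, powersetCard (π.k j) (Ioo (W j.castSucc) (W j.succ)) where
  toFun φ j := ⟨gapValues W φ.1.1 j, mem_powersetCard.2
    ⟨fun _ hx => mem_Ioo.2 (mem_gapValues.1 hx).2, (congrFun (congrArg Pattern.k φ.2) j :)⟩⟩
  invFun g := ⟨⟨_, π.realize_mem hW (isGapFilling_gapEnum_powersetCard g)⟩,
    patternOf_realize hW hA π (isGapFilling_gapEnum_powersetCard g)⟩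
  left_inv := by
    rintro ⟨⟨φ, hφ⟩, rfl⟩
    exact Subtype.ext (Subtype.ext (realize_patternOf hW hA hφ))
  right_inv g := by
    funext j
    refine Subtype.ext (?_ : gapValues W (π.realize W _) j = (g j).1)
    rw [gapValues_realize hW π (isGapFilling_gapEnum_powersetCard g)]
    simpa only [(mem_powersetCard.1 (g j).2).2] using
      image_gapEnum (W := W) (s := fun j => (g j).1) (j := j)

include hW hA in
theorem card_markedMaps :
    Nat.card (markedMaps A (W ∘ jd)) =
      ∑ π : Pattern A jd, ∏ j, Nat.choose #(Ioo (W j.castSucc) (W j.succ)) (π.k j) := by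
  rw [← Nat.card_congr
      (Equiv.sigmaFiberEquiv fun φ : markedMaps A (W ∘ jd) => patternOf hW hA φ.2),
    Nat.card_congr (Equiv.sigmaCongrRight (patternFiberEquiv hW hA)), Nat.card_sigma]
  simp [card_powersetCard]

end Count

section Polynomials

open scoped Nat

/-- The polynomial `x ↦ (δ x - 1).choose k`. -/
noncomputable def binomialPoly (δ : ℝ) (k : ℕ) : ℝ[X] :=
  C (k ! : ℝ)⁻¹ * (descPochhammer ℝ k).comp (C δ * X - 1)

variable {δ : ℝ}

theorem natDegree_binomialPoly (hδ : δ ≠ 0) (k : ℕ) : (binomialPoly δ k).natDegree = k := by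
  have hlin : (C δ * X - 1).natDegree = 1 := by
    rw [← C_1, natDegree_sub_C, natDegree_C_mul_X δ hδ]
  rw [binomialPoly, natDegree_C_mul (by positivity), natDegree_comp, hlin,
    descPochhammer_natDegree, mul_one]

theorem leadingCoeff_binomialPoly_pos (hδ : 0 < δ) (k : ℕ) :
    0 < (binomialPoly δ k).leadingCoeff := by
  have hlin : C δ * X - 1 = C δ * X + C (-1) := by simp [sub_eq_add_neg]
  rw [binomialPoly, leadingCoeff_mul, leadingCoeff_C, hlin,
    leadingCoeff_comp (by rw [natDegree_linear hδ.ne']; exact one_ne_zero),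
    leadingCoeff_linear hδ.ne', (monic_descPochhammer ℝ k).leadingCoeff, one_mul]
  positivity

theorem eval_binomialPoly {x : ℝ} {N : ℕ} (h : δ * x - 1 = N) (k : ℕ) :
    (binomialPoly δ k).eval x = N.choose k := by
  rw [binomialPoly, eval_mul, eval_C, eval_comp]
  simp only [eval_sub, eval_mul, eval_C, eval_X, eval_one, h]
  rw [descPochhammer_eval_eq_descFactorial, Nat.descFactorial_eq_factorial_mul_choose,
    Nat.cast_mul, inv_mul_cancel_left₀ (by positivity)]

variable {P : Type*} [PartialOrder P] {A : Set P} {jd : P → Fin (m + 1)}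

noncomputable def Pattern.countingPoly (π : Pattern A jd) (w : Fin (m + 1) → ℤ) : ℝ[X] :=
  ∏ j, binomialPoly (w j.succ - w j.castSucc : ℤ) (π.k j)

variable {w : Fin (m + 1) → ℤ} (hw : StrictMono w) (π : Pattern A jd)
include hw

theorem gap_pos (j : Fin m) : (0 : ℝ) < (w j.succ - w j.castSucc : ℤ) := by
  exact_mod_cast sub_pos.2 (hw j.castSucc_lt_succ)

theorem natDegree_countingPoly : (π.countingPoly w).natDegree = ∑ j, π.k j := by
  rw [Pattern.countingPoly, natDegree_prod _ _ fun j _ =>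
    leadingCoeff_ne_zero.1 (leadingCoeff_binomialPoly_pos (gap_pos hw j) _).ne']
  exact sum_congr rfl fun j _ => natDegree_binomialPoly (gap_pos hw j).ne' _

theorem leadingCoeff_countingPoly_pos : 0 < (π.countingPoly w).leadingCoeff := by
  rw [Pattern.countingPoly, leadingCoeff_prod]
  exact prod_pos fun j _ => leadingCoeff_binomialPoly_pos (gap_pos hw j) _

theorem eval_countingPoly {n : ℕ} (hn : 0 < n) :
    (π.countingPoly w).eval (n : ℝ) =
      ∏ j, (Nat.choose #(Ioo (n * w j.castSucc) (n * w j.succ)) (π.k j) : ℝ) := by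
  rw [Pattern.countingPoly, eval_prod]
  refine prod_congr rfl fun j _ => eval_binomialPoly ?_ _
  have hpos : 0 < (n : ℤ) * (w j.succ - w j.castSucc) :=
    mul_pos (by exact_mod_cast hn) (sub_pos.2 (hw j.castSucc_lt_succ))
  have hN := Int.toNat_of_nonneg (show 0 ≤ (n : ℤ) * (w j.succ - w j.castSucc) - 1 by omega)
  rw [← Int.cast_inj (α := ℝ)] at hN
  rw [Int.card_Ioo, ← mul_sub]
  push_cast at hN ⊢
  linarith

end Polynomials

/-! ## Dimension -/

section Dimension

variable {P : Type*} [PartialOrder P] {A : Set P} {jd : P → Fin (m + 1)}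

namespace Pattern

variable (π : Pattern A jd)

noncomputable def innerIndicator (x : Σ j, Fin (π.k j)) : P → ℝ :=
  {p | π.slot p = inner x.1 x.2}.indicator 1

theorem inner_eq_inner_iff {x y : Σ j, Fin (π.k j)} :
    (inner x.1 x.2 : Slot m) = inner y.1 y.2 ↔ x = y := by
  refine ⟨fun h => ?_, fun h => h ▸ rfl⟩
  obtain ⟨h₁, h₂⟩ := inner.inj h
  rcases x with ⟨j, i⟩
  rcases y with ⟨j', i'⟩
  obtain rfl : j = j' := h₁
  obtain rfl : i = i' := Fin.ext h₂
  rfl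

theorem innerIndicator_apply {p : P} {x : Σ j, Fin (π.k j)} (hp : π.slot p = inner x.1 x.2)
    (y : Σ j, Fin (π.k j)) : π.innerIndicator y p = if x = y then 1 else 0 := by
  simp only [innerIndicator, Set.indicator_apply, Set.mem_ofPred_eq, hp, π.inner_eq_inner_iff,
    Pi.one_apply]

theorem linearIndependent_innerIndicator : LinearIndependent ℝ π.innerIndicator := by
  rw [Fintype.linearIndependent_iff]
  intro g hg x
  obtain ⟨p, hp⟩ := (π.exists_slot_eq_inner_iff x.1 x.2).2 x.2.2
  simpa [π.innerIndicator_apply hp] using congrFun hg p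

theorem finrank_span_innerIndicator :
    finrank ℝ (Submodule.span ℝ (Set.range π.innerIndicator)) = ∑ j, π.k j := by
  simp [finrank_span_eq_card π.linearIndependent_innerIndicator]

theorem mem_span_innerIndicator {χ : P → ℝ} (hfib : ∀ p q, π.slot p = π.slot q → χ p = χ q)
    (hlevel : ∀ p j, π.slot p = level j → χ p = 0) :
    χ ∈ Submodule.span ℝ (Set.range π.innerIndicator) := by
  choose rep hrep using fun x : Σ j, Fin (π.k j) => (π.exists_slot_eq_inner_iff x.1 x.2).2 x.2.2
  have hχ : χ = ∑ x, χ (rep x) • π.innerIndicator x := by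
    funext p
    have hp := π.isUsed_slot p
    rcases hs : π.slot p with j | ⟨j, i⟩
    · simp [innerIndicator, Set.indicator, hs, hlevel p j hs]
    · rw [hs] at hp
      set x : Σ j, Fin (π.k j) := ⟨j, ⟨i, hp⟩⟩
      have hx : π.slot p = inner x.1 x.2 := hs
      simp [π.innerIndicator_apply hx, hfib _ _ ((hrep x).trans hx.symm)]
  rw [hχ]
  exact Submodule.sum_mem _ fun x _ => Submodule.smul_mem _ _ (Submodule.subset_span ⟨x, rfl⟩)

end Pattern

/-- Spreads `k j` values evenly over gap `j`, the `i`-th one shifted right by the fraction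
`e j i ∈ [0, 1)` of the spacing. -/
noncomputable def evenFilling (W : Fin (m + 1) → ℝ) (k : Fin m → ℕ) (e : Fin m → ℕ → ℝ)
    (j : Fin m) (i : ℕ) : ℝ :=
  W j.castSucc + (i + 1 + e j i) * ((W j.succ - W j.castSucc) / (k j + 1))

theorem isGapFilling_evenFilling {W : Fin (m + 1) → ℝ} (hW : StrictMono W) (k : Fin m → ℕ)
    {e : Fin m → ℕ → ℝ} (he : ∀ j i, e j i ∈ Set.Ico 0 1) :
    IsGapFilling W k (evenFilling W k e) where
  strictMonoOn j i _ i' _ hii' := by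
    have hstep : 0 < (W j.succ - W j.castSucc) / (k j + 1) :=
      div_pos (sub_pos.2 (hW j.castSucc_lt_succ)) (by positivity)
    have : (i : ℝ) + 1 ≤ i' := by exact_mod_cast hii'
    simp only [evenFilling, add_lt_add_iff_left]
    exact mul_lt_mul_of_pos_right (by linarith [(he j i).2, (he j i').1]) hstep
  mem_Ioo j i hi := by
    have hstep : 0 < (W j.succ - W j.castSucc) / (k j + 1) :=
      div_pos (sub_pos.2 (hW j.castSucc_lt_succ)) (by positivity)
    have hk : (i : ℝ) + 1 ≤ k j := by exact_mod_cast hi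
    have hcancel : ((k j : ℝ) + 1) * ((W j.succ - W j.castSucc) / (k j + 1)) =
        W j.succ - W j.castSucc := mul_div_cancel₀ _ (by positivity)
    have hlow := mul_pos (by linarith [(he j i).1] : (0 : ℝ) < i + 1 + e j i) hstep
    have hhigh := mul_lt_mul_of_pos_right
      (by linarith [(he j i).2] : (i : ℝ) + 1 + e j i < k j + 1) hstep
    simp only [evenFilling, Set.mem_Ioo]
    constructor <;> linarith

namespace Pattern

variable (π : Pattern A jd) {W : Fin (m + 1) → ℝ} (hW : StrictMono W)
include hW

theorem innerIndicator_mem_direction (x : Σ j, Fin (π.k j)) :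
    π.innerIndicator x ∈ (affineSpan ℝ (markedMaps A (W ∘ jd))).direction := by
  set step := (W x.1.succ - W x.1.castSucc) / (π.k x.1 + 1)
  have hstep : 0 < step := div_pos (sub_pos.2 (hW x.1.castSucc_lt_succ)) (by positivity)
  let bump (j : Fin m) (i : ℕ) : ℝ := if (inner j i : Slot m) = inner x.1 x.2 then 1 / 2 else 0
  have hbump (j : Fin m) (i : ℕ) : bump j i ∈ Set.Ico 0 1 := by
    simp only [bump]
    split_ifs <;> norm_num
  have hmem {e : Fin m → ℕ → ℝ} (he : ∀ j i, e j i ∈ Set.Ico 0 1) :=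
    subset_affineSpan ℝ _ (π.realize_mem hW (isGapFilling_evenFilling hW π.k he))
  have hdiff : π.realize W (evenFilling W π.k bump) -ᵥ π.realize W (evenFilling W π.k 0) =
      (step / 2) • π.innerIndicator x := by
    funext p
    rcases hs : π.slot p with j | ⟨j, i⟩
    · simp [realize, hs, value, innerIndicator]
    · by_cases h : (inner j i : Slot m) = inner x.1 x.2
      · obtain ⟨rfl, rfl⟩ := inner.inj h
        simp [realize, hs, value, evenFilling, bump, innerIndicator, step]
        ring
      · have h' : ¬(j = x.1 ∧ i = x.2) := fun h' => h (by rw [h'.1, h'.2])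
        simp [realize, hs, value, evenFilling, bump, innerIndicator, h']
  have := AffineSubspace.vsub_mem_direction (hmem hbump)
    (hmem (e := 0) fun _ _ => ⟨le_rfl, one_pos⟩)
  rw [hdiff] at this
  simpa [smul_smul, hstep.ne'] using Submodule.smul_mem _ (step / 2)⁻¹ this

theorem sum_k_le_finrank [Finite P] :
    ∑ j, π.k j ≤ finrank ℝ (affineSpan ℝ (markedMaps A (W ∘ jd))).direction := by
  rw [← π.finrank_span_innerIndicator]
  exact Submodule.finrank_mono <| Submodule.span_le.2 <| Set.range_subset_iff.2
    (π.innerIndicator_mem_direction hW)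

end Pattern

theorem finrank_direction_le_of_isMaxOn [Fintype P] {W : Fin (m + 1) → ℝ} (hW : StrictMono W)
    (hA : ∀ p, ∃ a ∈ A, ∃ b ∈ A, a ≤ p ∧ p ≤ b) (hsurj : ∀ j, ∃ a ∈ A, jd a = j)
    {φ : P → ℝ} (hφ : φ ∈ markedMaps A (W ∘ jd))
    (hmax : IsMaxOn (fun ψ => #(univ.image ψ)) (markedMaps A (W ∘ jd)) φ) :
    finrank ℝ (affineSpan ℝ (markedMaps A (W ∘ jd))).direction ≤
      ∑ j, (patternOf hW hA hφ).k j := by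
  set π := patternOf hW hA hφ
  have hφπ (p : P) : φ p = (π.slot p).value W (gapEnum W (gapValues W φ)) :=
    (congrFun (realize_patternOf hW hA hφ) p).symm
  have hconst {ψ : P → ℝ} (hψ : ψ ∈ markedMaps A (W ∘ jd)) {p q : P} (h : φ p = φ q) :
      ψ p = ψ q :=
    (convex_markedMaps A _).apply_eq_apply_of_isMaxOn_card_image hφ hmax hψ h
  have hsub : markedMaps A (W ∘ jd) ⊆
      AffineSubspace.mk' φ (Submodule.span ℝ (Set.range π.innerIndicator)) := by
    intro ψ hψ
    refine AffineSubspace.mem_mk'.2 (π.mem_span_innerIndicator (fun p q h => ?_) fun p j h => ?_)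
    · have h' : φ p = φ q := by rw [hφπ, hφπ q, h]
      simp [vsub_eq_sub, h', hconst hψ h']
    · obtain ⟨a, ha, rfl⟩ := hsurj j
      have h' : φ p = φ a := by rw [hφπ, h, hφ.2 a ha]; rfl
      simp [vsub_eq_sub, h', hconst hψ h', hψ.2 a ha, hφ.2 a ha]
  calc finrank ℝ (affineSpan ℝ (markedMaps A (W ∘ jd))).direction
      ≤ finrank ℝ (Submodule.span ℝ (Set.range π.innerIndicator)) := by
        refine Submodule.finrank_mono ?_
        simpa using AffineSubspace.direction_le (affineSpan_le.2 hsub)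
    _ = ∑ j, π.k j := π.finrank_span_innerIndicator

end Dimension

section Ehrhart

variable {P : Type*} [Fintype P] [PartialOrder P] {A : Set P} {jd : P → Fin (m + 1)}
  {w : Fin (m + 1) → ℤ} (hw : StrictMono w) (hA : ∀ p, ∃ a ∈ A, ∃ b ∈ A, a ≤ p ∧ p ≤ b)
  (hsurj : ∀ j, ∃ a ∈ A, jd a = j)
include hw hA hsurj

theorem natDegree_sum_countingPoly :
    (∑ π : Pattern A jd, π.countingPoly w).natDegree =
      finrank ℝ (affineSpan ℝ (markedMaps A (((↑) ∘ w : Fin (m + 1) → ℝ) ∘ jd))).direction := by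
  have hW : StrictMono ((↑) ∘ w : Fin (m + 1) → ℝ) := fun i j h => Int.cast_lt.2 (hw h)
  rcases (markedMaps A (((↑) ∘ w : Fin (m + 1) → ℝ) ∘ jd)).eq_empty_or_nonempty with hO | hO
  · have : IsEmpty (Pattern A jd) := ⟨fun π => by
      simpa [hO] using π.realize_mem hW
        (isGapFilling_evenFilling hW π.k (e := 0) fun _ _ => ⟨le_rfl, one_pos⟩)⟩
    rw [hO, AffineSubspace.span_empty, AffineSubspace.direction_bot, finrank_bot]
    simp
  obtain ⟨φ, hφ, hmax⟩ := exists_isMaxOn_card_image hO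
  refine natDegree_sum_eq_of_leadingCoeff_pos (fun π _ => leadingCoeff_countingPoly_pos hw π)
    (fun π _ => natDegree_countingPoly hw π ▸ π.sum_k_le_finrank hW)
    ⟨patternOf hW hA hφ, mem_univ _, ?_⟩
  rw [natDegree_countingPoly hw]
  exact le_antisymm ((patternOf hW hA hφ).sum_k_le_finrank hW)
    (finrank_direction_le_of_isMaxOn hW hA hsurj hφ hmax)

theorem exists_ehrhartPoly :
    ∃ q : ℝ[X],
      q.natDegree =
        finrank ℝ (affineSpan ℝ (markedMaps A (((↑) ∘ w : Fin (m + 1) → ℝ) ∘ jd))).direction ∧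
      ∀ n : ℕ, 0 < n → q.eval (n : ℝ) = Nat.card (markedMaps A ((fun j => n * w j) ∘ jd)) := by
  refine ⟨∑ π : Pattern A jd, π.countingPoly w, natDegree_sum_countingPoly hw hA hsurj,
    fun n hn => ?_⟩
  have hWn : StrictMono fun j => (n : ℤ) * w j :=
    fun i j h => mul_lt_mul_of_pos_left (hw h) (by exact_mod_cast hn)
  rw [card_markedMaps hWn hA, eval_finsetSum]
  push_cast
  exact sum_congr rfl fun π _ => eval_countingPoly hw π hn

end Ehrhart

end MarkedOrder

open MarkedOrder

theorem stmt4_general (P : Type*) [Fintype P] [PartialOrder P] (A : Set P)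
    (hmin : ∀ p : P, IsMin p → p ∈ A) (hmax : ∀ p : P, IsMax p → p ∈ A)
    (lam : P → ℤ) :
    (∀ n : ℕ, 0 < n →
      markedOrderPolytope P A (fun p => (((n : ℤ) * lam p : ℤ) : ℝ)) =
        (n : ℝ) • markedOrderPolytope P A (fun p => (lam p : ℝ))) ∧
    ∃ q : Polynomial ℝ,
      q.natDegree =
        Module.finrank ℝ
          (affineSpan ℝ (markedOrderPolytope P A (fun p => (lam p : ℝ)))).direction ∧
      ∀ n : ℕ, 0 < n →
        q.eval (n : ℝ) =
          Nat.card {φ : P → ℤ | Monotone φ ∧ ∀ a ∈ A, φ a = (n : ℤ) * lam a} := by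
  refine ⟨fun n hn => ?_, ?_⟩
  · simpa [markedOrderPolytope_eq] using
      markedMaps_const_mul (Nat.cast_pos.2 hn) A fun p => (lam p : ℝ)
  rcases isEmpty_or_nonempty P with hP | hP
  · refine ⟨1, by simp [finrank_zero_of_subsingleton], fun n _ => ?_⟩
    rw [Nat.card_eq_one_iff_unique.2 ⟨inferInstance, ⟨isEmptyElim, isEmptyElim, isEmptyElim⟩⟩,
      Nat.cast_one, eval_one]
  have hA := exists_mem_le_and_le_mem hmin hmax
  obtain ⟨m, w, jd, hw, hwjd, hsurj⟩ := A.toFinite.exists_strictMono_levels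
    (let ⟨a, ha, _⟩ := hA (Classical.arbitrary P); ⟨a, ha⟩) lam
  obtain ⟨q, hdeg, heval⟩ := exists_ehrhartPoly hw hA hsurj
  refine ⟨q, ?_, fun n hn => ?_⟩
  · rw [hdeg, markedOrderPolytope_eq, markedMaps_congr fun a ha => ?_]
    simp [hwjd a ha]
  · rw [heval n hn, markedMaps_congr fun a ha => ?_]
    · rfl
    · simp [hwjd a ha]

/-- `O_{P,A}(nλ) = n · O_{P,A}(λ)` for all positive integers `n`, and
`n ↦ Ω_{P,A}(nλ)` agrees for positive integers `n` with a polynomial of degree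
`dim O_{P,A}(λ)`, i.e. it is the Ehrhart polynomial of `O_{P,A}(λ)`. -/
theorem stmt4 (P : Type*) [Fintype P] [PartialOrder P] (A : Set P)
    (hmin : ∀ p : P, IsMin p → p ∈ A) (hmax : ∀ p : P, IsMax p → p ∈ A)
    (lam : P → ℤ) (hlam : ∀ a ∈ A, ∀ b ∈ A, a ≤ b → lam a ≤ lam b) :
    (∀ n : ℕ, 0 < n →
      markedOrderPolytope P A (fun p => (((n : ℤ) * lam p : ℤ) : ℝ)) =
        (n : ℝ) • markedOrderPolytope P A (fun p => (lam p : ℝ))) ∧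
    ∃ q : Polynomial ℝ,
      q.natDegree =
        Module.finrank ℝ
          (affineSpan ℝ (markedOrderPolytope P A (fun p => (lam p : ℝ)))).direction ∧
      ∀ n : ℕ, 0 < n →
        q.eval (n : ℝ) =
          Nat.card {φ : P → ℤ | Monotone φ ∧ ∀ a ∈ A, φ a = (n : ℤ) * lam a} :=
  stmt4_general P A hmin hmax lam
end

section
/- Let π : ℝ^n → ℝ^d be a linear map, let r_1, …, r_k ∈ ℝ^d be linearly independent, and for each i ∈ {1, …, k} let S_i ⊆ ℝ^n be a finite nonempty set with π(s) = r_i for all s ∈ S_i. Let K ⊆ ℝ^n be the set of all nonnegative linear combinations of elements of S_1 ∪ ⋯ ∪ S_k. Then for all nonnegative reals μ_1, …, μ_k, the fiber {x ∈ K : π(x) = μ_1 r_1 + ⋯ + μ_k r_k} equals the Minkowski sum μ_1 · conv(S_1) + μ_2 · conv(S_2) + ⋯ + μ_k · conv(S_k) of the dilated convex hulls of the S_i. -/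
open scoped Pointwise

section Aux

variable {E : Type*} [AddCommGroup E] [Module ℝ E]

/-- The set of nonnegative linear combinations of elements of `T`. -/
def coneSet (T : Set E) : Set E :=
  {x | ∃ (m : ℕ) (v : Fin m → E) (cf : Fin m → ℝ),
    (∀ l, v l ∈ T) ∧ (∀ l, 0 ≤ cf l) ∧ x = ∑ l, cf l • v l}

lemma coneSet_zero_mem (T : Set E) : (0 : E) ∈ coneSet T :=
  ⟨0, Fin.elim0, Fin.elim0, fun l => l.elim0, fun l => l.elim0, by simp⟩

lemma coneSet_add_mem {T : Set E} {x y : E} (hx : x ∈ coneSet T) (hy : y ∈ coneSet T) :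
    x + y ∈ coneSet T := by
  obtain ⟨m₁, v₁, c₁, hv₁, hc₁, rfl⟩ := hx
  obtain ⟨m₂, v₂, c₂, hv₂, hc₂, rfl⟩ := hy
  refine ⟨m₁ + m₂, Fin.append v₁ v₂, Fin.append c₁ c₂, ?_, ?_, ?_⟩
  · intro l
    induction l using Fin.addCases with
    | left i => simpa [Fin.append_left] using hv₁ i
    | right i => simpa [Fin.append_right] using hv₂ i
  · intro l
    induction l using Fin.addCases with
    | left i => simpa [Fin.append_left] using hc₁ i
    | right i => simpa [Fin.append_right] using hc₂ i
  · rw [Fin.sum_univ_add]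
    simp [Fin.append_left, Fin.append_right]

lemma coneSet_smul_mem {T : Set E} {x : E} {c : ℝ} (hc : 0 ≤ c) (hx : x ∈ coneSet T) :
    c • x ∈ coneSet T := by
  obtain ⟨m, v, cf, hv, hcf, rfl⟩ := hx
  exact ⟨m, v, fun l => c * cf l, hv, fun l => mul_nonneg hc (hcf l),
    by rw [Finset.smul_sum]; simp [mul_smul]⟩

lemma coneSet_subset (T : Set E) : T ⊆ coneSet T := fun x hx =>
  ⟨1, fun _ => x, fun _ => 1, fun _ => hx, fun _ => zero_le_one, by simp⟩

lemma coneSet_convex (T : Set E) : Convex ℝ (coneSet T) := by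
  intro x hx y hy a b ha hb _
  exact coneSet_add_mem (coneSet_smul_mem ha hx) (coneSet_smul_mem hb hy)

end Aux

/-- Cayley trick for cones: if `π` maps each finite nonempty set `S_i`
to a fixed vector `r_i` of a linearly independent family, and `K` is the set of
nonnegative linear combinations of elements of `⋃ S_i`, then the fiber of `K` over
`μ_1 r_1 + ⋯ + μ_k r_k` is the Minkowski sum `μ_1 conv(S_1) + ⋯ + μ_k conv(S_k)`. -/
theorem stmt8 (n d k : ℕ) (π : (Fin n → ℝ) →ₗ[ℝ] (Fin d → ℝ))
    (r : Fin k → (Fin d → ℝ)) (hr : LinearIndependent ℝ r)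
    (S : Fin k → Set (Fin n → ℝ))
    (hSfin : ∀ i, (S i).Finite) (hSne : ∀ i, (S i).Nonempty)
    (hπS : ∀ i, ∀ s ∈ S i, π s = r i)
    (K : Set (Fin n → ℝ))
    (hK : K = {x | ∃ (m : ℕ) (v : Fin m → (Fin n → ℝ)) (cf : Fin m → ℝ),
      (∀ l, v l ∈ ⋃ i, S i) ∧ (∀ l, 0 ≤ cf l) ∧ x = ∑ l, cf l • v l})
    (μ : Fin k → ℝ) (hμ : ∀ i, 0 ≤ μ i) :
    {x ∈ K | π x = ∑ i, μ i • r i} = ∑ i : Fin k, μ i • convexHull ℝ (S i) := by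
  have hK' : K = coneSet (⋃ i, S i) := hK
  -- π is constant `r i` on conv (S i)
  have hπconv : ∀ i, ∀ y ∈ convexHull ℝ (S i), π y = r i := by
    intro i y hy
    have h1 : π y ∈ π '' convexHull ℝ (S i) := Set.mem_image_of_mem _ hy
    rw [π.image_convexHull] at h1
    have h2 : convexHull ℝ (π '' S i) ⊆ {r i} := by
      apply convexHull_min _ (convex_singleton _)
      rintro _ ⟨s, hs, rfl⟩
      exact hπS i s hs
    exact h2 h1
  ext x
  simp only [Set.mem_setOf_eq, Set.mem_fintype_sum]
  constructor
  · rintro ⟨hxK, hπx⟩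
    rw [hK] at hxK
    obtain ⟨m, v, cf, hv, hcf, rfl⟩ := hxK
    choose idx hidx using fun l => Set.mem_iUnion.1 (hv l)
    set F : Fin k → Finset (Fin m) := fun i => Finset.univ.filter (fun l => idx l = i) with hF
    set t : Fin k → ℝ := fun i => ∑ l ∈ F i, cf l with ht
    -- compute π x
    have hπsum : ∑ i, t i • r i = ∑ i, μ i • r i := by
      rw [← hπx, map_sum]
      simp_rw [map_smul]
      have : ∀ l, π (v l) = r (idx l) := fun l => hπS _ _ (hidx l)
      simp_rw [this]
      rw [← Finset.sum_fiberwise Finset.univ idx (fun l => cf l • r (idx l))]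
      refine Finset.sum_congr rfl fun i _ => ?_
      rw [ht]
      rw [Finset.sum_smul]
      refine Finset.sum_congr rfl fun l hl => ?_
      have : idx l = i := by simpa [hF] using hl
      rw [this]
    have htμ : ∀ i, t i = μ i := by
      have h0 : ∑ i, (t i - μ i) • r i = 0 := by
        simp_rw [sub_smul, Finset.sum_sub_distrib, hπsum, sub_self]
      have h1 := (Fintype.linearIndependent_iff.1 hr) (fun i => t i - μ i) h0
      intro i
      have h2 : t i - μ i = 0 := h1 i
      linarith
    refine ⟨fun i => ∑ l ∈ F i, cf l • v l, fun i => ?_, ?_⟩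
    · -- each fiber sum is in μ i • conv (S i)
      rcases eq_or_lt_of_le (hμ i) with hμi | hμi
      · have hti : t i = 0 := (htμ i).trans hμi.symm
        have hzero : ∀ l ∈ F i, cf l = 0 :=
          (Finset.sum_eq_zero_iff_of_nonneg (fun l _ => hcf l)).1 hti
        have : ∑ l ∈ F i, cf l • v l = 0 := by
          refine Finset.sum_eq_zero fun l hl => by rw [hzero l hl, zero_smul]
        show ∑ l ∈ F i, cf l • v l ∈ μ i • convexHull ℝ (S i)
        rw [this, ← hμi]
        rw [Set.zero_smul_set ((hSne i).mono (subset_convexHull ℝ _))]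
        simp
      · have hsum : ∑ l ∈ F i, cf l = μ i := (htμ i)
        have hmem : (μ i)⁻¹ • ∑ l ∈ F i, cf l • v l ∈ convexHull ℝ (S i) := by
          have := Finset.centerMass_mem_convexHull (F i) (fun l _ => hcf l)
            (by rw [hsum]; exact hμi)
            (fun l hl => by
              have hli : idx l = i := by simpa [hF] using hl
              exact hli ▸ hidx l)
          rwa [Finset.centerMass, hsum] at this
        exact ⟨_, hmem, by
          show μ i • (μ i)⁻¹ • ∑ l ∈ F i, cf l • v l = ∑ l ∈ F i, cf l • v l
          rw [smul_inv_smul₀ (ne_of_gt hμi)]⟩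
    · rw [← Finset.sum_fiberwise Finset.univ idx (fun l => cf l • v l)]
  · rintro ⟨g, hg, rfl⟩
    choose y hy hgy using fun i => hg i
    constructor
    · rw [hK']
      refine Finset.sum_induction g (· ∈ coneSet (⋃ i, S i))
        (fun _ _ => coneSet_add_mem) (coneSet_zero_mem _) fun i _ => ?_
      rw [← hgy i]
      refine coneSet_smul_mem (hμ i) ?_
      exact convexHull_min (Set.Subset.trans (Set.subset_iUnion S i) (coneSet_subset _))
        (coneSet_convex _) (hy i)
    · rw [map_sum]
      refine Finset.sum_congr rfl fun i _ => ?_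
      rw [← hgy i, map_smul, hπconv i _ (hy i)]
end

section
/- Suppose A = {a_0 < a_1 < ⋯ < a_k} is a chain in P containing all minimal and maximal elements of P. For 0 ≤ i ≤ k let φ^i : A → ℝ be defined by φ^i(a_j) = 1 if j ≥ i and φ^i(a_j) = 0 otherwise, and let Φ_i = O_{P,A}(φ^i). Then for every order preserving map λ : A → ℝ, setting μ_0 = λ(a_0) and μ_i = λ(a_i) − λ(a_{i−1}) for 1 ≤ i ≤ k, one has the Minkowski sum decomposition O_{P,A}(λ) = {μ_0 · 1_P} + μ_1 Φ_1 + μ_2 Φ_2 + ⋯ + μ_k Φ_k, where 1_P ∈ ℝ^P is the constant function with value 1. -/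
/-!
Write `c j = λ(a_j)`. For a real number `t` the pieces `min t (c (i+1)) - min t (c i)` telescope to
`t - c 0` as soon as `c 0 ≤ t ≤ c k`, which holds for every value of a point of `O_{P,A}(λ)`
because each element of `P` lies between a minimal and a maximal one, both marked. Applied
pointwise to `x ∈ O_{P,A}(λ)`, the `i`-th piece is a monotone map taking the values
`μ_{i+1} φ^{i+1}` on the chain, hence lies in `μ_{i+1} Φ_{i+1}`; this splits `x`. Conversely, a
nonnegative combination of order preserving maps is order preserving, and on the chain the sum
`λ(a_0) + ∑ μ_i φ^i(a_j)` telescopes to `λ(a_j)`.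
-/

open scoped Pointwise

theorem Fin.sum_succ_sub_castSucc {M : Type*} [AddCommGroup M] {k : ℕ} (f : Fin (k + 1) → M) :
    ∑ i : Fin k, (f i.succ - f i.castSucc) = f (Fin.last k) - f 0 := by
  induction k with
  | zero => simp
  | succ k ih =>
    rw [Fin.sum_univ_castSucc, Fin.succ_last]
    simp only [Fin.succ_castSucc]
    rw [ih fun i => f i.castSucc, Fin.castSucc_zero]
    abel

theorem Fin.add_sum_ite_succ_le {M : Type*} [AddCommGroup M] {k : ℕ} (c : Fin (k + 1) → M)
    (j : Fin (k + 1)) :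
    c 0 + ∑ i : Fin k, (if i.succ ≤ j then c i.succ - c i.castSucc else 0) = c j := by
  -- telescope `m ↦ c (min m j)`, whose increments vanish past `j`
  have hpiece : ∀ i : Fin k, c (min i.succ j) - c (min i.castSucc j) =
      if i.succ ≤ j then c i.succ - c i.castSucc else 0 := by
    intro i
    split_ifs with h
    · rw [min_eq_left h, min_eq_left (Fin.castSucc_lt_succ.le.trans h)]
    · have hj : j ≤ i.castSucc := Fin.le_castSucc_iff.mpr (not_le.mp h)
      rw [min_eq_right (not_le.mp h).le, min_eq_right hj, sub_self]
  simp_rw [← hpiece]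
  rw [Fin.sum_succ_sub_castSucc fun m => c (min m j), min_eq_right (Fin.le_last j),
    min_eq_left (Fin.zero_le j), add_sub_cancel]

theorem min_sub_min_monotone {b c : ℝ} (hbc : b ≤ c) : Monotone fun t => min t c - min t b := by
  intro s t hst
  simp only [min_def]
  split_ifs <;> linarith

theorem Monotone.min_sub_min_eq_ite {α : Type*} [LinearOrder α] [AddGroup α] {k : ℕ}
    {c : Fin (k + 1) → α} (hc : Monotone c) (i : Fin k)
    (j : Fin (k + 1)) :
    min (c j) (c i.succ) - min (c j) (c i.castSucc) =
      if i.succ ≤ j then c i.succ - c i.castSucc else 0 := by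
  split_ifs with h
  · rw [min_eq_right (hc h), min_eq_right (hc (Fin.castSucc_lt_succ.le.trans h))]
  · have hj : j ≤ i.castSucc := Fin.le_castSucc_iff.mpr (not_le.mp h)
    rw [min_eq_left (hc (hj.trans Fin.castSucc_lt_succ.le)), min_eq_left (hc hj), sub_self]

section Bounds

variable {P β : Type*} [PartialOrder P] [Finite P] [Preorder β] {A : Set P} {h : P → β}

theorem Monotone.le_apply_of_isMin_mem (hmin : ∀ p : P, IsMin p → p ∈ A) (hh : Monotone h)
    {r : β} (hr : ∀ a ∈ A, r ≤ h a) (p : P) : r ≤ h p := by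
  obtain ⟨m, hmp, hm⟩ := Finite.exists_le_minimal (a := p) (p := fun _ => True) trivial
  exact (hr m (hmin m (minimal_true.mp hm))).trans (hh hmp)

theorem Monotone.apply_le_of_isMax_mem (hmax : ∀ p : P, IsMax p → p ∈ A) (hh : Monotone h)
    {r : β} (hr : ∀ a ∈ A, h a ≤ r) (p : P) : h p ≤ r := by
  obtain ⟨m, hpm, hm⟩ := Finite.exists_le_maximal (a := p) (p := fun _ => True) trivial
  exact (hh hpm).trans (hr m (hmax m (maximal_true.mp hm)))

end Bounds

section MarkedOrderPolytope

variable {P : Type*} [PartialOrder P]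

theorem mem_smul_markedOrderPolytope [Finite P] {A : Set P} (hmin : ∀ p : P, IsMin p → p ∈ A)
    (hmax : ∀ p : P, IsMax p → p ∈ A) {ψ : P → ℝ} (hne : (markedOrderPolytope P A ψ).Nonempty)
    {μ : ℝ} (hμ : 0 ≤ μ) {h : P → ℝ} (hh : Monotone h) (hhA : ∀ a ∈ A, h a = μ * ψ a) :
    h ∈ μ • markedOrderPolytope P A ψ := by
  rcases hμ.eq_or_lt with rfl | hμ
  · have hzero : h = 0 := funext fun p => le_antisymm
      (hh.apply_le_of_isMax_mem hmax (fun a ha => by simp [hhA a ha]) p)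
      (hh.le_apply_of_isMin_mem hmin (fun a ha => by simp [hhA a ha]) p)
    rw [hzero, Set.zero_smul_set hne]
    rfl
  · refine Set.mem_smul_set.mpr
      ⟨μ⁻¹ • h, ⟨hh.const_smul (inv_nonneg.mpr hμ.le), fun a ha => ?_⟩, ?_⟩
    · simp [hhA a ha, hμ.ne']
    · simp [smul_smul, hμ.ne']

theorem markedOrderPolytope_range_nonempty {ι : Type*} [LinearOrder ι] {a : ι → P}
    (ha : StrictMono a) (i : ι) {ψ : P → ℝ} (hψ : ∀ j, ψ (a j) = if i ≤ j then 1 else 0) :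
    (markedOrderPolytope P (Set.range a) ψ).Nonempty := by
  classical
  refine ⟨fun p => if a i ≤ p then 1 else 0, fun p q hpq => ?_, ?_⟩
  · by_cases hp : a i ≤ p
    · simp [hp, hp.trans hpq]
    · by_cases hq : a i ≤ q <;> simp [hp, hq]
  · rintro _ ⟨j, rfl⟩
    simp only [hψ, ha.le_iff_le]

end MarkedOrderPolytope

section Chain

variable {P : Type*} [PartialOrder P] {k : ℕ} {a : Fin (k + 1) → P} {φ : Fin (k + 1) → P → ℝ}
  {lam : P → ℝ}

theorem add_sum_smul_markedOrderPolytope_subset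
    (hφ : ∀ i j : Fin (k + 1), φ i (a j) = if i ≤ j then 1 else 0)
    (hc : Monotone fun j => lam (a j)) :
    {fun _ => lam (a 0)} + ∑ i : Fin k, (lam (a i.succ) - lam (a i.castSucc)) •
        markedOrderPolytope P (Set.range a) (φ i.succ) ⊆
      markedOrderPolytope P (Set.range a) lam := by
  rintro _ ⟨_, rfl, _, hz, rfl⟩
  obtain ⟨f, hf, rfl⟩ := (Set.mem_fintype_sum _ _).mp hz
  choose g hg hgf using fun i => Set.mem_smul_set.mp (hf i)
  obtain rfl : f = fun i => (lam (a i.succ) - lam (a i.castSucc)) • g i := (funext hgf).symm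
  refine ⟨fun p q hpq => ?_, ?_⟩
  · simp only [Pi.add_apply, Finset.sum_apply, Pi.smul_apply, smul_eq_mul]
    gcongr with i
    · exact sub_nonneg.mpr (hc Fin.castSucc_lt_succ.le)
    · exact (hg i).1 hpq
  · rintro _ ⟨j, rfl⟩
    simp only [Pi.add_apply, Finset.sum_apply, Pi.smul_apply, smul_eq_mul,
      fun i => (hg i).2 _ ⟨j, rfl⟩, hφ, mul_ite, mul_one, mul_zero]
    exact Fin.add_sum_ite_succ_le (fun j => lam (a j)) j

theorem markedOrderPolytope_subset_add_sum_smul [Finite P] (ha : StrictMono a)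
    (hmin : ∀ p : P, IsMin p → p ∈ Set.range a) (hmax : ∀ p : P, IsMax p → p ∈ Set.range a)
    (hφ : ∀ i j : Fin (k + 1), φ i (a j) = if i ≤ j then 1 else 0)
    (hc : Monotone fun j => lam (a j)) :
    markedOrderPolytope P (Set.range a) lam ⊆
      {fun _ => lam (a 0)} + ∑ i : Fin k, (lam (a i.succ) - lam (a i.castSucc)) •
        markedOrderPolytope P (Set.range a) (φ i.succ) := by
  rintro x ⟨hxm, hxA⟩
  set c : Fin (k + 1) → ℝ := fun j => lam (a j)
  have hxa : ∀ j, x (a j) = c j := fun j => hxA _ ⟨j, rfl⟩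
  let piece (i : Fin k) (p : P) : ℝ := min (x p) (c i.succ) - min (x p) (c i.castSucc)
  have hpiece : ∀ i, piece i ∈
      (c i.succ - c i.castSucc) • markedOrderPolytope P (Set.range a) (φ i.succ) := by
    intro i
    have hci : c i.castSucc ≤ c i.succ := hc Fin.castSucc_lt_succ.le
    refine mem_smul_markedOrderPolytope hmin hmax
      (markedOrderPolytope_range_nonempty ha i.succ (hφ i.succ)) (sub_nonneg.mpr hci)
      ((min_sub_min_monotone hci).comp hxm) ?_
    rintro _ ⟨j, rfl⟩
    simp only [piece, hxa, hc.min_sub_min_eq_ite, hφ, mul_ite, mul_one, mul_zero]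
  have hlo : ∀ p, c 0 ≤ x p := hxm.le_apply_of_isMin_mem hmin <| by
    rintro _ ⟨j, rfl⟩
    exact (hc (Fin.zero_le j)).trans_eq (hxa j).symm
  have hhi : ∀ p, x p ≤ c (Fin.last k) := hxm.apply_le_of_isMax_mem hmax <| by
    rintro _ ⟨j, rfl⟩
    exact (hxa j).trans_le (hc (Fin.le_last j))
  refine ⟨_, rfl, ∑ i, piece i, (Set.mem_fintype_sum _ _).mpr ⟨piece, hpiece, rfl⟩, ?_⟩
  funext p
  simp only [Pi.add_apply, Finset.sum_apply, piece]
  rw [Fin.sum_succ_sub_castSucc fun j => min (x p) (c j), min_eq_left (hhi p),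
    min_eq_right (hlo p), add_sub_cancel]

end Chain

/-- if `A = {a_0 < a_1 < ⋯ < a_k}` is a chain containing all minimal
and maximal elements, `φ^i` is the indicator `φ^i(a_j) = 1 ↔ j ≥ i` and
`Φ_i = O_{P,A}(φ^i)`, then `O_{P,A}(λ)` decomposes as the Minkowski sum
`{μ_0·1_P} + μ_1 Φ_1 + ⋯ + μ_k Φ_k` where `μ_0 = λ(a_0)` and
`μ_i = λ(a_i) − λ(a_{i−1})`. -/
theorem stmt9 (P : Type*) [Fintype P] [PartialOrder P] (k : ℕ)
    (a : Fin (k + 1) → P) (ha : StrictMono a)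
    (A : Set P) (hA : A = Set.range a)
    (hmin : ∀ p : P, IsMin p → p ∈ A) (hmax : ∀ p : P, IsMax p → p ∈ A)
    (φ : Fin (k + 1) → P → ℝ)
    (hφ : ∀ i j : Fin (k + 1), φ i (a j) = if i ≤ j then 1 else 0)
    (lam : P → ℝ) (hlam : ∀ x ∈ A, ∀ y ∈ A, x ≤ y → lam x ≤ lam y) :
    markedOrderPolytope P A lam =
      {fun _ => lam (a 0)} +
        ∑ i : Fin k,
          (lam (a i.succ) - lam (a i.castSucc)) • markedOrderPolytope P A (φ i.succ) := by
  subst hA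
  have hc : Monotone fun j => lam (a j) := fun i j hij =>
    hlam _ ⟨i, rfl⟩ _ ⟨j, rfl⟩ (ha.monotone hij)
  exact (markedOrderPolytope_subset_add_sum_smul ha hmin hmax hφ hc).antisymm
    (add_sum_smul_markedOrderPolytope_subset hφ hc)
end

section
/- Either for no positive integer m does there exist a proper extension of c of size m, or there exists a polynomial χ_{G,c} of degree |V| − |A| such that for every integer m ≥ k, χ_{G,c}(m) equals the number of proper extensions of c of size m. -/
/-!
Colours above `k` never occur in `c`, so they are interchangeable. Group the proper extensions of
size `m ≥ k` by the set `H ⊆ (k, m]` of colours above `k` that they use: relabelling along a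
bijection `H ≃ H'` shows that the size of a group depends only on `t = #H`, so it is the number
`a t` of extensions of size `k + t` using every colour of `(k, k + t]`. Hence there are
`∑ₜ a t * C(m - k, t)` extensions, a polynomial in `m`. Its degree is `|V ∖ A|`: `a t = 0` for
`t > |V ∖ A|`, while giving the vertices outside `A` distinct colours above `k` shows
`a |V ∖ A| > 0` once `c` is proper on `A`.
-/

open Finset Polynomial
open scoped Nat

namespace Polynomial

variable {R : Type*}

lemma natDegree_sum_range_C_mul_monic [Semiring R] {n : ℕ} {p : ℕ → R[X]}
    (hp : ∀ t, (p t).Monic) (hdeg : ∀ t, (p t).natDegree = t) {b : ℕ → R} (hb : b n ≠ 0) :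
    (∑ t ∈ range (n + 1), C (b t) * p t).natDegree = n := by
  have hcoeff : (∑ t ∈ range (n + 1), C (b t) * p t).coeff n = b n := by
    have hlead : (p n).coeff n = 1 := by simpa [hdeg n] using (hp n).coeff_natDegree
    rw [finsetSum_coeff, sum_range_succ, sum_eq_zero fun t ht => ?_, zero_add, coeff_C_mul, hlead,
      mul_one]
    rw [coeff_C_mul, coeff_eq_zero_of_natDegree_lt (by rw [hdeg]; exact mem_range.1 ht),
      mul_zero]
  refine le_antisymm (natDegree_sum_le_of_forall_le _ _ fun t ht => ?_)
    (le_natDegree_of_ne_zero (hcoeff ▸ hb))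
  exact (natDegree_C_mul_le _ _).trans ((hdeg t).trans_le (Nat.lt_succ_iff.1 (mem_range.1 ht)))

variable (R) [CommRing R] [Nontrivial R] [NoZeroDivisors R]

lemma natDegree_descPochhammer_comp_X_sub_C (t : ℕ) (a : R) :
    ((descPochhammer R t).comp (X - C a)).natDegree = t := by
  rw [natDegree_comp, descPochhammer_natDegree, natDegree_X_sub_C, mul_one]

lemma monic_descPochhammer_comp_X_sub_C (t : ℕ) (a : R) :
    ((descPochhammer R t).comp (X - C a)).Monic :=
  (monic_descPochhammer R t).comp (monic_X_sub_C a)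
    (by rw [natDegree_X_sub_C]; exact one_ne_zero)

end Polynomial

namespace PartialColoring

variable {V : Type*} [Fintype V]

def IsProperExtension (G : SimpleGraph V) (A : Set V) (c f : V → ℕ) : Prop :=
  (∀ a ∈ A, f a = c a) ∧ ∀ u v, G.Adj u v → f u ≠ f v

open scoped Classical in
noncomputable def properExtensions (G : SimpleGraph V) (A : Set V) (c : V → ℕ) (m : ℕ) :
    Finset (V → ℕ) :=
  {f ∈ Fintype.piFinset fun _ => Icc 1 m | IsProperExtension G A c f}

def highColors (k : ℕ) (f : V → ℕ) : Finset ℕ :=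
  {x ∈ univ.image f | k < x}

open scoped Classical in
noncomputable def extensionsWithHighColors (G : SimpleGraph V) (A : Set V) (c : V → ℕ)
    (k m : ℕ) (H : Finset ℕ) : Finset (V → ℕ) :=
  {f ∈ properExtensions G A c m | highColors k f = H}

noncomputable def fullExtensionCount (G : SimpleGraph V) (A : Set V) (c : V → ℕ) (k t : ℕ) :
    ℕ :=
  #(extensionsWithHighColors G A c k (k + t) (Ioc k (k + t)))

def relabel {H H' : Finset ℕ} (e : H ≃ H') (x : ℕ) : ℕ :=
  if h : x ∈ H then e ⟨x, h⟩ else x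

variable {G : SimpleGraph V} {A : Set V} {c f : V → ℕ} {k m m' x : ℕ} {H H' : Finset ℕ}

lemma mem_properExtensions : f ∈ properExtensions G A c m ↔
    (∀ v, 1 ≤ f v ∧ f v ≤ m) ∧ IsProperExtension G A c f := by
  classical
  simp [properExtensions]

lemma mem_highColors : x ∈ highColors k f ↔ (∃ v, f v = x) ∧ k < x := by
  simp [highColors]

lemma mem_extensionsWithHighColors :
    f ∈ extensionsWithHighColors G A c k m H ↔
      f ∈ properExtensions G A c m ∧ highColors k f = H := by
  classical
  simp [extensionsWithHighColors]

lemma le_or_mem_highColors (v : V) : f v ≤ k ∨ f v ∈ highColors k f := by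
  rw [mem_highColors]
  exact (le_or_gt _ _).imp_right fun h => ⟨⟨v, rfl⟩, h⟩

lemma highColors_subset_Ioc (hf : f ∈ properExtensions G A c m) : highColors k f ⊆ Ioc k m :=
  fun x hx => by
    obtain ⟨⟨v, rfl⟩, hk⟩ := mem_highColors.1 hx
    exact mem_Ioc.2 ⟨hk, ((mem_properExtensions.1 hf).1 v).2⟩

lemma relabel_of_mem (e : H ≃ H') (h : x ∈ H) : relabel e x = e ⟨x, h⟩ := dif_pos h

lemma relabel_of_notMem (e : H ≃ H') (h : x ∉ H) : relabel e x = x := dif_neg h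

lemma relabel_mem (e : H ≃ H') (h : x ∈ H) : relabel e x ∈ H' := by
  rw [relabel_of_mem e h]
  exact (e _).2

lemma relabel_symm_relabel (e : H ≃ H') (hx : x ∈ H ∨ x ∉ H') :
    relabel e.symm (relabel e x) = x := by
  by_cases h : x ∈ H
  · rw [relabel_of_mem e h, relabel_of_mem e.symm (e _).2]
    simp
  · rw [relabel_of_notMem e h, relabel_of_notMem e.symm (hx.resolve_left h)]

lemma relabel_symm_relabel_apply (hH' : ∀ x ∈ H', k < x) (e : H ≃ H')
    (hf : f ∈ extensionsWithHighColors G A c k m H) (v : V) :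
    relabel e.symm (relabel e (f v)) = f v := by
  obtain ⟨-, rfl⟩ := mem_extensionsWithHighColors.1 hf
  refine relabel_symm_relabel e ((le_or_mem_highColors v).symm.imp_right fun h hH'v => ?_)
  have := hH' _ hH'v
  omega

lemma relabel_comp_mem_extensionsWithHighColors (hc : ∀ a ∈ A, c a ≤ k) (hm' : k ≤ m')
    (hH' : H' ⊆ Ioc k m') (e : H ≃ H') (hf : f ∈ extensionsWithHighColors G A c k m H) :
    relabel e ∘ f ∈ extensionsWithHighColors G A c k m' H' := by
  have hinv := relabel_symm_relabel_apply (fun x hx => (mem_Ioc.1 (hH' hx)).1) e hf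
  obtain ⟨hfm, rfl⟩ := mem_extensionsWithHighColors.1 hf
  obtain ⟨hbound, hA, hadj⟩ := mem_properExtensions.1 hfm
  have hlow : ∀ {x}, x ≤ k → x ∉ highColors k f := fun hx hxH => by
    have := (mem_highColors.1 hxH).2
    omega
  refine mem_extensionsWithHighColors.2 ⟨mem_properExtensions.2 ⟨fun v => ?_, fun a ha => ?_,
    fun u v huv heq => hadj u v huv ?_⟩, ?_⟩
  · rw [Function.comp_apply]
    rcases le_or_mem_highColors (k := k) (f := f) v with h | h
    · rw [relabel_of_notMem e (hlow h)]
      exact ⟨(hbound v).1, h.trans hm'⟩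
    · have := mem_Ioc.1 (hH' (relabel_mem e h))
      exact ⟨by omega, this.2⟩
  · rw [Function.comp_apply, hA a ha, relabel_of_notMem e (hlow (hc a ha))]
  · rw [← hinv u, ← hinv v]
    exact congrArg (relabel e.symm) heq
  · ext x
    simp only [mem_highColors, Function.comp_apply]
    constructor
    · rintro ⟨⟨v, rfl⟩, hk⟩
      rcases le_or_mem_highColors (k := k) (f := f) v with h | h
      · rw [relabel_of_notMem e (hlow h)] at hk
        omega
      · exact relabel_mem e h
    · intro hx
      obtain ⟨⟨v, hv⟩, -⟩ := mem_highColors.1 (e.symm ⟨x, hx⟩).2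
      refine ⟨⟨v, ?_⟩, (mem_Ioc.1 (hH' hx)).1⟩
      simp only [hv, relabel_of_mem e (e.symm ⟨x, hx⟩).2, Subtype.coe_eta,
        Equiv.apply_symm_apply]

lemma card_extensionsWithHighColors_le (hc : ∀ a ∈ A, c a ≤ k) (hm' : k ≤ m')
    (hH' : H' ⊆ Ioc k m') (hcard : #H = #H') :
    #(extensionsWithHighColors G A c k m H) ≤ #(extensionsWithHighColors G A c k m' H') := by
  let e := equivOfCardEq hcard
  refine card_le_card_of_injOn (relabel e ∘ ·)
    (fun f hf => relabel_comp_mem_extensionsWithHighColors hc hm' hH' e hf)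
    fun f hf g hg hfg => funext fun v => ?_
  have hH'k : ∀ x ∈ H', k < x := fun x hx => (mem_Ioc.1 (hH' hx)).1
  rw [← relabel_symm_relabel_apply hH'k e hf v, ← relabel_symm_relabel_apply hH'k e hg v]
  exact congrArg (relabel e.symm) (congrFun hfg v)

lemma card_extensionsWithHighColors (hc : ∀ a ∈ A, c a ≤ k) (hm : k ≤ m)
    (hH : H ⊆ Ioc k m) :
    #(extensionsWithHighColors G A c k m H) = fullExtensionCount G A c k #H :=
  (card_extensionsWithHighColors_le hc le_self_add subset_rfl (by simp)).antisymm
    (card_extensionsWithHighColors_le hc hm hH (by simp))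

open scoped Classical in
lemma card_highColors_le (hf : ∀ a ∈ A, f a ≤ k) : #(highColors k f) ≤ #A.toFinsetᶜ := by
  refine (card_le_card fun x hx => ?_).trans (card_image_le (f := f))
  obtain ⟨⟨v, rfl⟩, hk⟩ := mem_highColors.1 hx
  refine mem_image.2 ⟨v, mem_compl.2 (Set.mem_toFinset.not.2 fun hv => ?_), rfl⟩
  have := hf v hv
  omega

open scoped Classical in
lemma fullExtensionCount_eq_zero (hc : ∀ a ∈ A, c a ≤ k) {t : ℕ} (ht : #A.toFinsetᶜ < t) :
    fullExtensionCount G A c k t = 0 := by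
  refine card_eq_zero.2 (eq_empty_of_forall_notMem fun f hf => ?_)
  obtain ⟨hfm, hH⟩ := mem_extensionsWithHighColors.1 hf
  have hA := (mem_properExtensions.1 hfm).2.1
  have := card_highColors_le (k := k) fun a ha => (hA a ha).trans_le (hc a ha)
  rw [hH, Nat.card_Ioc, Nat.add_sub_cancel_left] at this
  omega

open scoped Classical in
lemma card_properExtensions (hc : ∀ a ∈ A, c a ≤ k) (hm : k ≤ m) :
    #(properExtensions G A c m) =
      ∑ t ∈ range (#A.toFinsetᶜ + 1), (m - k).choose t * fullExtensionCount G A c k t := by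
  calc #(properExtensions G A c m)
      = ∑ H ∈ (Ioc k m).powerset, #(extensionsWithHighColors G A c k m H) :=
        card_eq_sum_card_fiberwise fun f hf => mem_powerset.2 (highColors_subset_Ioc hf)
    _ = ∑ H ∈ (Ioc k m).powerset, fullExtensionCount G A c k #H :=
        sum_congr rfl fun H hH => card_extensionsWithHighColors hc hm (mem_powerset.1 hH)
    _ = ∑ t ∈ range (m - k + 1), (m - k).choose t * fullExtensionCount G A c k t := by
        rw [sum_powerset_apply_card, Nat.card_Ioc]
        rfl
    _ = ∑ t ∈ range (max (m - k + 1) (#A.toFinsetᶜ + 1)),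
          (m - k).choose t * fullExtensionCount G A c k t :=
        sum_subset (range_subset_range.2 (le_max_left _ _)) fun t _ ht => by
          rw [Nat.choose_eq_zero_of_lt (by simpa using ht), zero_mul]
    _ = _ :=
        (sum_subset (range_subset_range.2 (le_max_right _ _)) fun t _ ht => by
          rw [fullExtensionCount_eq_zero hc (by simpa using ht), mul_zero]).symm

open scoped Classical in
lemma fullExtensionCount_pos (hc : ∀ a ∈ A, 1 ≤ c a ∧ c a ≤ k)
    (hproper : ∀ a ∈ A, ∀ b ∈ A, G.Adj a b → c a ≠ c b) :
    0 < fullExtensionCount G A c k #A.toFinsetᶜ := by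
  let ι := Fintype.equivFin V
  let g : V → ℕ := fun v => k + 1 + ι v
  let f : V → ℕ := fun v => if v ∈ A then c v else g v
  have hg : g.Injective := fun u v h => ι.injective (Fin.ext (by simp only [g] at h; omega))
  have hk : ∀ v, k < g v := fun v => by simp only [g]; omega
  have hf : f ∈ properExtensions G A c (k + Fintype.card V) := by
    refine mem_properExtensions.2 ⟨fun v => ?_, fun a ha => if_pos ha, fun u v huv => ?_⟩
    · by_cases hv : v ∈ A
      · simp only [f, if_pos hv]
        have := hc v hv
        omega
      · simp only [f, if_neg hv, g]
        have := (ι v).2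
        omega
    · by_cases hu : u ∈ A <;> by_cases hv : v ∈ A <;> simp only [f, hu, hv, if_true, if_false]
      · exact hproper u hu v hv huv
      · exact ((hc u hu).2.trans_lt (hk v)).ne
      · exact ((hc v hv).2.trans_lt (hk u)).ne'
      · exact hg.ne (G.ne_of_adj huv)
  have hhigh : highColors k f = A.toFinsetᶜ.image g := by
    ext x
    simp only [mem_highColors, mem_image, mem_compl, Set.mem_toFinset]
    constructor
    · rintro ⟨⟨v, rfl⟩, hkv⟩
      by_cases hv : v ∈ A
      · simp only [f, if_pos hv] at hkv
        have := (hc v hv).2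
        omega
      · exact ⟨v, hv, (if_neg hv).symm⟩
    · rintro ⟨v, hv, rfl⟩
      exact ⟨⟨v, if_neg hv⟩, hk v⟩
  rw [← card_image_of_injective _ hg, ← hhigh,
    ← card_extensionsWithHighColors (fun a ha => (hc a ha).2) le_self_add
      (highColors_subset_Ioc hf)]
  exact card_pos.2 ⟨f, mem_extensionsWithHighColors.2 ⟨hf, rfl⟩⟩

open scoped Classical in
noncomputable def extensionPolynomial (K : Type*) [Field K] (G : SimpleGraph V) (A : Set V)
    (c : V → ℕ) (k : ℕ) : K[X] :=
  ∑ t ∈ range (#A.toFinsetᶜ + 1),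
    C ((fullExtensionCount G A c k t : K) / t !) * (descPochhammer K t).comp (X - C (k : K))

variable {K : Type*} [Field K] [CharZero K]

lemma eval_extensionPolynomial (hc : ∀ a ∈ A, c a ≤ k) (hm : k ≤ m) :
    (extensionPolynomial K G A c k).eval (m : K) = #(properExtensions G A c m) := by
  classical
  rw [card_properExtensions hc hm, extensionPolynomial, eval_finsetSum]
  push_cast
  refine sum_congr rfl fun t _ => ?_
  rw [eval_mul, eval_C, eval_comp, eval_sub, eval_X, eval_C, ← Nat.cast_sub hm,
    Nat.cast_choose_eq_descPochhammer_div]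
  ring

open scoped Classical in
lemma natDegree_extensionPolynomial (hc : ∀ a ∈ A, 1 ≤ c a ∧ c a ≤ k)
    (hproper : ∀ a ∈ A, ∀ b ∈ A, G.Adj a b → c a ≠ c b) :
    (extensionPolynomial K G A c k).natDegree = #A.toFinsetᶜ := by
  refine natDegree_sum_range_C_mul_monic (fun t => monic_descPochhammer_comp_X_sub_C K t k)
    (fun t => natDegree_descPochhammer_comp_X_sub_C K t k) ?_
  exact div_ne_zero (Nat.cast_ne_zero.2 (fullExtensionCount_pos hc hproper).ne')
    (Nat.cast_ne_zero.2 (Nat.factorial_ne_zero _))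

end PartialColoring

open PartialColoring Finset in
theorem stmt16_general (V : Type*) [Fintype V] (G : SimpleGraph V) (A : Set V)
    (k : ℕ) (c : V → ℕ) (hc : ∀ a ∈ A, 1 ≤ c a ∧ c a ≤ k) :
    (∀ m : ℕ, 0 < m →
      ¬ ∃ cc : V → ℕ, (∀ v, 1 ≤ cc v ∧ cc v ≤ m) ∧ (∀ a ∈ A, cc a = c a) ∧
        ∀ u v : V, G.Adj u v → cc u ≠ cc v) ∨
    ∃ χ : Polynomial ℝ,
      χ.natDegree = Fintype.card V - A.ncard ∧
      ∀ m : ℕ, k ≤ m →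
        χ.eval (m : ℝ) =
          Nat.card {cc : V → ℕ | (∀ v, 1 ≤ cc v ∧ cc v ≤ m) ∧ (∀ a ∈ A, cc a = c a) ∧
            ∀ u v : V, G.Adj u v → cc u ≠ cc v} := by
  classical
  by_cases hproper : ∀ a ∈ A, ∀ b ∈ A, G.Adj a b → c a ≠ c b
  · refine Or.inr ⟨extensionPolynomial ℝ G A c k, ?_, fun m hm => ?_⟩
    · rw [natDegree_extensionPolynomial hc hproper, card_compl, Set.ncard_eq_toFinset_card']
    · rw [eval_extensionPolynomial (fun a ha => (hc a ha).2) hm, ← Nat.card_eq_finsetCard]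
      congr
      ext f
      exact mem_properExtensions
  · push Not at hproper
    obtain ⟨a, ha, b, hb, hab, hcab⟩ := hproper
    refine Or.inl fun m _ ⟨f, _, hfA, hf⟩ => hf a b hab ?_
    rw [hfA a ha, hfA b hb, hcab]

/-- Herzberg–Murty: either no proper extension of the partial
coloring `c` exists for any size, or there is a polynomial `χ_{G,c}` of degree
`|V| - |A|` counting the proper extensions of `c` of size `m` for all `m ≥ k`. -/
theorem stmt16 (V : Type*) [Fintype V] (G : SimpleGraph V) (A : Set V)
    (k : ℕ) (hk : 1 ≤ k) (c : V → ℕ) (hc : ∀ a ∈ A, 1 ≤ c a ∧ c a ≤ k) :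
    (∀ m : ℕ, 0 < m →
      ¬ ∃ cc : V → ℕ, (∀ v, 1 ≤ cc v ∧ cc v ≤ m) ∧ (∀ a ∈ A, cc a = c a) ∧
        ∀ u v : V, G.Adj u v → cc u ≠ cc v) ∨
    ∃ χ : Polynomial ℝ,
      χ.natDegree = Fintype.card V - A.ncard ∧
      ∀ m : ℕ, k ≤ m →
        χ.eval (m : ℝ) =
          Nat.card {cc : V → ℕ | (∀ v, 1 ≤ cc v ∧ cc v ≤ m) ∧ (∀ a ∈ A, cc a = c a) ∧
            ∀ u v : V, G.Adj u v → cc u ≠ cc v} :=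
  stmt16_general V G A k c hc
end

section
/- Let A_i = c^{−1}(i) for i = 1, …, k. Then for every integer m ≥ k, (−1)^{|V ∖ A|} · χ_{G,c}(−m) equals the number of pairs (ĉ, σ) where ĉ : V → {1,…,m} is a (not necessarily proper) extension of c of size m and σ is an acyclic orientation of G weakly compatible with ĉ such that for every i ∈ {1,…,k} there is no directed path of σ with both endpoints in A_i. -/
/-!
Deletion–contraction on an edge `uv`. If `v` is not precolored, the proper extensions for
`G − uv` are those for `G` together with those giving `u` and `v` the same color, i.e. those for
the contraction `G / uv` (with `v` merged into `u`), so `χ_G = χ_{G−uv} − χ_{G/uv}`. On the other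
side, a pair for `G` is a pair for `G − uv` plus an admissible direction of `uv`. At least one
direction is always admissible, and the pairs for `G − uv` admitting both directions correspond,
by merging `v` into `u`, to the pairs for `G / uv`, which has one uncolored vertex fewer; this
matches the sign change. If both ends are precolored, the edge is irrelevant (distinct colors)
or both sides vanish (equal colors). Induction on the number of edges ends at the edgeless graph,
where both sides count `m ^ |V ∖ A|`.
-/

open Relation Function SimpleGraph Polynomial

namespace PartialColoringReciprocity

section Paths

variable {α β : Type*} {r : α → α → Prop}

theorem transGen_map_lift {f : α → β} {a b : β} (h : TransGen (Relation.Map r f f) a b) :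
    ∃ x y, f x = a ∧ f y = b ∧ TransGen (fun x y => ∃ z, r x z ∧ f z = f y) x y := by
  induction h using TransGen.head_induction_on with
  | single h =>
    obtain ⟨x, y, hxy, rfl, rfl⟩ := h
    exact ⟨x, y, rfl, rfl, .single ⟨y, hxy, rfl⟩⟩
  | head h _ ih =>
    obtain ⟨x, z, hxz, rfl, hz⟩ := h
    obtain ⟨x', y, hx', rfl, hp⟩ := ih
    exact ⟨x, y, rfl, rfl, .head ⟨z, hxz, hz.trans hx'.symm⟩ hp⟩

/-- When `f` identifies only `u` and `v`, between which `r` has no path, a path of `r` that may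
jump along the fibres of `f` after each step jumps at most once. -/
theorem transGen_jump_cases {f : α → β} {u v x y : α}
    (hf : ∀ {z w}, f z = f w → z = w ∨ z = u ∧ w = v ∨ z = v ∧ w = u)
    (hacyc : ∀ x, ¬ TransGen r x x) (huv : ¬ TransGen r u v) (hvu : ¬ TransGen r v u)
    (h : TransGen (fun x y => ∃ z, r x z ∧ f z = f y) x y) :
    TransGen r x y ∨ (TransGen r x u ∧ ReflTransGen r v y) ∨
      (TransGen r x v ∧ ReflTransGen r u y) := by
  induction h with
  | single h =>
    obtain ⟨z, hxz, hz⟩ := h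
    rcases hf hz with rfl | ⟨rfl, rfl⟩ | ⟨rfl, rfl⟩
    · exact .inl (.single hxz)
    · exact .inr (.inl ⟨.single hxz, .refl⟩)
    · exact .inr (.inr ⟨.single hxz, .refl⟩)
  | tail _ h ih =>
    obtain ⟨z, hyz, hz⟩ := h
    rcases ih with hxy | ⟨hxu, hvy⟩ | ⟨hxv, huy⟩ <;> rcases hf hz with rfl | ⟨rfl, rfl⟩ | ⟨rfl, rfl⟩
    · exact .inl (hxy.tail hyz)
    · exact .inr (.inl ⟨hxy.tail hyz, .refl⟩)
    · exact .inr (.inr ⟨hxy.tail hyz, .refl⟩)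
    · exact .inr (.inl ⟨hxu, hvy.tail hyz⟩)
    · exact absurd (TransGen.tail' hvy hyz) hvu
    · exact absurd (TransGen.tail' hvy hyz) (hacyc _)
    · exact .inr (.inr ⟨hxv, huy.tail hyz⟩)
    · exact absurd (TransGen.tail' huy hyz) (hacyc _)
    · exact absurd (TransGen.tail' huy hyz) huv

end Paths

section Definitions

variable {V : Type*}

def IsExtension (A : Set V) (c : V → ℕ) (m : ℕ) (cc : V → ℕ) : Prop :=
  (∀ x, 1 ≤ cc x ∧ cc x ≤ m) ∧ ∀ a ∈ A, cc a = c a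

def properExtensions (G : SimpleGraph V) (A : Set V) (c : V → ℕ) (m : ℕ) : Set (V → ℕ) :=
  {cc | IsExtension A c m cc ∧ ∀ x y, G.Adj x y → cc x ≠ cc y}

structure IsAdmissibleOrientation (G : SimpleGraph V) (A : Set V) (c cc : V → ℕ)
    (o : V → V → Prop) : Prop where
  adj : ∀ x y, o x y → G.Adj x y
  orient : ∀ x y, G.Adj x y → (o x y ↔ ¬ o y x)
  acyclic : ∀ x, ¬ TransGen o x x
  compatible : ∀ x y, G.Adj x y → cc x < cc y → o x y
  noMonochromaticPath : ∀ a ∈ A, ∀ b ∈ A, c a = c b → ¬ TransGen o a b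

def admissiblePairs (G : SimpleGraph V) (A : Set V) (c : V → ℕ) (m : ℕ) :
    Set ((V → ℕ) × (V → V → Prop)) :=
  {p | IsExtension A c m p.1 ∧ IsAdmissibleOrientation G A c p.1 p.2}

/-- Adding the arc `u → v` to `o` would break compatibility with `cc`, close a cycle, or create a
monochromatic path `a ⇝ u → v ⇝ b`. -/
def ArcBlocked (A : Set V) (c cc : V → ℕ) (o : V → V → Prop) (u v : V) : Prop :=
  cc v < cc u ∨ TransGen o v u ∨
    ∃ a ∈ A, ∃ b ∈ A, c a = c b ∧ ReflTransGen o a u ∧ ReflTransGen o v b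

def HasReciprocityPolynomial (k : ℕ) (G : SimpleGraph V) (A : Set V) (c : V → ℕ) : Prop :=
  ∃ P : ℝ[X], ∀ m, k ≤ m → P.eval (m : ℝ) = (properExtensions G A c m).ncard ∧
    (-1) ^ Aᶜ.ncard * P.eval (-(m : ℝ)) = (admissiblePairs G A c m).ncard

end Definitions

section Basic

variable {V : Type*} {G : SimpleGraph V} {A : Set V} {c cc : V → ℕ} {o : V → V → Prop} {m : ℕ}

theorem finite_setOf_isExtension [Finite V] (A : Set V) (c : V → ℕ) (m : ℕ) :
    {cc | IsExtension A c m cc}.Finite :=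
  (Set.Finite.pi (t := fun _ : V => Set.Icc 1 m) fun _ => Set.finite_Icc 1 m).subset
    fun _ hcc x _ => hcc.1 x

theorem finite_properExtensions [Finite V] : (properExtensions G A c m).Finite :=
  (finite_setOf_isExtension A c m).subset fun _ hcc => hcc.1

theorem finite_admissiblePairs [Finite V] : (admissiblePairs G A c m).Finite :=
  ((finite_setOf_isExtension A c m).prod Set.finite_univ).subset fun _ hp => ⟨hp.1, trivial⟩

theorem IsExtension.comp {W : Type*} {A' : Set W} {c' cc' : W → ℕ} (h : IsExtension A' c' m cc')
    (f : V → W) (hA : ∀ a ∈ A, f a ∈ A' ∧ c' (f a) = c a) : IsExtension A c m (cc' ∘ f) :=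
  ⟨fun x => h.1 (f x), fun a ha => (h.2 _ (hA a ha).1).trans (hA a ha).2⟩

namespace IsAdmissibleOrientation

theorem le_of_rel (ho : IsAdmissibleOrientation G A c cc o) {x y : V} (hxy : o x y) : cc x ≤ cc y :=
  not_lt.1 fun hlt => (ho.orient x y (ho.adj x y hxy)).1 hxy
    (ho.compatible y x (ho.adj x y hxy).symm hlt)

theorem le_of_transGen (ho : IsAdmissibleOrientation G A c cc o) {x y : V}
    (hxy : TransGen o x y) : cc x ≤ cc y := by
  induction hxy with
  | single h => exact ho.le_of_rel h
  | tail _ h ih => exact ih.trans (ho.le_of_rel h)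

theorem le_of_reflTransGen (ho : IsAdmissibleOrientation G A c cc o) {x y : V}
    (hxy : ReflTransGen o x y) : cc x ≤ cc y := by
  rcases reflTransGen_iff_eq_or_transGen.1 hxy with rfl | h
  exacts [le_rfl, ho.le_of_transGen h]

theorem eq_of_reflTransGen (ho : IsAdmissibleOrientation G A c cc o) {a b : V} (ha : a ∈ A)
    (hb : b ∈ A) (hab : c a = c b) (h : ReflTransGen o a b) : a = b := by
  rcases reflTransGen_iff_eq_or_transGen.1 h with rfl | h
  exacts [rfl, absurd h (ho.noMonochromaticPath a ha b hb hab)]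

end IsAdmissibleOrientation

end Basic

section Deletion

variable {V : Type*} {G H : SimpleGraph V} {A : Set V} {c cc : V → ℕ} {o τ : V → V → Prop}
  {u v : V} {m : ℕ}

theorem IsAdmissibleOrientation.total (ho : IsAdmissibleOrientation G A c cc o) {x y : V}
    (hxy : G.Adj x y) : o x y ∨ o y x :=
  or_iff_not_imp_left.2 (ho.orient y x hxy.symm).2

theorem IsAdmissibleOrientation.of_total (adj : ∀ x y, o x y → G.Adj x y)
    (total : ∀ x y, G.Adj x y → o x y ∨ o y x) (acyclic : ∀ x, ¬ TransGen o x x)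
    (compatible : ∀ x y, G.Adj x y → cc x < cc y → o x y)
    (noMonochromaticPath : ∀ a ∈ A, ∀ b ∈ A, c a = c b → ¬ TransGen o a b) :
    IsAdmissibleOrientation G A c cc o where
  adj := adj
  orient x y hxy :=
    ⟨fun h h' => acyclic x (.tail (.single h) h'), (total x y hxy).resolve_right⟩
  acyclic := acyclic
  compatible := compatible
  noMonochromaticPath := noMonochromaticPath

theorem IsAdmissibleOrientation.restrict (ho : IsAdmissibleOrientation G A c cc o) (hHG : H ≤ G) :
    IsAdmissibleOrientation H A c cc (H.Adj ⊓ o) :=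
  .of_total (fun _ _ h => h.1)
    (fun _ _ hxy => (ho.total (hHG hxy)).imp (⟨hxy, ·⟩) (⟨hxy.symm, ·⟩))
    (fun x hx => ho.acyclic x (TransGen.mono inf_le_right _ _ hx))
    (fun x y hxy hlt => ⟨hxy, ho.compatible x y (hHG hxy) hlt⟩)
    (fun a ha b hb hab h => ho.noMonochromaticPath a ha b hb hab (TransGen.mono inf_le_right _ _ h))

theorem ArcBlocked.mono {o' : V → V → Prop} (hle : o' ≤ o) (h : ArcBlocked A c cc o' u v) :
    ArcBlocked A c cc o u v := by
  rcases h with h | h | ⟨a, ha, b, hb, hab, hau, hvb⟩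
  exacts [.inl h, .inr (.inl (TransGen.mono hle _ _ h)),
    .inr (.inr ⟨a, ha, b, hb, hab, ReflTransGen.mono hle _ _ hau, ReflTransGen.mono hle _ _ hvb⟩)]

theorem not_transGen_of_not_arcBlocked (h : ¬ ArcBlocked A c cc o u v) : ¬ TransGen o v u :=
  fun h' => h (.inr (.inl h'))

theorem eq_of_not_arcBlocked (h₁ : ¬ ArcBlocked A c cc o u v) (h₂ : ¬ ArcBlocked A c cc o v u) :
    cc u = cc v :=
  le_antisymm (not_lt.1 fun h => h₁ (.inl h)) (not_lt.1 fun h => h₂ (.inl h))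

theorem IsAdmissibleOrientation.not_arcBlocked (ho : IsAdmissibleOrientation G A c cc o)
    (huv : o u v) : ¬ ArcBlocked A c cc o u v := by
  rintro (h | h | ⟨a, ha, b, hb, hab, hau, hvb⟩)
  · exact (ho.orient u v (ho.adj u v huv)).1 huv (ho.compatible v u (ho.adj u v huv).symm h)
  · exact ho.acyclic v (h.tail huv)
  · exact ho.noMonochromaticPath a ha b hb hab (.trans_right hau (.head' huv hvb))

theorem IsAdmissibleOrientation.antisymm (ho : IsAdmissibleOrientation G A c cc o) {x y : V}
    (hxy : ReflTransGen o x y) (hyx : ReflTransGen o y x) : x = y := by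
  rcases reflTransGen_iff_eq_or_transGen.1 hxy with rfl | h
  exacts [rfl, absurd (h.trans_left hyx) (ho.acyclic x)]

theorem ArcBlocked.cc_le (ho : IsAdmissibleOrientation G A c cc o) (hA : ∀ a ∈ A, cc a = c a)
    (h : ArcBlocked A c cc o u v) : cc v ≤ cc u := by
  rcases h with h | h | ⟨a, ha, b, hb, hab, hau, hvb⟩
  · exact h.le
  · exact ho.le_of_transGen h
  · have := ho.le_of_reflTransGen hau
    have := ho.le_of_reflTransGen hvb
    rw [hA a ha, hA b hb] at *
    omega

theorem not_arcBlocked_or_not_arcBlocked (ho : IsAdmissibleOrientation G A c cc o)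
    (hA : ∀ a ∈ A, cc a = c a) (huv : ¬(u ∈ A ∧ v ∈ A ∧ c u = c v)) :
    ¬ ArcBlocked A c cc o u v ∨ ¬ ArcBlocked A c cc o v u := by
  by_contra! ⟨h₁, h₂⟩
  have hcc : cc u = cc v := le_antisymm (h₂.cc_le ho hA) (h₁.cc_le ho hA)
  rcases h₁ with h₁ | h₁ | ⟨a, ha, b, hb, hab, hau, hvb⟩ <;>
    rcases h₂ with h₂ | h₂ | ⟨a', ha', b', hb', hab', hav, hub⟩
  any_goals omega
  · exact ho.acyclic v (h₁.trans h₂)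
  · exact ho.noMonochromaticPath a' ha' b' hb' hab' (.trans_right hav (h₁.trans_left hub))
  · exact ho.noMonochromaticPath a ha b hb hab (.trans_right hau (h₂.trans_left hvb))
  · have := ho.le_of_reflTransGen hau
    have := ho.le_of_reflTransGen hvb
    have := ho.le_of_reflTransGen hav
    have := ho.le_of_reflTransGen hub
    have : cc a = cc b := by rw [hA a ha, hA b hb, hab]
    have : cc a' = cc b' := by rw [hA a' ha', hA b' hb', hab']
    have hcab' : c a = c b' := by rw [← hA a ha, ← hA b' hb']; omega
    obtain rfl := ho.eq_of_reflTransGen ha hb' hcab' (hau.trans hub)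
    obtain rfl := ho.antisymm hau hub
    obtain rfl := ho.eq_of_reflTransGen ha' hb (hab'.trans (hcab'.symm.trans hab)) (hav.trans hvb)
    obtain rfl := ho.antisymm hav hvb
    exact huv ⟨ha, ha', by rw [← hA _ ha, ← hA _ ha', hcc]⟩

theorem deleteEdges_adj_iff {x y : V} :
    (G.deleteEdges {s(u, v)}).Adj x y ↔ G.Adj x y ∧ ¬(x = u ∧ y = v ∨ x = v ∧ y = u) := by
  rw [deleteEdges_adj, Set.mem_singleton_iff, Sym2.eq_iff]

theorem transGen_sup_arc {x y : V} (h : TransGen (τ ⊔ fun a b => a = u ∧ b = v) x y) :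
    TransGen τ x y ∨ ReflTransGen τ x u ∧ ReflTransGen τ v y := by
  induction h with
  | single h =>
    rcases h with h | ⟨rfl, rfl⟩
    exacts [.inl (.single h), .inr ⟨.refl, .refl⟩]
  | tail _ h ih =>
    rcases h with h | ⟨rfl, rfl⟩ <;> rcases ih with ih | ⟨hxu, hvy⟩
    exacts [.inl (ih.tail h), .inr ⟨hxu, hvy.tail h⟩, .inr ⟨ih.to_reflTransGen, .refl⟩,
      .inr ⟨hxu, .refl⟩]

theorem IsAdmissibleOrientation.sup_arc (hadj : G.Adj u v)
    (hτ : IsAdmissibleOrientation (G.deleteEdges {s(u, v)}) A c cc τ)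
    (hnb : ¬ ArcBlocked A c cc τ u v) :
    IsAdmissibleOrientation G A c cc (τ ⊔ fun x y => x = u ∧ y = v) := by
  refine .of_total ?_ ?_ ?_ ?_ ?_
  · rintro x y (h | ⟨rfl, rfl⟩)
    exacts [(deleteEdges_adj_iff.1 (hτ.adj x y h)).1, hadj]
  · intro x y hxy
    by_cases he : x = u ∧ y = v ∨ x = v ∧ y = u
    · rcases he with ⟨rfl, rfl⟩ | ⟨rfl, rfl⟩
      exacts [.inl (.inr ⟨rfl, rfl⟩), .inr (.inr ⟨rfl, rfl⟩)]
    · exact (hτ.total (deleteEdges_adj_iff.2 ⟨hxy, he⟩)).imp .inl .inl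
  · intro x hx
    rcases transGen_sup_arc hx with h | ⟨hxu, hvx⟩
    · exact hτ.acyclic x h
    · rcases reflTransGen_iff_eq_or_transGen.1 (hvx.trans hxu) with h | h
      exacts [hadj.ne h, hnb (.inr (.inl h))]
  · intro x y hxy hlt
    by_cases he : x = u ∧ y = v ∨ x = v ∧ y = u
    · rcases he with ⟨rfl, rfl⟩ | ⟨rfl, rfl⟩
      exacts [.inr ⟨rfl, rfl⟩, absurd hlt fun h => hnb (.inl h)]
    · exact .inl (hτ.compatible x y (deleteEdges_adj_iff.2 ⟨hxy, he⟩) hlt)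
  · intro a ha b hb hab h
    rcases transGen_sup_arc h with h | ⟨hau, hvb⟩
    exacts [hτ.noMonochromaticPath a ha b hb hab h, hnb (.inr (.inr ⟨a, ha, b, hb, hab, hau, hvb⟩))]

theorem restrict_sup_arc (hτ : ∀ x y, τ x y → (G.deleteEdges {s(u, v)}).Adj x y) :
    ((G.deleteEdges {s(u, v)}).Adj ⊓ (τ ⊔ fun x y => x = u ∧ y = v)) = τ := by
  funext x y
  refine propext ⟨?_, fun h => ⟨hτ x y h, .inl h⟩⟩
  rintro ⟨hxy, h | ⟨rfl, rfl⟩⟩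
  exacts [h, absurd (.inl ⟨rfl, rfl⟩) (deleteEdges_adj_iff.1 hxy).2]

theorem IsAdmissibleOrientation.restrict_sup_arc (ho : IsAdmissibleOrientation G A c cc o)
    (huv : o u v) : ((G.deleteEdges {s(u, v)}).Adj ⊓ o ⊔ fun x y => x = u ∧ y = v) = o := by
  funext x y
  refine propext ⟨?_, fun h => ?_⟩
  · rintro (⟨-, h⟩ | ⟨rfl, rfl⟩)
    exacts [h, huv]
  · by_cases he : x = u ∧ y = v ∨ x = v ∧ y = u
    · rcases he with ⟨rfl, rfl⟩ | ⟨rfl, rfl⟩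
      exacts [.inr ⟨rfl, rfl⟩, absurd huv ((ho.orient _ _ (ho.adj _ _ h)).1 h)]
    · exact .inl ⟨deleteEdges_adj_iff.2 ⟨ho.adj x y h, he⟩, h⟩

theorem ncard_admissiblePairs_sep_rel (hadj : G.Adj u v) :
    {p ∈ admissiblePairs G A c m | p.2 u v}.ncard =
      {p ∈ admissiblePairs (G.deleteEdges {s(u, v)}) A c m |
        ¬ ArcBlocked A c p.1 p.2 u v}.ncard := by
  apply Set.ncard_congr fun p _ => (p.1, (G.deleteEdges {s(u, v)}).Adj ⊓ p.2)
  · rintro ⟨cc, o⟩ ⟨⟨hcc, ho⟩, huv⟩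
    exact ⟨⟨hcc, ho.restrict (deleteEdges_le _)⟩,
      fun h => ho.not_arcBlocked huv (h.mono inf_le_right)⟩
  · rintro ⟨cc, o⟩ ⟨cc', o'⟩ ⟨⟨-, ho⟩, huv⟩ ⟨⟨-, ho'⟩, huv'⟩ h
    obtain ⟨rfl, h⟩ := Prod.mk.inj h
    dsimp only at ho huv ho' huv' h ⊢
    rw [← ho.restrict_sup_arc huv, ← ho'.restrict_sup_arc huv', h]
  · rintro ⟨cc, τ⟩ ⟨⟨hcc, hτ⟩, hnb⟩
    exact ⟨(cc, τ ⊔ fun x y => x = u ∧ y = v), ⟨⟨hcc, hτ.sup_arc hadj hnb⟩, .inr ⟨rfl, rfl⟩⟩,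
      by rw [restrict_sup_arc hτ.adj]⟩

theorem ncard_admissiblePairs_eq_deleteEdges_add [Finite V] (hadj : G.Adj u v)
    (huv : ¬(u ∈ A ∧ v ∈ A ∧ c u = c v)) :
    (admissiblePairs G A c m).ncard = (admissiblePairs (G.deleteEdges {s(u, v)}) A c m).ncard +
      {p ∈ admissiblePairs (G.deleteEdges {s(u, v)}) A c m |
        ¬ ArcBlocked A c p.1 p.2 u v ∧ ¬ ArcBlocked A c p.1 p.2 v u}.ncard := by
  have hsplit : {p ∈ admissiblePairs G A c m | p.2 u v ∨ p.2 v u} = admissiblePairs G A c m :=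
    Set.sep_eq_self_iff_mem_true.2 fun p hp => hp.2.total hadj
  have hdisj : Disjoint {p ∈ admissiblePairs G A c m | p.2 u v}
      {p ∈ admissiblePairs G A c m | p.2 v u} :=
    Set.disjoint_left.2 fun p h h' => (h.1.2.orient u v hadj).1 h.2 h'.2
  have hcover : {p ∈ admissiblePairs (G.deleteEdges {s(u, v)}) A c m |
      ¬ ArcBlocked A c p.1 p.2 u v ∨ ¬ ArcBlocked A c p.1 p.2 v u} =
      admissiblePairs (G.deleteEdges {s(u, v)}) A c m :=
    Set.sep_eq_self_iff_mem_true.2 fun p hp => not_arcBlocked_or_not_arcBlocked hp.2 hp.1.2 huv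
  have hvu := ncard_admissiblePairs_sep_rel (A := A) (c := c) (m := m) hadj.symm
  rw [Sym2.eq_swap] at hvu
  have hfin {H : SimpleGraph V} (P : (V → ℕ) × (V → V → Prop) → Prop) :
      {p ∈ admissiblePairs H A c m | P p}.Finite :=
    finite_admissiblePairs.subset (Set.sep_subset _ _)
  rw [← hsplit, Set.sep_or, Set.ncard_union_eq hdisj (hfin _) (hfin _),
    ncard_admissiblePairs_sep_rel hadj, hvu,
    ← Set.ncard_union_add_ncard_inter _ _ (hfin _) (hfin _), ← Set.sep_or, hcover, Set.sep_and]

theorem properExtensions_eq_sep (hadj : G.Adj u v) :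
    properExtensions G A c m =
      {cc ∈ properExtensions (G.deleteEdges {s(u, v)}) A c m | cc u ≠ cc v} := by
  ext cc
  refine ⟨fun ⟨hcc, hp⟩ => ⟨⟨hcc, fun x y h => hp x y (deleteEdges_le _ h)⟩, hp u v hadj⟩, ?_⟩
  rintro ⟨⟨hcc, hp⟩, huv⟩
  refine ⟨hcc, fun x y hxy => ?_⟩
  by_cases he : x = u ∧ y = v ∨ x = v ∧ y = u
  · rcases he with ⟨rfl, rfl⟩ | ⟨rfl, rfl⟩
    exacts [huv, huv.symm]
  · exact hp x y (deleteEdges_adj_iff.2 ⟨hxy, he⟩)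

theorem ncard_properExtensions_deleteEdges [Finite V] (hadj : G.Adj u v) :
    (properExtensions (G.deleteEdges {s(u, v)}) A c m).ncard = (properExtensions G A c m).ncard +
      {cc ∈ properExtensions (G.deleteEdges {s(u, v)}) A c m | cc u = cc v}.ncard := by
  rw [properExtensions_eq_sep hadj, ← Set.ncard_union_eq
    (Set.disjoint_left.2 fun _ h h' => h.2 h'.2) (finite_properExtensions.subset fun _ h => h.1)
    (finite_properExtensions.subset fun _ h => h.1), ← Set.sep_or]
  simp only [ne_or_eq, Set.sep_true]

end Deletion

section Pullback

variable {V W : Type*} {G : SimpleGraph V} {G' : SimpleGraph W} {A : Set V} {A' : Set W}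
  {c cc : V → ℕ} {c' cc' : W → ℕ} {τ : V → V → Prop} {τ' : W → W → Prop}

theorem IsAdmissibleOrientation.comap (hτ' : IsAdmissibleOrientation G' A' c' cc' τ')
    (f : G →g G') (hA : ∀ a ∈ A, f a ∈ A' ∧ c' (f a) = c a) :
    IsAdmissibleOrientation G A c (cc' ∘ f) (G.Adj ⊓ (τ' on f)) :=
  .of_total (fun _ _ h => h.1)
    (fun _ _ hxy => (hτ'.total (f.map_adj hxy)).imp (⟨hxy, ·⟩) (⟨hxy.symm, ·⟩))
    (fun x hx => hτ'.acyclic (f x) (TransGen.lift f (fun _ _ h => h.2) _ _ hx))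
    (fun x y hxy hlt => ⟨hxy, hτ'.compatible _ _ (f.map_adj hxy) hlt⟩)
    (fun a ha b hb hab h => hτ'.noMonochromaticPath (f a) (hA a ha).1 (f b) (hA b hb).1
      (by rw [(hA a ha).2, (hA b hb).2, hab]) (TransGen.lift f (fun _ _ h => h.2) _ _ h))

theorem not_arcBlocked_comap (hτ' : IsAdmissibleOrientation G' A' c' cc' τ') (f : V → W)
    (hA : ∀ a ∈ A, f a ∈ A' ∧ c' (f a) = c a) {x y : V} (hf : f x = f y) (hxy : x ∉ A ∨ y ∉ A) :
    ¬ ArcBlocked A c (cc' ∘ f) (G.Adj ⊓ (τ' on f)) x y := by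
  have lift := TransGen.lift f (r := G.Adj ⊓ (τ' on f)) (p := τ') (fun _ _ h => h.2)
  have liftRefl := ReflTransGen.lift f (r := G.Adj ⊓ (τ' on f)) (p := τ') (fun _ _ h => h.2)
  rintro (h | h | ⟨a, ha, b, hb, hab, hax, hyb⟩)
  · exact h.ne (congrArg cc' hf.symm)
  · have h : TransGen τ' (f y) (f x) := lift _ _ h
    exact hτ'.acyclic (f x) (hf ▸ h)
  · have hcab : c' (f a) = c' (f b) := by rw [(hA a ha).2, (hA b hb).2, hab]
    refine hτ'.noMonochromaticPath _ (hA a ha).1 _ (hA b hb).1 hcab ?_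
    rcases hxy with hx | hy
    · rcases reflTransGen_iff_eq_or_transGen.1 hax with rfl | hax
      · exact absurd ha hx
      · exact (lift _ _ hax).trans_left (hf ▸ liftRefl _ _ hyb)
    · rcases reflTransGen_iff_eq_or_transGen.1 hyb with rfl | hyb
      · exact absurd hb hy
      · exact TransGen.trans_right (hf ▸ liftRefl _ _ hax) (lift _ _ hyb)

theorem map_comap_eq {f : V → W} (hτ' : ∀ a b, τ' a b → Relation.Map G.Adj f f a b) :
    Relation.Map (G.Adj ⊓ (τ' on f)) f f = τ' := by
  funext a b
  refine propext ⟨?_, fun h => ?_⟩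
  · rintro ⟨x, y, ⟨-, h⟩, rfl, rfl⟩
    exact h
  · obtain ⟨x, y, hxy, rfl, rfl⟩ := hτ' a b h
    exact ⟨x, y, ⟨hxy, h⟩, rfl, rfl⟩

theorem IsAdmissibleOrientation.comap_map_eq (hτ : IsAdmissibleOrientation G A c cc τ)
    {f : V → W} (hacyc : ∀ a, ¬ TransGen (Relation.Map τ f f) a a) :
    G.Adj ⊓ (Relation.Map τ f f on f) = τ := by
  funext x y
  refine propext ⟨fun ⟨hxy, hmap⟩ => (hτ.total hxy).resolve_right fun hyx => ?_,
    fun h => ⟨hτ.adj x y h, x, y, h, rfl, rfl⟩⟩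
  exact hacyc (f x) (.tail (.single hmap) ⟨y, x, hyx, rfl, rfl⟩)

end Pullback

section Contraction

variable {V : Type*} {G : SimpleGraph V} {A : Set V} {c cc : V → ℕ} {τ : V → V → Prop}
  {u v : V} {m : ℕ}

open scoped Classical in
noncomputable def merge (h : u ≠ v) (x : V) : {x // x ≠ v} :=
  if hx : x = v then ⟨u, h⟩ else ⟨x, hx⟩

def contract (G : SimpleGraph V) (h : u ≠ v) : SimpleGraph {x // x ≠ v} :=
  fromRel (Relation.Map G.Adj (merge h) (merge h))

theorem merge_of_ne (h : u ≠ v) {x : V} (hx : x ≠ v) : merge h x = ⟨x, hx⟩ := by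
  simp [merge, hx]

theorem merge_right (h : u ≠ v) : merge h v = ⟨u, h⟩ := by
  simp [merge]

theorem merge_val (h : u ≠ v) (a : {x // x ≠ v}) : merge h a = a :=
  merge_of_ne h a.2

theorem merge_eq_merge_iff (h : u ≠ v) {x y : V} :
    merge h x = merge h y ↔ x = y ∨ x = u ∧ y = v ∨ x = v ∧ y = u := by
  by_cases hx : x = v <;> by_cases hy : y = v <;>
    simp [merge_of_ne, merge_right, hx, hy, h.symm, Ne.symm, eq_comm]

theorem eq_or_of_merge_eq (h : u ≠ v) {x a : V} {ha : a ≠ v} (hx : merge h x = ⟨a, ha⟩) :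
    x = a ∨ x = v ∧ a = u := by
  rw [← merge_of_ne h ha, merge_eq_merge_iff] at hx
  rcases hx with hx | ⟨-, rfl⟩ | hx
  exacts [.inl hx, absurd rfl ha, .inr hx]

theorem contract_adj (h : u ≠ v) {a b : {x // x ≠ v}} :
    (contract G h).Adj a b ↔ a ≠ b ∧ Relation.Map G.Adj (merge h) (merge h) a b := by
  rw [contract, fromRel_adj]
  refine and_congr_right fun _ => or_iff_left_of_imp ?_
  rintro ⟨x, y, hxy, rfl, rfl⟩
  exact ⟨y, x, hxy.symm, rfl, rfl⟩

noncomputable def mergeHom (h : u ≠ v) (huv : ¬ G.Adj u v) : G →g contract G h where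
  toFun := merge h
  map_rel' {x y} hxy := (contract_adj h).2 ⟨fun he => by
    rcases (merge_eq_merge_iff h).1 he with rfl | ⟨rfl, rfl⟩ | ⟨rfl, rfl⟩
    exacts [hxy.ne rfl, huv hxy, huv hxy.symm], x, y, hxy, rfl, rfl⟩

theorem apply_merge_val (h : u ≠ v) (hcc : cc u = cc v) (x : V) : cc (merge h x) = cc x := by
  by_cases hx : x = v
  · rw [hx, merge_right, ← hcc]
  · rw [merge_of_ne h hx]

theorem merge_mapsTo (h : u ≠ v) (hv : v ∉ A) :
    ∀ a ∈ A, merge h a ∈ Subtype.val ⁻¹' A ∧ (c ∘ Subtype.val) (merge h a) = c a := by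
  intro a ha
  rw [merge_of_ne h (ne_of_mem_of_not_mem ha hv)]
  exact ⟨ha, rfl⟩

theorem ncard_properExtensions_contract (h : u ≠ v) (huv : ¬ G.Adj u v) (hv : v ∉ A) :
    (properExtensions (contract G h) (Subtype.val ⁻¹' A) (c ∘ Subtype.val) m).ncard =
      {cc ∈ properExtensions G A c m | cc u = cc v}.ncard := by
  apply Set.ncard_congr fun cc' _ => cc' ∘ merge h
  · rintro cc' ⟨hcc', hprop⟩
    refine ⟨⟨hcc'.comp _ (merge_mapsTo h hv),
      fun x y hxy => hprop _ _ ((mergeHom h huv).map_adj hxy)⟩, ?_⟩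
    simp [merge_right, merge_of_ne h h]
  · intro cc₁ cc₂ _ _ heq
    funext a
    simpa [merge_val] using congrFun heq a
  · rintro cc ⟨⟨hcc, hprop⟩, huv⟩
    refine ⟨cc ∘ Subtype.val, ⟨hcc.comp _ fun a ha => ⟨ha, rfl⟩, ?_⟩,
      funext (apply_merge_val h huv)⟩
    rintro a b hab
    obtain ⟨-, x, y, hxy, rfl, rfl⟩ := (contract_adj h).1 hab
    simpa [apply_merge_val h huv] using hprop x y hxy

theorem exists_of_transGen_map_merge (h : u ≠ v) (hacyc : ∀ x, ¬ TransGen τ x x)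
    (huv : ¬ TransGen τ u v) (hvu : ¬ TransGen τ v u) {a b : {x // x ≠ v}}
    (hab : TransGen (Relation.Map τ (merge h) (merge h)) a b) :
    ∃ x y, merge h x = a ∧ merge h y = b ∧ (TransGen τ x y ∨
      (TransGen τ x u ∧ ReflTransGen τ v y) ∨ (TransGen τ x v ∧ ReflTransGen τ u y)) := by
  obtain ⟨x, y, rfl, rfl, hxy⟩ := transGen_map_lift hab
  exact ⟨x, y, rfl, rfl, transGen_jump_cases (merge_eq_merge_iff h).1 hacyc huv hvu hxy⟩

theorem acyclic_map_merge (h : u ≠ v) (hacyc : ∀ x, ¬ TransGen τ x x)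
    (huv : ¬ TransGen τ u v) (hvu : ¬ TransGen τ v u) (a : {x // x ≠ v}) :
    ¬ TransGen (Relation.Map τ (merge h) (merge h)) a a := by
  intro ha
  obtain ⟨x, y, hx, hy, hxy⟩ := exists_of_transGen_map_merge h hacyc huv hvu ha
  rcases (merge_eq_merge_iff h).1 (hx.trans hy.symm) with rfl | ⟨rfl, rfl⟩ | ⟨rfl, rfl⟩ <;>
    rcases hxy with hxy | ⟨hxu, hvy⟩ | ⟨hxv, huy⟩
  · exact hacyc x hxy
  · exact hvu (.trans_right hvy hxu)
  · exact huv (.trans_right huy hxv)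
  · exact huv hxy
  · exact hacyc _ hxu
  · exact huv hxv
  · exact hvu hxy
  · exact hvu hxu
  · exact hacyc _ hxv

theorem IsAdmissibleOrientation.not_transGen_map_merge (hτ : IsAdmissibleOrientation G A c cc τ)
    (h : u ≠ v) (h₁ : ¬ ArcBlocked A c cc τ u v) (h₂ : ¬ ArcBlocked A c cc τ v u)
    {a b : {x // x ≠ v}} (ha : (a : V) ∈ A) (hb : (b : V) ∈ A) (hab : c a = c b) :
    ¬ TransGen (Relation.Map τ (merge h) (merge h)) a b := by
  have huv := not_transGen_of_not_arcBlocked h₂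
  have hvu := not_transGen_of_not_arcBlocked h₁
  intro hp
  obtain ⟨x, y, hx, hy, hxy⟩ := exists_of_transGen_map_merge h hτ.acyclic huv hvu hp
  obtain ⟨a, ha'⟩ := a
  obtain ⟨b, hb'⟩ := b
  dsimp only at ha hb hab
  have blocked₁ := fun hau hvb => h₁ (.inr (.inr ⟨a, ha, b, hb, hab, hau, hvb⟩))
  have blocked₂ := fun hav hub => h₂ (.inr (.inr ⟨a, ha, b, hb, hab, hav, hub⟩))
  rcases eq_or_of_merge_eq h hx with rfl | ⟨hxv, hau⟩ <;>
    rcases eq_or_of_merge_eq h hy with rfl | ⟨hyv, hbu⟩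
  · rcases hxy with hxy | ⟨hxu, hvy⟩ | ⟨hxv, huy⟩
    · exact hτ.noMonochromaticPath _ ha _ hb hab hxy
    · exact blocked₁ hxu.to_reflTransGen hvy
    · exact blocked₂ hxv.to_reflTransGen huy
  · subst y b
    rcases hxy with hxy | ⟨hxu, -⟩ | ⟨hxv, -⟩
    · exact blocked₂ hxy.to_reflTransGen .refl
    · exact hτ.noMonochromaticPath _ ha _ hb hab hxu
    · exact blocked₂ hxv.to_reflTransGen .refl
  all_goals subst x a
  · rcases hxy with hxy | ⟨hxu, -⟩ | ⟨hxv, -⟩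
    · exact blocked₁ .refl hxy.to_reflTransGen
    · exact hvu hxu
    · exact hτ.acyclic _ hxv
  · subst y
    rcases hxy with hxy | ⟨hxu, -⟩ | ⟨hxv, -⟩
    · exact hτ.acyclic _ hxy
    · exact hvu hxu
    · exact hτ.acyclic _ hxv

theorem IsAdmissibleOrientation.map_merge (hτ : IsAdmissibleOrientation G A c cc τ) (h : u ≠ v)
    (h₁ : ¬ ArcBlocked A c cc τ u v) (h₂ : ¬ ArcBlocked A c cc τ v u) :
    IsAdmissibleOrientation (contract G h) (Subtype.val ⁻¹' A) (c ∘ Subtype.val)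
      (cc ∘ Subtype.val) (Relation.Map τ (merge h) (merge h)) := by
  have hacyc := acyclic_map_merge h hτ.acyclic (not_transGen_of_not_arcBlocked h₂)
    (not_transGen_of_not_arcBlocked h₁)
  refine .of_total ?_ ?_ hacyc ?_ fun a ha b hb hab => hτ.not_transGen_map_merge h h₁ h₂ ha hb hab
  · rintro _ _ ⟨x, y, hxy, rfl, rfl⟩
    refine (contract_adj h).2 ⟨fun he => hacyc (merge h x) (.single ⟨x, y, hxy, rfl, he.symm⟩),
      x, y, hτ.adj x y hxy, rfl, rfl⟩
  · intro a b hab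
    obtain ⟨-, x, y, hxy, rfl, rfl⟩ := (contract_adj h).1 hab
    exact (hτ.total hxy).imp (⟨x, y, ·, rfl, rfl⟩) (⟨y, x, ·, rfl, rfl⟩)
  · intro a b hab hlt
    obtain ⟨-, x, y, hxy, rfl, rfl⟩ := (contract_adj h).1 hab
    simp only [comp_apply, apply_merge_val h (eq_of_not_arcBlocked h₁ h₂)] at hlt
    exact ⟨x, y, hτ.compatible x y hxy hlt, rfl, rfl⟩

theorem ncard_admissiblePairs_contract (h : u ≠ v) (huv : ¬ G.Adj u v) (hv : v ∉ A) :
    (admissiblePairs (contract G h) (Subtype.val ⁻¹' A) (c ∘ Subtype.val) m).ncard =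
      {p ∈ admissiblePairs G A c m |
        ¬ ArcBlocked A c p.1 p.2 u v ∧ ¬ ArcBlocked A c p.1 p.2 v u}.ncard := by
  have hmerge : merge h u = merge h v := by rw [merge_right, merge_of_ne h h]
  apply Set.ncard_congr fun p _ => (p.1 ∘ merge h, G.Adj ⊓ (p.2 on merge h))
  · rintro ⟨cc', τ'⟩ ⟨hcc', hτ'⟩
    exact ⟨⟨hcc'.comp _ (merge_mapsTo h hv), hτ'.comap (mergeHom h huv) (merge_mapsTo h hv)⟩,
      not_arcBlocked_comap hτ' _ (merge_mapsTo h hv) hmerge (.inr hv),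
      not_arcBlocked_comap hτ' _ (merge_mapsTo h hv) hmerge.symm (.inl hv)⟩
  · rintro ⟨cc₁, τ₁⟩ ⟨cc₂, τ₂⟩ ⟨-, hτ₁⟩ ⟨-, hτ₂⟩ heq
    obtain ⟨hcc, hτ⟩ := Prod.mk.inj heq
    refine Prod.ext (funext fun a => by simpa [merge_val] using congrFun hcc a) ?_
    dsimp only at hτ₁ hτ₂ hτ ⊢
    rw [← map_comap_eq fun a b hab => ((contract_adj h).1 (hτ₁.adj a b hab)).2,
      ← map_comap_eq fun a b hab => ((contract_adj h).1 (hτ₂.adj a b hab)).2, hτ]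
  · rintro ⟨cc, τ⟩ ⟨⟨hcc, hτ⟩, h₁, h₂⟩
    refine ⟨(cc ∘ Subtype.val, Relation.Map τ (merge h) (merge h)),
      ⟨hcc.comp _ fun a ha => ⟨ha, rfl⟩, hτ.map_merge h h₁ h₂⟩, ?_⟩
    refine Prod.ext (funext (apply_merge_val h (eq_of_not_arcBlocked h₁ h₂))) ?_
    exact hτ.comap_map_eq (acyclic_map_merge h hτ.acyclic (not_transGen_of_not_arcBlocked h₂)
      (not_transGen_of_not_arcBlocked h₁))

end Contraction

section Recursion

variable {V : Type*} {G : SimpleGraph V} {A : Set V} {c : V → ℕ} {u v : V} {k m : ℕ}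

theorem ncard_setOf_isExtension [Finite V] (hc : ∀ a ∈ A, 1 ≤ c a ∧ c a ≤ m) :
    {cc | IsExtension A c m cc}.ncard = m ^ Aᶜ.ncard := by
  classical
  have := Fintype.ofFinite V
  have hpi : {cc | IsExtension A c m cc} =
      Fintype.piFinset fun x => if x ∈ A then {c x} else Finset.Icc 1 m := by
    ext cc
    simp only [Set.mem_ofPred_eq, Finset.mem_coe, Fintype.mem_piFinset, IsExtension]
    refine ⟨fun ⟨hbd, hA⟩ x => ?_, fun h => ⟨fun x => ?_, fun a ha => by simpa [ha] using h a⟩⟩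
    · by_cases hx : x ∈ A <;> simp [hx, hA, hbd]
    · by_cases hx : x ∈ A
      · have hcx : cc x = c x := by simpa [hx] using h x
        exact hcx ▸ hc x hx
      · simpa [hx] using h x
  rw [hpi, Set.ncard_coe_finset, Fintype.card_piFinset, Set.ncard_eq_toFinset_card']
  simp only [apply_ite Finset.card, Finset.card_singleton, Nat.card_Icc, add_tsub_cancel_right,
    Finset.prod_ite, Finset.prod_const_one, one_mul, Finset.prod_const]
  congr 2
  ext x
  simp

theorem hasReciprocityPolynomial_bot [Finite V] (hc : ∀ a ∈ A, 1 ≤ c a ∧ c a ≤ k) :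
    HasReciprocityPolynomial k (⊥ : SimpleGraph V) A c := by
  have hcol (m : ℕ) : properExtensions ⊥ A c m = {cc | IsExtension A c m cc} := by
    ext cc
    simp [properExtensions]
  have hpair (m : ℕ) : admissiblePairs ⊥ A c m = (·, ⊥) '' {cc | IsExtension A c m cc} := by
    ext ⟨cc, o⟩
    constructor
    · rintro ⟨hcc, ho⟩
      exact ⟨cc, hcc, Prod.ext rfl (funext₂ fun x y => propext ⟨nofun, fun h => ho.adj x y h⟩)⟩
    · rintro ⟨cc, hcc, ⟨⟩⟩
      refine ⟨hcc, .of_total nofun nofun (fun x hx => ?_) nofun fun _ _ _ _ _ h => ?_⟩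
      · obtain ⟨_, h, _⟩ := TransGen.head'_iff.1 hx
        exact h
      · obtain ⟨_, h, _⟩ := TransGen.head'_iff.1 h
        exact h
  refine ⟨X ^ Aᶜ.ncard, fun m hm => ?_⟩
  have hcm : ∀ a ∈ A, 1 ≤ c a ∧ c a ≤ m := fun a ha => ⟨(hc a ha).1, (hc a ha).2.trans hm⟩
  rw [hcol, hpair, Set.ncard_image_of_injective _ (Prod.mk_left_injective ⊥),
    ncard_setOf_isExtension hcm, eval_pow, eval_X, eval_pow, eval_X, ← mul_pow]
  push_cast
  simp

theorem ncard_edgeSet_deleteEdges_lt [Finite V] (hadj : G.Adj u v) :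
    (G.deleteEdges {s(u, v)}).edgeSet.ncard < G.edgeSet.ncard := by
  rw [edgeSet_deleteEdges]
  exact Set.ncard_sdiff_singleton_lt_of_mem hadj

theorem ncard_edgeSet_contract_le [Finite V] (h : u ≠ v) :
    (contract G h).edgeSet.ncard ≤ G.edgeSet.ncard := by
  refine (Set.ncard_le_ncard (t := Sym2.map (merge h) '' G.edgeSet) ?_).trans
    (Set.ncard_image_le G.edgeSet.toFinite)
  intro e he
  induction e using Sym2.ind with
  | h a b =>
    obtain ⟨-, x, y, hxy, rfl, rfl⟩ := (contract_adj h).1 he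
    exact ⟨s(x, y), hxy, rfl⟩

theorem ncard_compl_preimage_val_add_one [Finite V] (hv : v ∉ A) :
    (Subtype.val ⁻¹' A : Set {x // x ≠ v})ᶜ.ncard + 1 = Aᶜ.ncard := by
  have : (Subtype.val ⁻¹' A : Set {x // x ≠ v})ᶜ = Subtype.val ⁻¹' (Aᶜ \ {v}) := by
    ext ⟨x, hx⟩
    simp [hx]
  rw [this, Set.ncard_preimage_of_injective_subset_range Subtype.val_injective
    fun x hx => ⟨⟨x, hx.2⟩, rfl⟩, Set.ncard_sdiff_singleton_add_one hv]

theorem hasReciprocityPolynomial_of_adj_of_eq (hadj : G.Adj u v) (hu : u ∈ A) (hv : v ∈ A)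
    (huv : c u = c v) : HasReciprocityPolynomial k G A c := by
  have hcol (m : ℕ) : properExtensions G A c m = ∅ :=
    Set.eq_empty_of_forall_notMem fun cc ⟨hcc, hprop⟩ =>
      hprop u v hadj (by rw [hcc.2 u hu, hcc.2 v hv, huv])
  have hpair (m : ℕ) : admissiblePairs G A c m = ∅ :=
    Set.eq_empty_of_forall_notMem fun p ⟨_, ho⟩ => (ho.total hadj).elim
      (fun h => ho.noMonochromaticPath u hu v hv huv (.single h))
      (fun h => ho.noMonochromaticPath v hv u hu huv.symm (.single h))
  exact ⟨0, fun m _ => by simp [hcol, hpair]⟩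

theorem HasReciprocityPolynomial.of_deleteEdges_of_ne [Finite V] (hadj : G.Adj u v) (hu : u ∈ A)
    (hv : v ∈ A) (huv : c u ≠ c v)
    (hdel : HasReciprocityPolynomial k (G.deleteEdges {s(u, v)}) A c) :
    HasReciprocityPolynomial k G A c := by
  obtain ⟨P, hP⟩ := hdel
  refine ⟨P, fun m hm => ⟨?_, ?_⟩⟩
  · have : {cc ∈ properExtensions (G.deleteEdges {s(u, v)}) A c m | cc u = cc v} = ∅ :=
      Set.eq_empty_of_forall_notMem fun cc ⟨⟨hcc, _⟩, he⟩ =>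
        huv (by rw [← hcc.2 u hu, ← hcc.2 v hv, he])
    rw [(hP m hm).1, ncard_properExtensions_deleteEdges hadj, this, Set.ncard_empty, add_zero]
  · have : {p ∈ admissiblePairs (G.deleteEdges {s(u, v)}) A c m |
        ¬ ArcBlocked A c p.1 p.2 u v ∧ ¬ ArcBlocked A c p.1 p.2 v u} = ∅ :=
      Set.eq_empty_of_forall_notMem fun p ⟨⟨hcc, _⟩, h₁, h₂⟩ =>
        huv (by rw [← hcc.2 u hu, ← hcc.2 v hv, eq_of_not_arcBlocked h₁ h₂])
    rw [(hP m hm).2, ncard_admissiblePairs_eq_deleteEdges_add hadj fun h => huv h.2.2, this,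
      Set.ncard_empty, add_zero]

theorem HasReciprocityPolynomial.of_deleteEdges_of_contract [Finite V] (hadj : G.Adj u v)
    (hv : v ∉ A) (hdel : HasReciprocityPolynomial k (G.deleteEdges {s(u, v)}) A c)
    (hcon : HasReciprocityPolynomial k (contract (G.deleteEdges {s(u, v)}) hadj.ne)
      (Subtype.val ⁻¹' A) (c ∘ Subtype.val)) :
    HasReciprocityPolynomial k G A c := by
  obtain ⟨P, hP⟩ := hdel
  obtain ⟨Q, hQ⟩ := hcon
  have huv : ¬ (G.deleteEdges {s(u, v)}).Adj u v :=
    fun h => (deleteEdges_adj_iff.1 h).2 (.inl ⟨rfl, rfl⟩)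
  refine ⟨P - Q, fun m hm => ⟨?_, ?_⟩⟩
  · have := ncard_properExtensions_deleteEdges (A := A) (c := c) (m := m) hadj
    rw [← ncard_properExtensions_contract hadj.ne huv hv] at this
    rw [eval_sub, (hP m hm).1, (hQ m hm).1, this]
    push_cast
    ring
  · rw [ncard_admissiblePairs_eq_deleteEdges_add hadj fun h => hv h.2.1,
      ← ncard_admissiblePairs_contract hadj.ne huv hv, Nat.cast_add, ← (hP m hm).2,
      ← (hQ m hm).2, ← ncard_compl_preimage_val_add_one hv, eval_sub, pow_succ]
    ring

theorem hasReciprocityPolynomial [Finite V] (G : SimpleGraph V) (hc : ∀ a ∈ A, 1 ≤ c a ∧ c a ≤ k) :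
    HasReciprocityPolynomial k G A c := by
  induction hn : G.edgeSet.ncard using Nat.strong_induction_on generalizing V with
  | _ n ih =>
  obtain hE | ⟨e, he⟩ := G.edgeSet.eq_empty_or_nonempty
  · rw [edgeSet_eq_empty.1 hE]
    exact hasReciprocityPolynomial_bot hc
  induction e using Sym2.ind with
  | h u v =>
  have hadj : G.Adj u v := he
  have contract_step {x y : V} (hxy : G.Adj x y) (hy : y ∉ A) : HasReciprocityPolynomial k G A c :=
    have hlt := hn ▸ ncard_edgeSet_deleteEdges_lt hxy
    .of_deleteEdges_of_contract hxy hy (ih _ hlt _ hc rfl)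
      (ih _ ((ncard_edgeSet_contract_le hxy.ne).trans_lt hlt) _ (fun a ha => hc a ha) rfl)
  by_cases hv : v ∈ A
  · by_cases hu : u ∈ A
    · by_cases huv : c u = c v
      · exact hasReciprocityPolynomial_of_adj_of_eq hadj hu hv huv
      · exact .of_deleteEdges_of_ne hadj hu hv huv
          (ih _ (hn ▸ ncard_edgeSet_deleteEdges_lt hadj) _ hc rfl)
    · exact contract_step hadj.symm hu
  · exact contract_step hadj hv

end Recursion

section Statement

variable {V : Type*} {G : SimpleGraph V} {A : Set V} {c cc : V → ℕ} {o : V → V → Prop}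

theorem eq_of_eval_natCast_eq {P Q : ℝ[X]} (k : ℕ)
    (h : ∀ m : ℕ, k ≤ m → P.eval (m : ℝ) = Q.eval (m : ℝ)) : P = Q :=
  eq_of_infinite_eval_eq P Q <| Set.Infinite.mono (by rintro _ ⟨m, hm, rfl⟩; exact h m hm)
    ((Set.Ici_infinite k).image (f := ((↑) : ℕ → ℝ)) Nat.cast_injective.injOn)

theorem isAdmissibleOrientation_iff : IsAdmissibleOrientation G A c cc o ↔
    (∀ x y, o x y → G.Adj x y) ∧ (∀ x y, G.Adj x y → (o x y ↔ ¬ o y x)) ∧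
      (∀ x, ¬ TransGen o x x) ∧ (∀ x y, G.Adj x y → cc x < cc y → o x y) ∧
      ∀ a ∈ A, ∀ b ∈ A, c a = c b → ¬ TransGen o a b :=
  ⟨fun ⟨h₁, h₂, h₃, h₄, h₅⟩ => ⟨h₁, h₂, h₃, h₄, h₅⟩,
    fun ⟨h₁, h₂, h₃, h₄, h₅⟩ => ⟨h₁, h₂, h₃, h₄, h₅⟩⟩

theorem noMonochromaticPath_iff {k : ℕ} (hc : ∀ a ∈ A, 1 ≤ c a ∧ c a ≤ k) :
    (∀ a ∈ A, ∀ b ∈ A, c a = c b → ¬ TransGen o a b) ↔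
      ∀ i, 1 ≤ i → i ≤ k → ¬ ∃ a ∈ A, ∃ b ∈ A, c a = i ∧ c b = i ∧ TransGen o a b := by
  refine ⟨?_, fun h a ha b hb hab hp =>
    h (c a) (hc a ha).1 (hc a ha).2 ⟨a, ha, b, hb, rfl, hab.symm, hp⟩⟩
  rintro h i - - ⟨a, ha, b, hb, rfl, hbi, hp⟩
  exact h a ha b hb hbi.symm hp

end Statement

end PartialColoringReciprocity

open PartialColoringReciprocity

theorem stmt17_general (V : Type*) [Fintype V] (G : SimpleGraph V) (A : Set V)
    (k : ℕ) (c : V → ℕ) (hc : ∀ a ∈ A, 1 ≤ c a ∧ c a ≤ k)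
    (χ : Polynomial ℝ)
    (hχ : ∀ m : ℕ, k ≤ m →
      χ.eval (m : ℝ) =
        Nat.card {cc : V → ℕ | (∀ v, 1 ≤ cc v ∧ cc v ≤ m) ∧ (∀ a ∈ A, cc a = c a) ∧
          ∀ u v : V, G.Adj u v → cc u ≠ cc v})
    (m : ℕ) (hm : k ≤ m) :
    (-1 : ℝ) ^ (Aᶜ.ncard) * χ.eval (-(m : ℝ)) =
      Nat.card {p : (V → ℕ) × (V → V → Prop) |
        -- `p.1` is an extension of `c` of size `m`
        (∀ v, 1 ≤ p.1 v ∧ p.1 v ≤ m) ∧ (∀ a ∈ A, p.1 a = c a) ∧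
        -- `p.2` is an orientation of `G`
        (∀ u v : V, p.2 u v → G.Adj u v) ∧
        (∀ u v : V, G.Adj u v → (p.2 u v ↔ ¬ p.2 v u)) ∧
        -- which is acyclic
        (∀ v : V, ¬ Relation.TransGen p.2 v v) ∧
        -- weakly compatible with the coloring `p.1`
        (∀ u v : V, G.Adj u v → p.1 u < p.1 v → p.2 u v) ∧
        -- no directed path with both endpoints in some `A_i`
        (∀ i : ℕ, 1 ≤ i → i ≤ k →
          ¬ ∃ a ∈ A, ∃ b ∈ A, c a = i ∧ c b = i ∧ Relation.TransGen p.2 a b)} := by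
  obtain ⟨P, hP⟩ := hasReciprocityPolynomial G hc
  obtain rfl : χ = P := eq_of_eval_natCast_eq k fun m hm => by
    rw [hχ m hm, (hP m hm).1, Nat.card_coe_set_eq]
    simp only [properExtensions, IsExtension, and_assoc]
  rw [(hP m hm).2, ← Nat.card_coe_set_eq]
  simp only [admissiblePairs, IsExtension, isAdmissibleOrientation_iff, noMonochromaticPath_iff hc,
    and_assoc]

/-- reciprocity for partial coloring extensions: for `m ≥ k`,
`(-1)^{|V∖A|} χ_{G,c}(-m)` counts pairs `(ĉ, σ)` of an (arbitrary) extension of `c`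
of size `m` and a weakly compatible acyclic orientation `σ` of `G` admitting no
directed path with both endpoints in a color class `A_i = c⁻¹(i)` of `c`. -/
theorem stmt17 (V : Type*) [Fintype V] (G : SimpleGraph V) (A : Set V)
    (k : ℕ) (hk : 1 ≤ k) (c : V → ℕ) (hc : ∀ a ∈ A, 1 ≤ c a ∧ c a ≤ k)
    (χ : Polynomial ℝ)
    (hχ : ∀ m : ℕ, k ≤ m →
      χ.eval (m : ℝ) =
        Nat.card {cc : V → ℕ | (∀ v, 1 ≤ cc v ∧ cc v ≤ m) ∧ (∀ a ∈ A, cc a = c a) ∧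
          ∀ u v : V, G.Adj u v → cc u ≠ cc v})
    (m : ℕ) (hm : k ≤ m) :
    (-1 : ℝ) ^ (Aᶜ.ncard) * χ.eval (-(m : ℝ)) =
      Nat.card {p : (V → ℕ) × (V → V → Prop) |
        -- `p.1` is an extension of `c` of size `m`
        (∀ v, 1 ≤ p.1 v ∧ p.1 v ≤ m) ∧ (∀ a ∈ A, p.1 a = c a) ∧
        -- `p.2` is an orientation of `G`
        (∀ u v : V, p.2 u v → G.Adj u v) ∧
        (∀ u v : V, G.Adj u v → (p.2 u v ↔ ¬ p.2 v u)) ∧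
        -- which is acyclic
        (∀ v : V, ¬ Relation.TransGen p.2 v v) ∧
        -- weakly compatible with the coloring `p.1`
        (∀ u v : V, G.Adj u v → p.1 u < p.1 v → p.2 u v) ∧
        -- no directed path with both endpoints in some `A_i`
        (∀ i : ℕ, 1 ≤ i → i ≤ k →
          ¬ ∃ a ∈ A, ∃ b ∈ A, c a = i ∧ c b = i ∧ Relation.TransGen p.2 a b)} :=
  stmt17_general V G A k c hc χ hχ m hm
end
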